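/- arXiv:1909.10608 — 11 statements merged into one kernel-verified Lean document; each statement's English description precedes it below -/
import Mathlib

section
/- Let $a > 0$, $b \in (0,1)$, and $R \in [a, \infty)$ with $R < \infty$. Let $f$ be a nonnegative Radon measure on $(0,\infty)$, $\varphi : (0,\infty) \to [0,\infty)$ continuous, and $g \in L^1([a,R])$ nonnegative such that $\frac{1}{z}\int_{[bz,z]} \varphi(x)\, f(dx) \le g(z)$ for all $z \in [a,R]$. Then $\int_{[a,R]} \varphi(x)\, f(dx) \le \frac{1}{|\ln b|}\int_a^R g(z)\, dz + R\, g(R)$. -/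
/-!
Since `∫_x^{x/b} dz/z = log b⁻¹`, Tonelli turns `log b⁻¹ · ∫_{[a,bR]} φ df` into
`∫_a^R z⁻¹ ∫_{[bz,z] ∩ [a,bR]} φ df dz`, which the averaged bound controls by `∫_a^R g`.
The remaining piece `[bR, R]` is the window `[bz, z]` at `z = R`, of mass at most `R g(R)`.
-/

open MeasureTheory Set
open scoped ENNReal

theorem lintegral_Icc_ofReal_inv {x y : ℝ} (hx : 0 < x) (hxy : x ≤ y) :
    ∫⁻ z in Icc x y, ENNReal.ofReal z⁻¹ = ENNReal.ofReal (Real.log (y / x)) := by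
  have hpos : ∀ z ∈ Icc x y, 0 < z := fun z hz => hx.trans_le hz.1
  rw [← ofReal_integral_eq_lintegral_ofReal, integral_Icc_eq_integral_Ioc,
    ← intervalIntegral.integral_of_le hxy, integral_inv_of_pos hx (hx.trans_le hxy)]
  · exact (continuousOn_inv₀.mono fun z hz => (hpos z hz).ne').integrableOn_compact isCompact_Icc
  · exact (ae_restrict_mem measurableSet_Icc).mono fun z hz => (inv_pos.2 (hpos z hz)).le

theorem ofReal_log_inv_mul_setLIntegral_le (μ : Measure ℝ) [SFinite μ] {ψ : ℝ → ℝ≥0∞}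
    (hψ : AEMeasurable ψ μ) {a b R : ℝ} (ha : 0 < a) (hb0 : 0 < b) (hb1 : b ≤ 1) :
    ENNReal.ofReal (Real.log b⁻¹) * ∫⁻ x in Icc a (b * R), ψ x ∂μ ≤
      ∫⁻ z in Icc a R, ENNReal.ofReal z⁻¹ * ∫⁻ x in Icc (b * z) z, ψ x ∂μ := by
  set K : ℝ → ℝ → ℝ≥0∞ := fun z x =>
    ENNReal.ofReal z⁻¹ * (Icc (b * z) z).indicator ψ x
  have hK : AEMeasurable (Function.uncurry K) ((volume.restrict (Icc a R)).prod μ) := by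
    have hS : MeasurableSet {p : ℝ × ℝ | b * p.1 ≤ p.2 ∧ p.2 ≤ p.1} :=
      (measurableSet_le (measurable_fst.const_mul b) measurable_snd).inter
        (measurableSet_le measurable_snd measurable_fst)
    exact measurable_fst.inv.ennreal_ofReal.aemeasurable.mul (hψ.comp_snd.indicator hS)
  have hK_inner : ∀ x ∈ Icc a (b * R),
      ENNReal.ofReal (Real.log b⁻¹) * ψ x ≤ ∫⁻ z in Icc a R, K z x := by
    intro x hx
    have hx0 : 0 < x := ha.trans_le hx.1
    have hxb : x ≤ x / b := le_div_self hx0.le hb0 hb1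
    calc ENNReal.ofReal (Real.log b⁻¹) * ψ x
        = ∫⁻ z in Icc x (x / b), ENNReal.ofReal z⁻¹ * ψ x := by
          rw [lintegral_mul_const _ measurable_inv.ennreal_ofReal,
            lintegral_Icc_ofReal_inv hx0 hxb, div_div_cancel_left' hx0.ne']
      _ = ∫⁻ z in Icc x (x / b), K z x := by
          refine setLIntegral_congr_fun measurableSet_Icc fun z hz => ?_
          have hxz : x ∈ Icc (b * z) z := ⟨(le_div_iff₀' hb0).1 hz.2, hz.1⟩
          simp only [K, indicator_of_mem hxz]
      _ ≤ ∫⁻ z in Icc a R, K z x :=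
          lintegral_mono_set (Icc_subset_Icc hx.1 ((div_le_iff₀' hb0).2 hx.2))
  calc ENNReal.ofReal (Real.log b⁻¹) * ∫⁻ x in Icc a (b * R), ψ x ∂μ
      = ∫⁻ x in Icc a (b * R), ENNReal.ofReal (Real.log b⁻¹) * ψ x ∂μ :=
        (lintegral_const_mul' _ _ ENNReal.ofReal_ne_top).symm
    _ ≤ ∫⁻ x in Icc a (b * R), (∫⁻ z in Icc a R, K z x) ∂μ :=
        setLIntegral_mono' measurableSet_Icc hK_inner
    _ ≤ ∫⁻ x, (∫⁻ z in Icc a R, K z x) ∂μ := setLIntegral_le_lintegral _ _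
    _ = ∫⁻ z in Icc a R, ∫⁻ x, K z x ∂μ := (lintegral_lintegral_swap hK).symm
    _ = ∫⁻ z in Icc a R, ENNReal.ofReal z⁻¹ * ∫⁻ x in Icc (b * z) z, ψ x ∂μ := by
        refine lintegral_congr fun z => ?_
        rw [lintegral_const_mul' _ _ ENNReal.ofReal_ne_top, lintegral_indicator measurableSet_Icc]

theorem setLIntegral_Icc_le_integral_div_log (μ : Measure ℝ) [SFinite μ]
    {ψ : ℝ → ℝ≥0∞} (hψ : AEMeasurable ψ μ) {a b R : ℝ} {g : ℝ → ℝ} (ha : 0 < a)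
    (hb0 : 0 < b) (hb1 : b < 1) (hg : IntegrableOn g (Icc a R)) (hg0 : ∀ z ∈ Icc a R, 0 ≤ g z)
    (havg : ∀ z ∈ Icc a R, ∫⁻ x in Icc (b * z) z, ψ x ∂μ ≤ ENNReal.ofReal (z * g z)) :
    ∫⁻ x in Icc a (b * R), ψ x ∂μ ≤
      ENNReal.ofReal ((∫ z in Icc a R, g z) / Real.log b⁻¹) := by
  have hlog : 0 < Real.log b⁻¹ := Real.log_pos ((one_lt_inv₀ hb0).2 hb1)
  rw [ENNReal.ofReal_div_of_pos hlog, ENNReal.le_div_iff_mul_le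
      (.inl (ENNReal.ofReal_pos.2 hlog).ne') (.inl ENNReal.ofReal_ne_top), mul_comm,
    ofReal_integral_eq_lintegral_ofReal hg (ae_restrict_of_forall_mem measurableSet_Icc hg0)]
  refine (ofReal_log_inv_mul_setLIntegral_le μ hψ ha hb0 hb1.le).trans <|
    setLIntegral_mono' measurableSet_Icc fun z hz => ?_
  have hz0 : 0 < z := ha.trans_le hz.1
  calc ENNReal.ofReal z⁻¹ * ∫⁻ x in Icc (b * z) z, ψ x ∂μ
      ≤ ENNReal.ofReal z⁻¹ * ENNReal.ofReal (z * g z) := by gcongr; exact havg z hz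
    _ = ENNReal.ofReal (g z) := by
        rw [← ENNReal.ofReal_mul (inv_nonneg.2 hz0.le), inv_mul_cancel_left₀ hz0.ne']

theorem stmt_0_general
    (a b R : ℝ) (ha : 0 < a) (hb0 : 0 < b) (hb1 : b < 1) (haR : a ≤ R)
    (f : Measure ℝ) [IsLocallyFiniteMeasure f]
    (φ g : ℝ → ℝ)
    (hφc : ContinuousOn φ (Set.Ioi 0))
    (hg : IntegrableOn g (Set.Icc a R)) (hg0 : ∀ z, 0 ≤ g z)
    (havg : ∀ z ∈ Set.Icc a R,
      (∫⁻ x in Set.Icc (b * z) z, ENNReal.ofReal (φ x) ∂f) ≤ ENNReal.ofReal (z * g z)) :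
    (∫⁻ x in Set.Icc a R, ENNReal.ofReal (φ x) ∂f) ≤
      ENNReal.ofReal ((∫ z in a..R, g z) / |Real.log b| + R * g R) := by
  have hφm : AEMeasurable (fun x => ENNReal.ofReal (φ x)) (f.restrict (Ioi 0)) :=
    (hφc.aemeasurable measurableSet_Ioi).ennreal_ofReal
  have hlower : ∫⁻ x in Icc a (b * R), ENNReal.ofReal (φ x) ∂f ≤
      ENNReal.ofReal ((∫ z in a..R, g z) / |Real.log b|) := by
    rw [abs_of_neg (Real.log_neg hb0 hb1), ← Real.log_inv, intervalIntegral.integral_of_le haR,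
      ← integral_Icc_eq_integral_Ioc, ← Measure.restrict_restrict_of_subset
        fun x hx => ha.trans_le hx.1]
    refine setLIntegral_Icc_le_integral_div_log _ hφm ha hb0 hb1 hg (fun z _ => hg0 z)
      fun z hz => le_trans ?_ (havg z hz)
    exact lintegral_mono' (Measure.restrict_mono subset_rfl Measure.restrict_le_self) le_rfl
  calc ∫⁻ x in Icc a R, ENNReal.ofReal (φ x) ∂f
      ≤ ∫⁻ x in Icc a (b * R) ∪ Icc (b * R) R, ENNReal.ofReal (φ x) ∂f :=
        lintegral_mono_set Icc_subset_Icc_union_Icc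
    _ ≤ (∫⁻ x in Icc a (b * R), ENNReal.ofReal (φ x) ∂f) +
          ∫⁻ x in Icc (b * R) R, ENNReal.ofReal (φ x) ∂f := lintegral_union_le _ _ _
    _ ≤ ENNReal.ofReal ((∫ z in a..R, g z) / |Real.log b|) + ENNReal.ofReal (R * g R) :=
        add_le_add hlower (havg R ⟨haR, le_rfl⟩)
    _ = ENNReal.ofReal ((∫ z in a..R, g z) / |Real.log b| + R * g R) := by
        have hI : 0 ≤ ∫ z in a..R, g z := intervalIntegral.integral_nonneg haR fun z _ => hg0 z
        rw [ENNReal.ofReal_add (div_nonneg hI (abs_nonneg _))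
          (mul_nonneg (ha.trans_le haR).le (hg0 R))]

theorem stmt_0
    (a b R : ℝ) (ha : 0 < a) (hb0 : 0 < b) (hb1 : b < 1) (haR : a ≤ R)
    (f : Measure ℝ) [IsLocallyFiniteMeasure f]
    (φ g : ℝ → ℝ)
    (hφc : ContinuousOn φ (Set.Ioi 0)) (hφ0 : ∀ x, 0 ≤ φ x)
    (hg : IntegrableOn g (Set.Icc a R)) (hg0 : ∀ z, 0 ≤ g z)
    (havg : ∀ z ∈ Set.Icc a R,
      (∫⁻ x in Set.Icc (b * z) z, ENNReal.ofReal (φ x) ∂f) ≤ ENNReal.ofReal (z * g z)) :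
    (∫⁻ x in Set.Icc a R, ENNReal.ofReal (φ x) ∂f) ≤
      ENNReal.ofReal ((∫ z in a..R, g z) / |Real.log b| + R * g R) :=
  stmt_0_general a b R ha hb0 hb1 haR f φ g hφc hg hg0 havg
end

section
/- Let $a > 0$, $b \in (0,1)$, and suppose $f$ is a nonnegative Radon measure on $(0,\infty)$, $\varphi : (0,\infty) \to [0,\infty)$ is continuous, and $g \in L^1([a,\infty))$ is nonnegative with $\frac{1}{z}\int_{[bz,z]} \varphi(x)\, f(dx) \le g(z)$ for all $z \ge a$. Then $\int_{[a,\infty)} \varphi(x)\, f(dx) \le \frac{1}{|\ln b|}\int_a^\infty g(z)\, dz$. -/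
open MeasureTheory Set
open scoped ENNReal

theorem stmt_1
    (a b : ℝ) (ha : 0 < a) (hb0 : 0 < b) (hb1 : b < 1)
    (f : Measure ℝ) [IsLocallyFiniteMeasure f]
    (φ g : ℝ → ℝ)
    (hφc : ContinuousOn φ (Set.Ioi 0)) (hφ0 : ∀ x, 0 ≤ φ x)
    (hg : IntegrableOn g (Set.Ici a)) (hg0 : ∀ z, 0 ≤ g z)
    (havg : ∀ z, a ≤ z →
      (∫⁻ x in Set.Icc (b * z) z, ENNReal.ofReal (φ x) ∂f) ≤ ENNReal.ofReal (z * g z)) :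
    (∫⁻ x in Set.Ici a, ENNReal.ofReal (φ x) ∂f) ≤
      ENNReal.ofReal ((∫ z in Set.Ici a, g z) / |Real.log b|) := by
  classical
  have hlb : Real.log b < 0 := Real.log_neg hb0 hb1
  have hlbpos : 0 < -Real.log b := by linarith
  have habs : |Real.log b| = -Real.log b := abs_of_neg hlb
  set L : ℝ≥0∞ := ENNReal.ofReal (-Real.log b) with hLdef
  have hL0 : L ≠ 0 := by
    simp only [hLdef, ne_eq, ENNReal.ofReal_eq_zero, not_le]
    exact hlbpos
  have hLtop : L ≠ ⊤ := ENNReal.ofReal_ne_top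
  have hIa : Set.Ici a ⊆ Set.Ioi 0 := fun x hx => lt_of_lt_of_le ha hx
  -- measurable version of φ
  set ψ : ℝ → ℝ := (Set.Ici a).piecewise φ 0 with hψdef
  have hψm : Measurable ψ :=
    ContinuousOn.measurable_piecewise (hφc.mono hIa) continuousOn_const measurableSet_Ici
  set G : ℝ → ℝ≥0∞ := fun x => ENNReal.ofReal (ψ x) with hGdef
  have hGm : Measurable G := ENNReal.measurable_ofReal.comp hψm
  have hGeq : ∀ x ∈ Set.Ici a, G x = ENNReal.ofReal (φ x) := by
    intro x hx
    simp [hGdef, hψdef, Set.piecewise_eq_indicator, Set.indicator_of_mem hx]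
  have hGle : ∀ x, G x ≤ ENNReal.ofReal (φ x) := by
    intro x
    by_cases hx : x ∈ Set.Ici a
    · rw [hGeq x hx]
    · show ENNReal.ofReal (ψ x) ≤ _
      rw [hψdef, Set.piecewise_eq_of_notMem _ _ _ hx]
      simp
  -- the kernel
  set T : Set (ℝ × ℝ) := {p : ℝ × ℝ | b * p.2 ≤ p.1 ∧ p.1 ≤ p.2} with hTdef
  have hTm : MeasurableSet T := by
    have h1 : MeasurableSet {p : ℝ × ℝ | b * p.2 ≤ p.1} :=
      measurableSet_le (measurable_snd.const_mul b) measurable_fst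
    have h2 : MeasurableSet {p : ℝ × ℝ | p.1 ≤ p.2} :=
      measurableSet_le measurable_fst measurable_snd
    exact h1.inter h2
  set H : ℝ × ℝ → ℝ≥0∞ :=
    fun p => T.indicator (fun p => G p.1 * ENNReal.ofReal p.2⁻¹) p with hHdef
  have hHm : Measurable H :=
    ((hGm.comp measurable_fst).mul
      (ENNReal.measurable_ofReal.comp measurable_snd.inv)).indicator hTm
  set ν : Measure ℝ := volume.restrict (Set.Ici a) with hνdef
  -- Fubini
  have swap : (∫⁻ x, ∫⁻ z, H (x, z) ∂ν ∂f) = ∫⁻ z, ∫⁻ x, H (x, z) ∂f ∂ν := by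
    exact lintegral_lintegral_swap (f := fun x z => H (x, z)) hHm.aemeasurable
  -- left side
  have hleft : ∀ x, (∫⁻ z, H (x, z) ∂ν) = G x * L := by
    intro x
    by_cases hx : x ∈ Set.Ici a
    · have hx0 : 0 < x := hIa hx
      have hfun : (fun z => H (x, z)) =
          (Set.Icc x (x / b)).indicator (fun z => G x * ENNReal.ofReal z⁻¹) := by
        funext z
        have hmem : (x, z) ∈ T ↔ z ∈ Set.Icc x (x / b) := by
          simp only [hTdef, Set.mem_setOf_eq, Set.mem_Icc]
          constructor
          · rintro ⟨h1, h2⟩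
            exact ⟨h2, (le_div_iff₀ hb0).mpr (by linarith [mul_comm b z])⟩
          · rintro ⟨h1, h2⟩
            exact ⟨by have := (le_div_iff₀ hb0).mp h2; linarith [mul_comm z b], h1⟩
        simp only [hHdef, Set.indicator_apply, hmem]
      rw [hfun, lintegral_indicator measurableSet_Icc, hνdef,
        Measure.restrict_restrict measurableSet_Icc]
      have hsub : Set.Icc x (x / b) ∩ Set.Ici a = Set.Icc x (x / b) := by
        apply Set.inter_eq_left.mpr
        intro z hz
        exact le_trans hx hz.1
      rw [hsub, lintegral_const_mul' _ _ ENNReal.ofReal_ne_top]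
      congr 1
      -- compute ∫⁻ z in Icc x (x/b), ofReal z⁻¹ = L
      have hxb : x ≤ x / b := by
        rw [le_div_iff₀ hb0]
        nlinarith
      have hxb0 : 0 < x / b := lt_of_lt_of_le hx0 hxb
      have hint : IntegrableOn (fun z : ℝ => z⁻¹) (Set.Icc x (x / b)) := by
        apply ContinuousOn.integrableOn_Icc
        apply ContinuousOn.inv₀ continuousOn_id
        intro z hz
        exact ne_of_gt (lt_of_lt_of_le hx0 hz.1)
      have hnn : 0 ≤ᵐ[volume.restrict (Set.Icc x (x / b))] fun z : ℝ => z⁻¹ := by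
        filter_upwards [ae_restrict_mem measurableSet_Icc] with z hz
        exact le_of_lt (inv_pos.mpr (lt_of_lt_of_le hx0 hz.1))
      rw [← ofReal_integral_eq_lintegral_ofReal hint hnn]
      congr 1
      rw [MeasureTheory.integral_Icc_eq_integral_Ioc,
        ← intervalIntegral.integral_of_le hxb, integral_inv_of_pos hx0 hxb0]
      have : x / b / x = b⁻¹ := by
        field_simp
      rw [this, Real.log_inv]
    · have hG0 : G x = 0 := by
        simp [hGdef, hψdef, Set.piecewise_eq_indicator, Set.indicator_of_notMem hx]
      have hfun : (fun z => H (x, z)) = fun _ => 0 := by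
        funext z
        simp [hHdef, Set.indicator_apply, hG0]
      rw [hfun, hG0, lintegral_const, zero_mul, zero_mul]
  -- right side
  have hright : (∫⁻ z, ∫⁻ x, H (x, z) ∂f ∂ν) ≤ ∫⁻ z, ENNReal.ofReal (g z) ∂ν := by
    apply lintegral_mono_ae
    rw [hνdef]
    filter_upwards [ae_restrict_mem measurableSet_Ici] with z hz
    have hz0 : 0 < z := hIa hz
    have hfun : (fun x => H (x, z)) =
        (Set.Icc (b * z) z).indicator (fun x => G x * ENNReal.ofReal z⁻¹) := by
      funext x
      have hmem : (x, z) ∈ T ↔ x ∈ Set.Icc (b * z) z := by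
        simp [hTdef, Set.mem_Icc]
      simp only [hHdef, Set.indicator_apply, hmem]
    rw [hfun, lintegral_indicator measurableSet_Icc]
    calc (∫⁻ x in Set.Icc (b * z) z, G x * ENNReal.ofReal z⁻¹ ∂f)
        ≤ ∫⁻ x in Set.Icc (b * z) z, ENNReal.ofReal (φ x) * ENNReal.ofReal z⁻¹ ∂f := by
          apply lintegral_mono
          intro x
          exact mul_le_mul_left (hGle x) _
      _ = (∫⁻ x in Set.Icc (b * z) z, ENNReal.ofReal (φ x) ∂f) * ENNReal.ofReal z⁻¹ :=
          lintegral_mul_const' _ _ ENNReal.ofReal_ne_top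
      _ ≤ ENNReal.ofReal (z * g z) * ENNReal.ofReal z⁻¹ :=
          mul_le_mul_left (havg z hz) _
      _ = ENNReal.ofReal (g z) := by
          rw [← ENNReal.ofReal_mul (mul_nonneg hz0.le (hg0 z))]
          congr 1
          field_simp
  have hgr : (∫⁻ z, ENNReal.ofReal (g z) ∂ν) = ENNReal.ofReal (∫ z in Set.Ici a, g z) := by
    rw [hνdef, ← ofReal_integral_eq_lintegral_ofReal hg (ae_of_all _ hg0)]
  -- combine
  have hkey : (∫⁻ x in Set.Ici a, ENNReal.ofReal (φ x) ∂f) * L ≤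
      ENNReal.ofReal (∫ z in Set.Ici a, g z) := by
    have hGlint : (∫⁻ x, G x ∂f) = ∫⁻ x in Set.Ici a, ENNReal.ofReal (φ x) ∂f := by
      have : G = (Set.Ici a).indicator fun x => ENNReal.ofReal (φ x) := by
        funext x
        by_cases hx : x ∈ Set.Ici a
        · rw [hGeq x hx, Set.indicator_of_mem hx]
        · rw [Set.indicator_of_notMem hx]
          show ENNReal.ofReal (ψ x) = 0
          rw [hψdef, Set.piecewise_eq_of_notMem _ _ _ hx]
          simp
      rw [this, lintegral_indicator measurableSet_Ici]
    calc (∫⁻ x in Set.Ici a, ENNReal.ofReal (φ x) ∂f) * L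
        = ∫⁻ x, G x * L ∂f := by
          rw [lintegral_mul_const' _ _ hLtop, hGlint]
      _ = ∫⁻ x, ∫⁻ z, H (x, z) ∂ν ∂f := by
          apply lintegral_congr
          intro x
          rw [hleft x]
      _ = ∫⁻ z, ∫⁻ x, H (x, z) ∂f ∂ν := swap
      _ ≤ ∫⁻ z, ENNReal.ofReal (g z) ∂ν := hright
      _ = ENNReal.ofReal (∫ z in Set.Ici a, g z) := hgr
  rw [habs, ENNReal.ofReal_div_of_pos hlbpos, ← hLdef]
  exact (ENNReal.le_div_iff_mul_le (Or.inl hL0) (Or.inl hLtop)).mpr hkey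
end

section
/- Let $a>0$, $b,r \in (0,1)$, $q \in \mathbb{R}$, $c_0 \ge 0$, and $R \in [a/r, \infty)$ finite. Suppose $f$ is a nonnegative Radon measure on $(0,\infty)$ and $\varphi \ge 0$ is continuous with $\frac{1}{z}\int_{[bz,z]} \varphi(x)\, f(dx) \le c_0 z^q$ for all $z \in [a,R]$. Then there exists a constant $C > 0$ depending only on $r$, $b$, and $q$ such that $\int_{[a,R]} \varphi(x)\, f(dx) \le C c_0 \int_a^R z^q\, dz$. -/
open MeasureTheory Set intervalIntegral

lemma aux_int (q : ℝ) {x y : ℝ} (hx : 0 < x) (hy : 0 < y) :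
    IntervalIntegrable (fun t : ℝ => t ^ q) volume x y :=
  intervalIntegrable_rpow (Or.inr (notMem_uIcc_of_lt hx hy))

lemma aux_scale (q : ℝ) {s z : ℝ} (hs : 0 < s) (hs1 : s ≤ 1) (hz : 0 < z) :
    ∫ t in (s*z)..z, t ^ q = z ^ q * z * ∫ u in s..1, u ^ q := by
  have h := intervalIntegral.integral_comp_mul_right (a := s) (b := 1)
    (fun t : ℝ => t ^ q) hz.ne'
  simp only [one_mul, smul_eq_mul] at h
  have h2 : ∫ u in s..1, ((u*z) ^ q : ℝ) = z ^ q * ∫ u in s..1, u ^ q := by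
    rw [← intervalIntegral.integral_const_mul]
    apply intervalIntegral.integral_congr
    intro u hu
    rw [Set.uIcc_of_le hs1] at hu
    have hu0 : 0 ≤ u := le_trans hs.le hu.1
    show (u * z) ^ q = z ^ q * u ^ q
    rw [Real.mul_rpow hu0 hz.le]; ring
  rw [h2] at h
  field_simp at h ⊢
  nlinarith [h]

lemma aux_mono (q : ℝ) {a c d e : ℝ} (ha : 0 < a) (hac : a ≤ c) (hcd : c ≤ d)
    (hde : d ≤ e) : (∫ t in c..d, t ^ q) ≤ ∫ t in a..e, t ^ q := by
  have hc : 0 < c := lt_of_lt_of_le ha hac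
  have hd : 0 < d := lt_of_lt_of_le hc hcd
  have he : 0 < e := lt_of_lt_of_le hd hde
  have h1 := intervalIntegral.integral_add_adjacent_intervals
    (aux_int q ha hc) (aux_int q hc hd)
  have h2 := intervalIntegral.integral_add_adjacent_intervals
    (aux_int q ha hd) (aux_int q hd he)
  have n1 : 0 ≤ ∫ t in a..c, (t:ℝ) ^ q :=
    intervalIntegral.integral_nonneg hac fun u hu => Real.rpow_nonneg (le_trans ha.le hu.1) q
  have n2 : 0 ≤ ∫ t in d..e, (t:ℝ) ^ q :=
    intervalIntegral.integral_nonneg hde fun u hu => Real.rpow_nonneg (le_trans hd.le hu.1) q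
  linarith

lemma aux_pos (q : ℝ) {s : ℝ} (hs : 0 < s) (hs1 : s < 1) :
    0 < ∫ u in s..1, (u:ℝ) ^ q := by
  apply intervalIntegral_pos_of_pos_on (aux_int q hs one_pos)
  · intro u hu
    exact Real.rpow_pos_of_pos (lt_trans hs hu.1) q
  · exact hs1

set_option maxHeartbeats 1000000 in
theorem stmt_2
    (b r q : ℝ) (hb0 : 0 < b) (hb1 : b < 1) (hr0 : 0 < r) (hr1 : r < 1) :
    ∃ C : ℝ, 0 < C ∧
      ∀ (a c0 R : ℝ) (f : Measure ℝ) [IsLocallyFiniteMeasure f] (φ : ℝ → ℝ),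
        0 < a → 0 ≤ c0 → a / r ≤ R →
        ContinuousOn φ (Set.Ioi 0) → (∀ x, 0 ≤ φ x) →
        (∀ z ∈ Set.Icc a R,
          (∫⁻ x in Set.Icc (b * z) z, ENNReal.ofReal (φ x) ∂f) ≤
            ENNReal.ofReal (c0 * z ^ q * z)) →
        (∫⁻ x in Set.Icc a R, ENNReal.ofReal (φ x) ∂f) ≤
          ENNReal.ofReal (C * c0 * ∫ z in a..R, z ^ q) := by
  classical
  set Jb := ∫ u in b..1, (u:ℝ) ^ q with hJbdef
  set Jr := ∫ u in r..1, (u:ℝ) ^ q with hJrdef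
  have hJb : 0 < Jb := aux_pos q hb0 hb1
  have hJr : 0 < Jr := aux_pos q hr0 hr1
  refine ⟨1 / Jb + 1 / Jr, by positivity, ?_⟩
  intro a c0 R f _ φ ha hc0 haR _ _ hyp
  have hbi : (1:ℝ) < b⁻¹ := (one_lt_inv₀ hb0).mpr hb1
  have hbi0 : (0:ℝ) < b⁻¹ := lt_trans one_pos hbi
  have harR : a ≤ r * R := by
    rw [div_le_iff₀ hr0] at haR; linarith [haR]
  have hR0 : 0 < R := lt_of_lt_of_le ha (by nlinarith)
  have haR' : a ≤ R := by nlinarith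
  -- N : first index with R ≤ a * b⁻¹ ^ (N+1)
  have hQ : ∃ k : ℕ, R ≤ a * b⁻¹ ^ (k + 1) := by
    obtain ⟨m, hm⟩ := pow_unbounded_of_one_lt (R / a) hbi
    refine ⟨m, ?_⟩
    have := (div_lt_iff₀ ha).mp hm
    have hmono : (b⁻¹:ℝ) ^ m ≤ b⁻¹ ^ (m+1) := pow_le_pow_right₀ hbi.le (Nat.le_succ m)
    nlinarith
  set N := Nat.find hQ with hNdef
  set z : ℕ → ℝ := fun k => min (a * b⁻¹ ^ (k + 1)) R with hzdef
  have hzpos : ∀ k, 0 < z k := fun k => lt_min (by positivity) hR0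
  have hzmem : ∀ k, z k ∈ Set.Icc a R := by
    intro k
    refine ⟨le_min ?_ haR', min_le_right _ _⟩
    nlinarith [one_le_pow₀ hbi.le (n := k+1)]
  have hzN : z N = R := min_eq_right (Nat.find_spec hQ)
  have hzlt : ∀ k < N, z k = a * b⁻¹ ^ (k + 1) := by
    intro k hk
    exact min_eq_left (le_of_lt (lt_of_not_ge (Nat.find_min hQ hk)))
  -- the cover
  set S : ℕ → Set ℝ := fun k => if k ≤ N then Set.Icc (b * z k) (z k) else ∅ with hSdef
  have hcover : Set.Icc a R ⊆ ⋃ k, S k := by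
    intro x hx
    have hx0 : 0 < x := lt_of_lt_of_le ha hx.1
    have hP : ∃ k : ℕ, x ≤ a * b⁻¹ ^ (k + 1) := by
      obtain ⟨m, hm⟩ := pow_unbounded_of_one_lt (x / a) hbi
      refine ⟨m, ?_⟩
      have := (div_lt_iff₀ ha).mp hm
      have hmono : (b⁻¹:ℝ) ^ m ≤ b⁻¹ ^ (m+1) := pow_le_pow_right₀ hbi.le (Nat.le_succ m)
      nlinarith
    set k := Nat.find hP with hkdef
    have hkN : k ≤ N := Nat.find_mono fun n hn => le_trans hx.2 hn
    have hlow : a * b⁻¹ ^ k ≤ x := by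
      rcases Nat.eq_zero_or_pos k with h0 | h0
      · rw [h0]; simpa using hx.1
      · have := Nat.find_min hP (m := k - 1) (by omega)
        push_neg at this
        have : a * b⁻¹ ^ (k - 1 + 1) < x := this
        rw [Nat.sub_add_cancel h0] at this
        exact this.le
    refine Set.mem_iUnion.mpr ⟨k, ?_⟩
    rw [hSdef]
    simp only [hkN, if_true]
    constructor
    · calc b * z k ≤ b * (a * b⁻¹ ^ (k + 1)) := by
            have := min_le_left (a * b⁻¹ ^ (k + 1)) R
            nlinarith [this, hzpos k]
        _ = a * b⁻¹ ^ k := by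
            rw [pow_succ]; field_simp
        _ ≤ x := hlow
    · exact le_min (Nat.find_spec hP) hx.2
  -- pointwise lintegral bound on each piece
  have hpiece : ∀ k : ℕ,
      (∫⁻ x in S k, ENNReal.ofReal (φ x) ∂f) ≤
        (if k ≤ N then ENNReal.ofReal (c0 * z k ^ q * z k) else 0) := by
    intro k
    rw [hSdef]
    by_cases hk : k ≤ N
    · simp only [hk, if_true]
      exact hyp (z k) (hzmem k)
    · simp [hk]
  -- main chain in ℝ≥0∞
  have hW : ∀ k < N, IntervalIntegrable (fun t : ℝ => t ^ q) volume
      (a * b⁻¹ ^ k) (a * b⁻¹ ^ (k+1)) :=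
    fun k _ => aux_int q (by positivity) (by positivity)
  have hwN : a * b⁻¹ ^ N ≤ R := by
    rcases Nat.eq_zero_or_pos N with h0 | h0
    · rw [h0]; simpa using haR'
    · have := Nat.find_min hQ (m := N - 1) (by omega)
      push_neg at this
      have h2 : R > a * b⁻¹ ^ (N - 1 + 1) := this
      rw [Nat.sub_add_cancel h0] at h2
      exact h2.le
  have hsum : ∑ k ∈ Finset.range N,
      (∫ t in (a * b⁻¹ ^ k)..(a * b⁻¹ ^ (k+1)), t ^ q) = ∫ t in a..(a * b⁻¹ ^ N), t ^ q := by
    have := intervalIntegral.sum_integral_adjacent_intervals (μ := volume)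
      (f := fun t : ℝ => t ^ q) (a := fun k => a * b⁻¹ ^ k) (n := N) hW
    simpa using this
  -- the real-number estimate
  have hreal : ∑ k ∈ Finset.range (N+1), c0 * z k ^ q * z k ≤
      (1 / Jb + 1 / Jr) * c0 * ∫ t in a..R, t ^ q := by
    have hI : (0:ℝ) ≤ ∫ t in a..R, t ^ q :=
      intervalIntegral.integral_nonneg haR' fun u hu => Real.rpow_nonneg (le_trans ha.le hu.1) q
    rw [Finset.sum_range_succ]
    have hterm : ∀ k < N, z k ^ q * z k = (1 / Jb) * ∫ t in (a * b⁻¹ ^ k)..(a * b⁻¹ ^ (k+1)), t ^ q := by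
      intro k hk
      have hz : z k = a * b⁻¹ ^ (k+1) := hzlt k hk
      have hb' : b * (a * b⁻¹ ^ (k+1)) = a * b⁻¹ ^ k := by
        rw [pow_succ]; field_simp
      rw [hz, ← hb', aux_scale q hb0 hb1.le (by positivity)]
      field_simp
      exact hJbdef
    have h1 : ∑ k ∈ Finset.range N, c0 * z k ^ q * z k
        = c0 * (1 / Jb) * ∫ t in a..(a * b⁻¹ ^ N), t ^ q := by
      rw [← hsum, Finset.mul_sum]
      apply Finset.sum_congr rfl
      intro k hk
      rw [mul_assoc, hterm k (Finset.mem_range.mp hk)]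
      ring
    have h2 : (∫ t in a..(a * b⁻¹ ^ N), t ^ q) ≤ ∫ t in a..R, t ^ q := by
      have h := aux_mono q ha (le_refl a)
        (by nlinarith [one_le_pow₀ hbi.le (n := N)]) hwN
      exact h
    have h3 : c0 * z N ^ q * z N ≤ c0 * (1 / Jr) * ∫ t in a..R, t ^ q := by
      rw [hzN]
      have hscale : ∫ t in (r * R)..R, t ^ q = R ^ q * R * Jr := aux_scale q hr0 hr1.le hR0
      have h4 : (∫ t in (r * R)..R, t ^ q) ≤ ∫ t in a..R, t ^ q :=
        aux_mono q ha harR (by nlinarith) (le_refl R)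
      rw [hscale] at h4
      have hRq : 0 ≤ R ^ q * R := by positivity
      calc c0 * R ^ q * R = c0 * (1 / Jr) * (R ^ q * R * Jr) := by field_simp
        _ ≤ c0 * (1 / Jr) * ∫ t in a..R, t ^ q := by
            apply mul_le_mul_of_nonneg_left h4 (by positivity)
    rw [h1]
    have h5 : c0 * (1 / Jb) * (∫ t in a..(a * b⁻¹ ^ N), t ^ q)
        ≤ c0 * (1 / Jb) * ∫ t in a..R, t ^ q :=
      mul_le_mul_of_nonneg_left h2 (by positivity)
    nlinarith [h5, h3]
  -- combine
  calc (∫⁻ x in Set.Icc a R, ENNReal.ofReal (φ x) ∂f)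
      ≤ ∫⁻ x in ⋃ k, S k, ENNReal.ofReal (φ x) ∂f := lintegral_mono_set hcover
    _ ≤ ∑' k, ∫⁻ x in S k, ENNReal.ofReal (φ x) ∂f := lintegral_iUnion_le _ _
    _ ≤ ∑' k, (if k ≤ N then ENNReal.ofReal (c0 * z k ^ q * z k) else 0) :=
        ENNReal.tsum_le_tsum hpiece
    _ = ∑ k ∈ Finset.range (N+1), ENNReal.ofReal (c0 * z k ^ q * z k) := by
        rw [tsum_eq_sum (s := Finset.range (N+1))]
        · apply Finset.sum_congr rfl
          intro k hk
          have : k ≤ N := Nat.lt_succ_iff.mp (Finset.mem_range.mp hk)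
          simp [this]
        · intro k hk
          have : ¬ k ≤ N := by
            simpa using fun h => hk (Finset.mem_range.mpr (Nat.lt_succ_iff.mpr h))
          simp [this]
    _ = ENNReal.ofReal (∑ k ∈ Finset.range (N+1), c0 * z k ^ q * z k) := by
        rw [ENNReal.ofReal_sum_of_nonneg]
        intro k _
        have := hzpos k
        have : (0:ℝ) ≤ z k ^ q * z k := by positivity
        nlinarith
    _ ≤ ENNReal.ofReal ((1 / Jb + 1 / Jr) * c0 * ∫ t in a..R, t ^ q) :=
        ENNReal.ofReal_le_ofReal hreal
end

section
/- Let $\gamma, \lambda \in \mathbb{R}$ with $|\gamma + 2\lambda| < 1$, and let $\alpha = (3+\gamma)/2$. Then the integral $G(\alpha) = \int_0^1 \int_{1-y}^{\infty} (y^{\gamma+\lambda} z^{-\lambda} + z^{\gamma+\lambda} y^{-\lambda})\, y^{1-\alpha} z^{-\alpha}\, dz\, dy$ is finite. -/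
/-!
Expanding the kernel, the integrand is `y^a z^s + y^b z^t` with `a = γ + λ + 1 - α`,
`b = 1 - λ - α`, `s = -λ - α` and `t = γ + λ - α`. For `α = (3 + γ)/2` both `s` and `t`
are `< -1` exactly when `|γ + 2λ| < 1`, so the `z`-integral over `(1 - y, ∞)` is explicit:
a combination of `y^a (1 - y)^(s+1)` and `y^b (1 - y)^(t+1)`. The same condition puts
`a, b, s + 1, t + 1` above `-1`, so these are integrable Beta-type densities on `(0, 1)`.
-/

open MeasureTheory Set

lemma integrableOn_rpow_mul_one_sub_rpow {p q : ℝ} (hp : -1 < p) (hq : -1 < q) :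
    IntegrableOn (fun y : ℝ => y ^ p * (1 - y) ^ q) (Ioo 0 1) := by
  have hbeta : IntervalIntegrable (fun x : ℝ =>
      (x : ℂ) ^ (((p + 1 : ℝ) : ℂ) - 1) * (1 - (x : ℂ)) ^ (((q + 1 : ℝ) : ℂ) - 1))
      volume 0 1 :=
    Complex.betaIntegral_convergent (by simp; linarith) (by simp; linarith)
  have hnorm := hbeta.norm
  rw [intervalIntegrable_iff_integrableOn_Ioo_of_le zero_le_one] at hnorm
  refine hnorm.congr_fun (fun x hx => ?_) measurableSet_Ioo
  have hx0 : (0 : ℝ) < x := hx.1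
  have hx1 : (0 : ℝ) < 1 - x := sub_pos.2 hx.2
  have ep : ((p + 1 : ℝ) : ℂ) - 1 = (p : ℂ) := by push_cast; ring
  have eq : ((q + 1 : ℝ) : ℂ) - 1 = (q : ℂ) := by push_cast; ring
  have ex : 1 - (x : ℂ) = ((1 - x : ℝ) : ℂ) := by push_cast; ring
  simp only [ep, eq, ex, norm_mul]
  rw [Complex.norm_cpow_eq_rpow_re_of_pos hx0, Complex.norm_cpow_eq_rpow_re_of_pos hx1]
  simp

lemma lintegral_Ioi_mul_rpow_add_mul_rpow {u v s t c : ℝ} (hu : 0 ≤ u) (hv : 0 ≤ v)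
    (hs : s < -1) (ht : t < -1) (hc : 0 < c) :
    ∫⁻ z in Ioi c, ENNReal.ofReal (u * z ^ s + v * z ^ t) =
      ENNReal.ofReal (u * c ^ (s + 1) / -(s + 1) + v * c ^ (t + 1) / -(t + 1)) := by
  have hint_s := (integrableOn_Ioi_rpow_of_lt hs hc).const_mul u
  have hint_t := (integrableOn_Ioi_rpow_of_lt ht hc).const_mul v
  have hint : IntegrableOn (fun z => u * z ^ s + v * z ^ t) (Ioi c) := hint_s.add hint_t
  have hnonneg : 0 ≤ᵐ[volume.restrict (Ioi c)] fun z => u * z ^ s + v * z ^ t :=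
    ae_restrict_of_forall_mem measurableSet_Ioi fun z hz => by
      have hz0 : 0 < z := hc.trans hz
      positivity
  rw [← ofReal_integral_eq_lintegral_ofReal hint hnonneg,
    integral_add hint_s hint_t, integral_const_mul, integral_const_mul,
    integral_Ioi_rpow_of_lt hs hc, integral_Ioi_rpow_of_lt ht hc]
  congr 1
  rw [div_neg, div_neg, neg_div, neg_div]
  ring

lemma rpow_add_rpow_mul_rpow_mul_rpow {y z : ℝ} (hy : 0 < y) (hz : 0 < z) (p q r q' m n : ℝ) :
    (y ^ p * z ^ q + z ^ r * y ^ q') * y ^ m * z ^ n =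
      y ^ (p + m) * z ^ (q + n) + y ^ (q' + m) * z ^ (r + n) := by
  simp only [Real.rpow_add hy, Real.rpow_add hz]
  ring

theorem stmt_3 (γ lam : ℝ) (h : |γ + 2 * lam| < 1) :
    (∫⁻ y in Set.Ioo (0:ℝ) 1, ∫⁻ z in Set.Ioi (1 - y),
      ENNReal.ofReal ((y ^ (γ + lam) * z ^ (-lam) + z ^ (γ + lam) * y ^ (-lam)) *
        y ^ (1 - (3 + γ) / 2) * z ^ (-((3 + γ) / 2)))) ≠ ⊤ := by
  obtain ⟨hlo, hhi⟩ := abs_lt.mp h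
  set α : ℝ := (3 + γ) / 2 with hα
  have hs : -lam + -α < -1 := by linarith [hα]
  have ht : γ + lam + -α < -1 := by linarith [hα]
  have inner : ∀ y ∈ Ioo (0 : ℝ) 1,
      ∫⁻ z in Ioi (1 - y),
        ENNReal.ofReal ((y ^ (γ + lam) * z ^ (-lam) + z ^ (γ + lam) * y ^ (-lam)) *
          y ^ (1 - α) * z ^ (-α)) =
      ENNReal.ofReal
        (y ^ (γ + lam + (1 - α)) * (1 - y) ^ (-lam + -α + 1) / -(-lam + -α + 1) +
          y ^ (-lam + (1 - α)) * (1 - y) ^ (γ + lam + -α + 1) / -(γ + lam + -α + 1)) := by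
    intro y hy
    have hy0 : 0 < y := hy.1
    rw [← lintegral_Ioi_mul_rpow_add_mul_rpow (by positivity) (by positivity) hs ht
      (sub_pos.2 hy.2)]
    refine setLIntegral_congr_fun measurableSet_Ioi fun z hz => ?_
    rw [rpow_add_rpow_mul_rpow_mul_rpow hy0 ((sub_pos.2 hy.2).trans hz)]
  rw [setLIntegral_congr_fun measurableSet_Ioo inner]
  have hbeta_s := integrableOn_rpow_mul_one_sub_rpow (p := γ + lam + (1 - α))
    (q := -lam + -α + 1) (by linarith [hα]) (by linarith [hα])
  have hbeta_t := integrableOn_rpow_mul_one_sub_rpow (p := -lam + (1 - α))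
    (q := γ + lam + -α + 1) (by linarith [hα]) (by linarith [hα])
  exact (IntegrableOn.setLIntegral_lt_top ((hbeta_s.div_const _).add (hbeta_t.div_const _))).ne
end

section
/- Let $\gamma, \lambda \in \mathbb{R}$ with $|\gamma + 2\lambda| \ge 1$ and $\alpha = (3+\gamma)/2$. Then the integral $G(\alpha) = \int_0^1 \int_{1-y}^{\infty} (y^{\gamma+\lambda} z^{-\lambda} + z^{\gamma+\lambda} y^{-\lambda})\, y^{1-\alpha} z^{-\alpha}\, dz\, dy$ is infinite (i.e., the integrand is not integrable). -/
open MeasureTheory Set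

lemma aux_top (a C p : ℝ) (ha : 0 < a) (hC : 0 < C) (hp : -1 ≤ p) :
    (∫⁻ z in Set.Ioi a, ENNReal.ofReal (C * z ^ p)) = ⊤ := by
  by_contra h
  have hmeas : AEStronglyMeasurable (fun z : ℝ => C * z ^ p)
      (volume.restrict (Set.Ioi a)) := by
    exact (by fun_prop : Measurable fun z : ℝ => C * z ^ p).aestronglyMeasurable
  have hfin : HasFiniteIntegral (fun z : ℝ => C * z ^ p) (volume.restrict (Set.Ioi a)) := by
    rw [hasFiniteIntegral_iff_norm]
    have heq : ∫⁻ z in Set.Ioi a, ENNReal.ofReal ‖C * z ^ p‖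
        = ∫⁻ z in Set.Ioi a, ENNReal.ofReal (C * z ^ p) := by
      apply setLIntegral_congr_fun measurableSet_Ioi
      intro z hz
      beta_reduce
      have hz0 : 0 < z := ha.trans hz
      rw [Real.norm_eq_abs, abs_of_nonneg (by positivity)]
    rw [heq]
    exact lt_top_iff_ne_top.mpr h
  have hInt : IntegrableOn (fun z : ℝ => C * z ^ p) (Set.Ioi a) := ⟨hmeas, hfin⟩
  have hInt2 : IntegrableOn (fun z : ℝ => z ^ p) (Set.Ioi a) := by
    have h2 := hInt.const_mul C⁻¹
    simpa [IntegrableOn, ← mul_assoc, inv_mul_cancel₀ hC.ne'] using h2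
  have := (integrableOn_Ioi_rpow_iff ha).mp hInt2
  linarith

theorem stmt_4 (γ lam : ℝ) (h : 1 ≤ |γ + 2 * lam|) :
    (∫⁻ y in Set.Ioo (0:ℝ) 1, ∫⁻ z in Set.Ioi (1 - y),
      ENNReal.ofReal ((y ^ (γ + lam) * z ^ (-lam) + z ^ (γ + lam) * y ^ (-lam)) *
        y ^ (1 - (3 + γ) / 2) * z ^ (-((3 + γ) / 2)))) = ⊤ := by
  have hinner : ∀ y ∈ Set.Ioo (0:ℝ) 1,
      (∫⁻ z in Set.Ioi (1 - y),
        ENNReal.ofReal ((y ^ (γ + lam) * z ^ (-lam) + z ^ (γ + lam) * y ^ (-lam)) *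
          y ^ (1 - (3 + γ) / 2) * z ^ (-((3 + γ) / 2)))) = ⊤ := by
    intro y hy
    obtain ⟨hy0, hy1⟩ := hy
    have ha : 0 < 1 - y := by linarith
    rw [eq_top_iff]
    rcases le_abs'.mp h with hcase | hcase
    · -- γ + 2*lam ≤ -1 : use first term, exponent -lam - (3+γ)/2 ≥ -1
      calc ⊤ = ∫⁻ z in Set.Ioi (1 - y),
            ENNReal.ofReal ((y ^ (γ + lam) * y ^ (1 - (3 + γ) / 2)) *
              z ^ (-lam - (3 + γ) / 2)) := by
              rw [aux_top _ _ _ ha (by positivity) (by linarith)]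
        _ ≤ _ := by
            apply setLIntegral_mono' measurableSet_Ioi
            intro z hz
            have hz0 : (0:ℝ) < z := ha.trans hz
            apply ENNReal.ofReal_le_ofReal
            rw [show -lam - (3 + γ) / 2 = -lam + -((3 + γ) / 2) by ring,
              Real.rpow_add hz0]
            have p1 : 0 ≤ z ^ (γ + lam) * y ^ (-lam) := by positivity
            have p2 : 0 ≤ y ^ (1 - (3 + γ) / 2) * z ^ (-((3 + γ) / 2)) := by positivity
            nlinarith [mul_nonneg p1 p2]
    · -- 1 ≤ γ + 2*lam : use second term, exponent γ + lam - (3+γ)/2 ≥ -1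
      calc ⊤ = ∫⁻ z in Set.Ioi (1 - y),
            ENNReal.ofReal ((y ^ (-lam) * y ^ (1 - (3 + γ) / 2)) *
              z ^ (γ + lam - (3 + γ) / 2)) := by
              rw [aux_top _ _ _ ha (by positivity) (by linarith)]
        _ ≤ _ := by
            apply setLIntegral_mono' measurableSet_Ioi
            intro z hz
            have hz0 : (0:ℝ) < z := ha.trans hz
            apply ENNReal.ofReal_le_ofReal
            rw [show γ + lam - (3 + γ) / 2 = γ + lam + -((3 + γ) / 2) by ring,
              Real.rpow_add hz0]
            have p1 : 0 ≤ y ^ (γ + lam) * z ^ (-lam) := by positivity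
            have p2 : 0 ≤ y ^ (1 - (3 + γ) / 2) * z ^ (-((3 + γ) / 2)) := by positivity
            nlinarith [mul_nonneg p1 p2]
  rw [setLIntegral_congr_fun measurableSet_Ioo hinner]
  simp [Real.volume_Ioo]
end

section
/- Let $a \ge 0$ and $b$ with $a - b \ge 1$. Let $F : (0,\infty) \to \mathbb{R}$ be right-continuous, non-increasing, and nonnegative, and let $f$ be a nonnegative Radon measure on $(0,\infty)$ with $f([1,\infty)) > 0$ and $\int_{[1,\infty)} x^a f(dx) < \infty$. Then there exists $\delta_0 \in (0,1)$ depending only on $a$ such that: if $0 < \delta \le \delta_0$, $R_0 > 1/\delta$, $C > 0$, and $-\int_{[1,\delta R]} [F(R-y) - F(R)]\, y^b f(dy) \le -C/R^{a+1}$ for all $R \ge R_0$, then (when $a > 0$) there exist $R_0' \ge R_0$ and $B > 0$ with $F(R) \ge B/R^a$ for all $R \ge R_0'$. -/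
/-!
Sum the flux inequality over the unit-spaced radii `R = S, S + 1, …, S + ⌈S⌉ - 1`: the right-hand
sides add up to at least `C S / (2S)^(a+1) ≍ C S^(-a)`. On the other side, exchange sum and
integral. For fixed `y`, the differences `F (R - y) - F R` telescope along these radii once `y` is
replaced by `⌈y⌉`, so their sum is at most `⌈y⌉ F (S - ⌈y⌉) ≤ 2 y F (S / 2)`, because
`y ≤ δ R ≤ S / 4` for `δ ≤ 1 / 8`. With `y ^ b ≤ y ^ (a - 1)` the total is at most
`2 F (S / 2) ∫ y ^ a df`, hence `F (S / 2) ≳ S ^ (-a)`.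
-/

open MeasureTheory Set

theorem sum_range_sub_shift_le {u : ℕ → ℝ} (hu : Antitone u) (hu0 : ∀ k, 0 ≤ u k) (m N : ℕ) :
    ∑ k ∈ Finset.range N, (u k - u (m + k)) ≤ m * u 0 := by
  have htel : ∑ k ∈ Finset.range N, (u k - u (m + k)) =
      ∑ k ∈ Finset.range m, u k - ∑ k ∈ Finset.range m, u (N + k) := by
    have h1 := Finset.sum_range_add u N m
    have h2 := Finset.sum_range_add u m N
    rw [add_comm m N] at h2
    rw [Finset.sum_sub_distrib]
    linarith
  have hhead : ∑ k ∈ Finset.range m, u k ≤ m * u 0 := by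
    simpa using Finset.sum_le_card_nsmul (Finset.range m) _ _ fun k _ => hu (Nat.zero_le k)
  have htail : 0 ≤ ∑ k ∈ Finset.range m, u (N + k) := Finset.sum_nonneg fun k _ => hu0 _
  linarith

theorem sum_range_sub_shift_le_of_antitoneOn {F : ℝ → ℝ} (hF : AntitoneOn F (Ioi 0))
    (hF0 : ∀ x, 0 < x → 0 ≤ F x) {x y : ℝ} {m : ℕ} (hy : y ≤ m) (hm : (m : ℝ) < x) (N : ℕ) :
    ∑ k ∈ Finset.range N, (F (x + k - y) - F (x + k)) ≤ m * F (x - m) := by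
  have hpos : ∀ k : ℕ, 0 < x - m + k := fun k => by positivity
  have hu : Antitone fun k : ℕ => F (x - m + k) := fun i j hij =>
    hF (hpos i) (hpos j) (by gcongr)
  calc ∑ k ∈ Finset.range N, (F (x + k - y) - F (x + k))
      ≤ ∑ k ∈ Finset.range N, (F (x - m + k) - F (x - m + (m + k : ℕ))) := by
        refine Finset.sum_le_sum fun k _ => ?_
        have hshift : x - m + (m + k : ℕ) = x + k := by push_cast; ring
        rw [hshift]
        gcongr
        exact hF (hpos k) (show 0 < x + k - y by linarith [hpos k]) (by linarith)
    _ ≤ m * F (x - m + (0 : ℕ)) := sum_range_sub_shift_le hu (fun k => hF0 _ (hpos k)) m N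
    _ = m * F (x - m) := by simp

theorem sum_indicator_sub_shift_le {F : ℝ → ℝ} (hF : AntitoneOn F (Ioi 0))
    (hF0 : ∀ x, 0 < x → 0 ≤ F x) {a b δ S y : ℝ} (hab : 1 ≤ a - b) (hδ : δ ≤ 1 / 8)
    (hS : 4 ≤ S) (hy : 1 ≤ y) {N : ℕ} (hN : (N : ℝ) < S + 1) :
    ∑ k ∈ Finset.range N, (Icc 1 (δ * (S + k))).indicator
        (fun y => (F (S + k - y) - F (S + k)) * y ^ b) y ≤ 2 * F (S / 2) * y ^ a := by
  have hy0 : 0 < y := by linarith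
  have hFS : 0 ≤ F (S / 2) := hF0 _ (by linarith)
  by_cases hyS : y ≤ S / 4
  · have hceil : (⌈y⌉₊ : ℝ) ≤ 2 * y := Nat.ceil_le_two_mul (by linarith)
    have hceil' : (⌈y⌉₊ : ℝ) < y + 1 := Nat.ceil_lt_add_one hy0.le
    have hFceil : F (S - ⌈y⌉₊) ≤ F (S / 2) :=
      hF (show 0 < S / 2 by positivity) (show 0 < S - ⌈y⌉₊ by linarith) (by linarith)
    calc ∑ k ∈ Finset.range N, (Icc 1 (δ * (S + k))).indicator
            (fun y => (F (S + k - y) - F (S + k)) * y ^ b) y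
        ≤ ∑ k ∈ Finset.range N, (F (S + k - y) - F (S + k)) * y ^ b := by
          refine Finset.sum_le_sum fun k _ => indicator_apply_le' (fun _ => le_rfl) fun _ => ?_
          have hSk : 0 < S + k - y := by linarith [Nat.cast_nonneg (α := ℝ) k]
          exact mul_nonneg (sub_nonneg.2 (hF hSk (show 0 < S + k by linarith) (by linarith)))
            (Real.rpow_nonneg hy0.le b)
      _ = (∑ k ∈ Finset.range N, (F (S + k - y) - F (S + k))) * y ^ b := by
          rw [Finset.sum_mul]
      _ ≤ (⌈y⌉₊ * F (S - ⌈y⌉₊)) * y ^ (a - 1) :=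
          mul_le_mul
            (sum_range_sub_shift_le_of_antitoneOn hF hF0 (Nat.le_ceil y) (by linarith) N)
            (Real.rpow_le_rpow_of_exponent_le hy (by linarith)) (Real.rpow_nonneg hy0.le b)
            (mul_nonneg (Nat.cast_nonneg _) (hF0 _ (by linarith)))
      _ ≤ (2 * y * F (S / 2)) * y ^ (a - 1) :=
          mul_le_mul_of_nonneg_right
            (mul_le_mul hceil hFceil (hF0 _ (by linarith)) (by positivity))
            (Real.rpow_nonneg hy0.le _)
      _ = 2 * F (S / 2) * y ^ a := by
          rw [Real.rpow_sub_one hy0.ne']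
          field_simp
  · have hzero : ∀ k ∈ Finset.range N, (Icc 1 (δ * (S + k))).indicator
        (fun y => (F (S + k - y) - F (S + k)) * y ^ b) y = 0 := by
      intro k hk
      have hkS : (k : ℝ) + 1 < S + 1 :=
        lt_of_le_of_lt (by exact_mod_cast Finset.mem_range.1 hk) hN
      refine indicator_of_notMem (fun hmem => hyS ?_) _
      have : δ * (S + k) ≤ 1 / 8 * (S + k) := by gcongr
      linarith [hmem.2]
    rw [Finset.sum_eq_zero hzero]
    positivity

theorem le_sum_range_ceil_div_rpow {C S p : ℝ} (hC : 0 ≤ C) (hS : 0 < S) (hp : 0 ≤ p) :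
    C * S / (2 * S) ^ p ≤ ∑ k ∈ Finset.range ⌈S⌉₊, C / (S + k) ^ p := by
  have hterm : ∀ k ∈ Finset.range ⌈S⌉₊, C / (2 * S) ^ p ≤ C / (S + k) ^ p := by
    intro k hk
    have hkS : (k : ℝ) < S := Nat.lt_ceil.1 (Finset.mem_range.1 hk)
    gcongr
    linarith
  calc C * S / (2 * S) ^ p = S * (C / (2 * S) ^ p) := by ring
    _ ≤ ⌈S⌉₊ * (C / (2 * S) ^ p) := by gcongr; exact Nat.le_ceil S
    _ ≤ ∑ k ∈ Finset.range ⌈S⌉₊, C / (S + k) ^ p := by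
      simpa using Finset.card_nsmul_le_sum (Finset.range ⌈S⌉₊) _ _ hterm

theorem le_mul_tail_half_of_flux_lower_bound {F : ℝ → ℝ} {f : Measure ℝ} {a b δ C S : ℝ}
    (hF : AntitoneOn F (Ioi 0)) (hF0 : ∀ x, 0 < x → 0 ≤ F x) (ha : 0 ≤ a) (hab : 1 ≤ a - b)
    (hδ : δ ≤ 1 / 8) (hC : 0 < C) (hS : 4 ≤ S) (hmom : IntegrableOn (fun y => y ^ a) (Ici 1) f)
    (hflux : ∀ R, S ≤ R →
      C / R ^ (a + 1) ≤ ∫ y in Icc 1 (δ * R), (F (R - y) - F R) * y ^ b ∂f) :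
    C ≤ 2 ^ (a + 2) * S ^ a * F (S / 2) * ∫ y in Ici 1, y ^ a ∂f := by
  set G : ℕ → ℝ → ℝ := fun k y => (F (S + k - y) - F (S + k)) * y ^ b
  have hSpos : 0 < S := by linarith
  have hflux' : ∀ k : ℕ, C / (S + k) ^ (a + 1) ≤ ∫ y in Icc 1 (δ * (S + k)), G k y ∂f :=
    fun k => hflux _ (by linarith [Nat.cast_nonneg (α := ℝ) k])
  have hint : ∀ k : ℕ, IntegrableOn (G k) (Icc 1 (δ * (S + k))) f := fun k =>
    Integrable.of_integral_ne_zero ((lt_of_lt_of_le (by positivity) (hflux' k)).ne')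
  have hupper : ∑ k ∈ Finset.range ⌈S⌉₊, ∫ y in Icc 1 (δ * (S + k)), G k y ∂f
      ≤ 2 * F (S / 2) * ∫ y in Ici 1, y ^ a ∂f := by
    calc ∑ k ∈ Finset.range ⌈S⌉₊, ∫ y in Icc 1 (δ * (S + k)), G k y ∂f
        = ∑ k ∈ Finset.range ⌈S⌉₊, ∫ y in Ici 1, (Icc 1 (δ * (S + k))).indicator (G k) y ∂f := by
          refine Finset.sum_congr rfl fun k _ => ?_
          rw [setIntegral_indicator measurableSet_Icc,
            inter_eq_self_of_subset_right Icc_subset_Ici_self]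
      _ = ∫ y in Ici 1, ∑ k ∈ Finset.range ⌈S⌉₊, (Icc 1 (δ * (S + k))).indicator (G k) y ∂f :=
          (integral_finsetSum _ fun k _ =>
            ((hint k).integrable_indicator measurableSet_Icc).restrict).symm
      _ ≤ ∫ y in Ici 1, 2 * F (S / 2) * y ^ a ∂f :=
          setIntegral_mono_on
            (integrable_finsetSum _ fun k _ =>
              ((hint k).integrable_indicator measurableSet_Icc).restrict)
            (hmom.const_mul _) measurableSet_Ici fun y hy =>
              sum_indicator_sub_shift_le hF hF0 hab hδ hS hy (Nat.ceil_lt_add_one hSpos.le)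
      _ = 2 * F (S / 2) * ∫ y in Ici 1, y ^ a ∂f := integral_const_mul _ _
  have hlower := (le_sum_range_ceil_div_rpow hC.le hSpos (by linarith : 0 ≤ a + 1)).trans
    ((Finset.sum_le_sum fun k _ => hflux' k).trans hupper)
  have hpow : (2 * S) ^ (a + 1) = 2 ^ (a + 2) * S ^ a * S / 2 := by
    rw [Real.mul_rpow zero_le_two hSpos.le, Real.rpow_add_one hSpos.ne',
      Real.rpow_add_one two_ne_zero, Real.rpow_add two_pos]
    norm_num
    ring
  rw [hpow, div_le_iff₀ (by positivity)] at hlower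
  refine le_of_mul_le_mul_right ?_ hSpos
  calc C * S ≤ _ := hlower
    _ = _ := by ring

theorem stmt_9 (a b : ℝ) (ha : 0 < a) (hab : 1 ≤ a - b) :
    ∃ δ0 : ℝ, 0 < δ0 ∧ δ0 < 1 ∧
      ∀ (F : ℝ → ℝ) (f : Measure ℝ) (δ R0 C : ℝ),
        (∀ x : ℝ, 0 < x → ContinuousWithinAt F (Set.Ici x) x) →
        AntitoneOn F (Set.Ioi 0) →
        (∀ R : ℝ, 0 < R → 0 ≤ F R) →
        0 < f (Set.Ici 1) →
        (∫⁻ x in Set.Ici 1, ENNReal.ofReal (x ^ a) ∂f) ≠ ⊤ →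
        0 < δ → δ ≤ δ0 → 1 / δ < R0 → 0 < C →
        (∀ R : ℝ, R0 ≤ R →
          -(∫ y in Set.Icc 1 (δ * R), (F (R - y) - F R) * y ^ b ∂f) ≤
            -(C / R ^ (a + 1))) →
        ∃ R0' B : ℝ, R0 ≤ R0' ∧ 0 < B ∧ ∀ R : ℝ, R0' ≤ R → B / R ^ a ≤ F R := by
  refine ⟨1 / 8, by norm_num, by norm_num, ?_⟩
  intro F f δ R0 C _ hF hF0 _ hmom _ hδ _ hC hflux
  have hint : IntegrableOn (fun y => y ^ a) (Ici 1) f :=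
    (lintegral_ofReal_ne_top_iff_integrable (Real.continuous_rpow_const ha.le).aestronglyMeasurable
      (ae_restrict_of_forall_mem measurableSet_Ici fun y hy =>
        Real.rpow_nonneg (zero_le_one.trans hy) a)).1 hmom
  set M := ∫ y in Ici 1, y ^ a ∂f
  have hM : 0 ≤ M := setIntegral_nonneg measurableSet_Ici fun y hy =>
    Real.rpow_nonneg (zero_le_one.trans hy) a
  refine ⟨max R0 2, C / (2 ^ (a + 2) * 2 ^ a * (M + 1)), le_max_left _ _, by positivity,
    fun U hU => ?_⟩
  have hU2 : 2 ≤ U := (le_max_right _ _).trans hU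
  have hkey := le_mul_tail_half_of_flux_lower_bound (S := 2 * U) hF hF0 ha.le hab hδ hC
    (by linarith) hint fun R hR => neg_le_neg_iff.1 (hflux R (by linarith [le_max_left R0 2]))
  rw [mul_div_cancel_left₀ U two_ne_zero, Real.mul_rpow zero_le_two (by linarith)] at hkey
  rw [div_div, div_le_iff₀ (by positivity)]
  calc C ≤ 2 ^ (a + 2) * (2 ^ a * U ^ a) * F U * M := hkey
    _ ≤ 2 ^ (a + 2) * (2 ^ a * U ^ a) * F U * (M + 1) := by
      have := hF0 U (by linarith)
      gcongr
      linarith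
    _ = F U * (2 ^ (a + 2) * 2 ^ a * (M + 1) * U ^ a) := by ring
end

section
/- Let $a < 0$ and $b$ with $a - b \ge 1$. Let $F : (0,\infty) \to \mathbb{R}$ be right-continuous and non-decreasing, and let $f$ be a nonnegative Radon measure on $(0,\infty)$ with $f([1,\infty)) > 0$ and $\int_{[1,\infty)} x^a f(dx) < \infty$. Then there exists $\delta_0 \in (0,1)$ depending only on $a$ such that: if $0 < \delta \le \delta_0$, $R_0 > 1/\delta$, $C > 0$ with $F(R_0) > 0$, and $-\int_{[1,\delta R]} [F(R-y) - F(R)]\, y^b f(dy) \ge C/R^{a+1}$ for all $R \ge R_0$, then there exist $R_0' \ge R_0$ and $B > 0$ with $F(R) \ge B/R^a$ for all $R \ge R_0'$ (note $R^{-a} \to \infty$ since $a < 0$). -/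
open MeasureTheory Set

lemma aux_mvt (p R y : ℝ) (hp : 0 < p) (hR : 0 < R) (hy : 0 < y) (hyR : y ≤ R / 2) :
    R ^ p - (R - y) ^ p ≤ 2 * p * R ^ (p - 1) * y := by
  have hu : (0:ℝ) < R - y := by linarith
  obtain ⟨ξ, hξ, hslope⟩ := exists_hasDerivAt_eq_slope (fun x => x ^ p)
      (fun x => p * x ^ (p - 1)) (by linarith : R - y < R)
      (fun x hx => (Real.continuousAt_rpow_const x p
        (Or.inl (ne_of_gt (lt_of_lt_of_le hu hx.1)))).continuousWithinAt)
      (fun x hx => Real.hasDerivAt_rpow_const (Or.inl (ne_of_gt (lt_trans hu hx.1))))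
  have hξpos : 0 < ξ := lt_trans hu hξ.1
  have heq : R ^ p - (R - y) ^ p = p * ξ ^ (p - 1) * y := by
    have h2 : R - (R - y) = y := by ring
    rw [h2] at hslope
    field_simp at hslope
    linarith [hslope]
  have hbd : ξ ^ (p - 1) ≤ 2 * R ^ (p - 1) := by
    rcases le_or_gt 1 p with h1 | h1
    · have : ξ ^ (p - 1) ≤ R ^ (p - 1) :=
        Real.rpow_le_rpow hξpos.le hξ.2.le (by linarith)
      nlinarith [Real.rpow_nonneg hR.le (p - 1)]
    · have hξ2 : R / 2 ≤ ξ := by nlinarith [hξ.1]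
      have h3 : ξ ^ (p - 1) ≤ (R / 2) ^ (p - 1) :=
        Real.rpow_le_rpow_of_nonpos (by linarith) hξ2 (by linarith)
      have h4 : (R / 2) ^ (p - 1) = R ^ (p - 1) * (2:ℝ) ^ (1 - p) := by
        rw [Real.div_rpow hR.le (by norm_num : (0:ℝ) ≤ 2)]
        rw [div_eq_mul_inv, ← Real.rpow_neg (by norm_num : (0:ℝ) ≤ 2)]
        ring_nf
      have h5 : (2:ℝ) ^ (1 - p) ≤ 2 := by
        calc (2:ℝ) ^ (1 - p) ≤ (2:ℝ) ^ (1:ℝ) :=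
              Real.rpow_le_rpow_of_exponent_le (by norm_num) (by linarith)
          _ = 2 := Real.rpow_one 2
      have h6 : 0 ≤ R ^ (p - 1) := Real.rpow_nonneg hR.le _
      nlinarith
  have hfin := mul_le_mul_of_nonneg_left hbd (by positivity : (0:ℝ) ≤ p * y)
  nlinarith [hfin]

theorem stmt_11 (a b : ℝ) (ha : a < 0) (hab : 1 ≤ a - b) :
    ∃ δ0 : ℝ, 0 < δ0 ∧ δ0 < 1 ∧
      ∀ (F : ℝ → ℝ) (f : Measure ℝ) (δ R0 C : ℝ),
        (∀ x : ℝ, 0 < x → ContinuousWithinAt F (Set.Ici x) x) →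
        MonotoneOn F (Set.Ioi 0) →
        0 < f (Set.Ici 1) →
        (∫⁻ x in Set.Ici 1, ENNReal.ofReal (x ^ a) ∂f) ≠ ⊤ →
        0 < δ → δ ≤ δ0 → 1 / δ < R0 → 0 < C → 0 < F R0 →
        (∀ R : ℝ, R0 ≤ R →
          C / R ^ (a + 1) ≤
            -(∫ y in Set.Icc 1 (δ * R), (F (R - y) - F R) * y ^ b ∂f)) →
        ∃ R0' B : ℝ, R0 ≤ R0' ∧ 0 < B ∧ ∀ R : ℝ, R0' ≤ R → B / R ^ a ≤ F R := by
  refine ⟨1/2, by norm_num, by norm_num, ?_⟩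
  intro F f δ R0 C _hFc hFmono _hfpos hMfin hδ hδδ0 hR0 hC _hFR0 hyp
  have hδ2 : δ ≤ 1/2 := hδδ0
  have hR0gt2 : 2 < R0 := by
    have h1 : (2:ℝ) ≤ 1 / δ := by
      rw [le_div_iff₀ hδ]; linarith
    linarith
  set M := (∫⁻ x in Set.Ici 1, ENNReal.ofReal (x ^ a) ∂f).toReal with hM
  have hM0 : 0 ≤ M := ENNReal.toReal_nonneg
  set p := -a with hpdef
  have hp : 0 < p := neg_pos.mpr ha
  set c := C / (M + 1) with hc
  have hcpos : 0 < c := div_pos hC (by linarith)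
  set c2 := c / (2 * p) with hc2
  have hc2pos : 0 < c2 := div_pos hcpos (by positivity)
  -- measurability and integrability of y ↦ y ^ a
  have hg_meas : Measurable (fun y : ℝ => y ^ a) := by fun_prop
  have hInt : IntegrableOn (fun y : ℝ => y ^ a) (Set.Ici 1) f := by
    constructor
    · exact hg_meas.aestronglyMeasurable
    · rw [hasFiniteIntegral_iff_norm]
      have hcongr : ∫⁻ y in Set.Ici 1, ENNReal.ofReal ‖y ^ a‖ ∂f
          = ∫⁻ y in Set.Ici 1, ENNReal.ofReal (y ^ a) ∂f := by
        refine lintegral_congr_ae ?_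
        filter_upwards [ae_restrict_mem measurableSet_Ici] with y hy
        rw [Real.norm_eq_abs, abs_of_nonneg (Real.rpow_nonneg (by linarith [mem_Ici.mp hy]) a)]
      rw [hcongr]
      exact lt_top_iff_ne_top.mpr hMfin
  -- the integral of y^a over [1, δR] is at most M
  have hIle : ∀ T : ℝ, (∫ y in Set.Icc 1 T, y ^ a ∂f) ≤ M := by
    intro T
    have h1 : (∫ y in Set.Icc 1 T, y ^ a ∂f)
        = (∫⁻ y in Set.Icc 1 T, ENNReal.ofReal (y ^ a) ∂f).toReal := by
      refine integral_eq_lintegral_of_nonneg_ae ?_ hg_meas.aestronglyMeasurable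
      filter_upwards [ae_restrict_mem measurableSet_Icc] with y hy
      exact Real.rpow_nonneg (by linarith [hy.1]) a
    rw [h1, hM]
    refine ENNReal.toReal_mono hMfin ?_
    exact lintegral_mono' (Measure.restrict_mono Icc_subset_Ici_self le_rfl) le_rfl
  -- key pigeonhole lemma
  have key : ∀ R : ℝ, R0 ≤ R → ∃ y : ℝ, 1 ≤ y ∧ y ≤ δ * R ∧
      c * R ^ (-(a+1)) * y ≤ F R - F (R - y) := by
    intro R hR
    have hRpos : 0 < R := by linarith
    by_contra hcon
    push_neg at hcon
    have h1 := hyp R hR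
    rw [← integral_neg] at h1
    have hmem : ∀ᵐ y ∂(f.restrict (Set.Icc 1 (δ * R))), y ∈ Set.Icc 1 (δ * R) :=
      ae_restrict_mem measurableSet_Icc
    have hbound_int : Integrable (fun y : ℝ => (c * R ^ (-(a+1))) * y ^ a)
        (f.restrict (Set.Icc 1 (δ * R))) :=
      ((hInt.mono_set Icc_subset_Ici_self)).const_mul _
    have hRy : ∀ y : ℝ, y ∈ Set.Icc 1 (δ * R) → 0 < R - y ∧ F (R - y) ≤ F R := by
      intro y hy
      have h2 : y ≤ R / 2 := le_trans hy.2 (by nlinarith)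
      have h3 : 0 < R - y := by linarith
      exact ⟨h3, hFmono (mem_Ioi.mpr h3) (mem_Ioi.mpr hRpos) (by linarith [hy.1])⟩
    have hnonneg : 0 ≤ᵐ[f.restrict (Set.Icc 1 (δ * R))]
        fun y => -((F (R - y) - F R) * y ^ b) := by
      filter_upwards [hmem] with y hy
      have h4 := (hRy y hy).2
      have h5 : (0:ℝ) ≤ y ^ b := Real.rpow_nonneg (by linarith [hy.1]) b
      simp only [Pi.zero_apply]
      nlinarith
    have hle : (fun y => -((F (R - y) - F R) * y ^ b)) ≤ᵐ[f.restrict (Set.Icc 1 (δ * R))]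
        fun y : ℝ => (c * R ^ (-(a+1))) * y ^ a := by
      filter_upwards [hmem] with y hy
      have hy1 : (1:ℝ) ≤ y := hy.1
      have hypos : (0:ℝ) < y := by linarith
      have h2 := le_of_lt (hcon y hy.1 hy.2)
      have h5 : (0:ℝ) ≤ y ^ b := Real.rpow_nonneg hypos.le b
      have h6 : -((F (R - y) - F R) * y ^ b) = (F R - F (R - y)) * y ^ b := by ring
      rw [h6]
      calc (F R - F (R - y)) * y ^ b ≤ (c * R ^ (-(a+1)) * y) * y ^ b :=
            mul_le_mul_of_nonneg_right h2 h5
        _ = (c * R ^ (-(a+1))) * y ^ ((1:ℝ) + b) := by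
            rw [Real.rpow_add hypos, Real.rpow_one]; ring
        _ ≤ (c * R ^ (-(a+1))) * y ^ a := by
            refine mul_le_mul_of_nonneg_left ?_ ?_
            · exact Real.rpow_le_rpow_of_exponent_le hy1 (by linarith)
            · positivity
    have h7 := integral_mono_of_nonneg hnonneg hbound_int hle
    have h8 : (∫ y in Set.Icc 1 (δ * R), (c * R ^ (-(a+1))) * y ^ a ∂f)
        = (c * R ^ (-(a+1))) * ∫ y in Set.Icc 1 (δ * R), y ^ a ∂f := by
      exact integral_const_mul _ _
    have hX : (0:ℝ) < R ^ (-(a+1)) := Real.rpow_pos_of_pos hRpos _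
    have h9 : C / R ^ (a+1) = C * R ^ (-(a+1)) := by
      rw [Real.rpow_neg hRpos.le, div_eq_mul_inv]
    have h10 : (∫ y in Set.Icc 1 (δ * R), y ^ a ∂f) ≤ M := hIle (δ * R)
    have h11 : C * R ^ (-(a+1)) ≤ (c * R ^ (-(a+1))) * M := by
      calc C * R ^ (-(a+1)) = C / R ^ (a+1) := h9.symm
        _ ≤ ∫ y in Set.Icc 1 (δ * R), -((F (R - y) - F R) * y ^ b) ∂f := h1
        _ ≤ (c * R ^ (-(a+1))) * ∫ y in Set.Icc 1 (δ * R), y ^ a ∂f := by rw [← h8]; exact h7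
        _ ≤ (c * R ^ (-(a+1))) * M := by
            refine mul_le_mul_of_nonneg_left h10 ?_
            positivity
    have h12 : C ≤ c * M := by
      have h13 : C * R ^ (-(a+1)) ≤ (c * M) * R ^ (-(a+1)) := by nlinarith
      exact le_of_mul_le_mul_right h13 hX
    rw [hc, div_mul_eq_mul_div, le_div_iff₀ (by linarith : (0:ℝ) < M + 1)] at h12
    nlinarith
  -- step lemma combining key and MVT
  have step : ∀ R : ℝ, R0 ≤ R → ∃ y : ℝ, 1 ≤ y ∧ R0 / 2 ≤ R - y ∧
      F (R - y) + c2 * (R ^ p - (R - y) ^ p) ≤ F R ∧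
      (R - y < R0 → F (R0 / 2) + c2 * (R ^ p - R0 ^ p) ≤ F R) := by
    intro R hR
    obtain ⟨y, hy1, hy2, hy3⟩ := key R hR
    have hRpos : 0 < R := by linarith
    have hyR2 : y ≤ R / 2 := le_trans hy2 (by nlinarith)
    have hRy2 : R0 / 2 ≤ R - y := by linarith
    have hmvt := aux_mvt p R y hp hRpos (by linarith) hyR2
    have hpe : p - 1 = -(a+1) := by rw [hpdef]; ring
    have hincr : c2 * (R ^ p - (R - y) ^ p) ≤ c * R ^ (-(a+1)) * y := by
      calc c2 * (R ^ p - (R - y) ^ p) ≤ c2 * (2 * p * R ^ (p-1) * y) :=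
            mul_le_mul_of_nonneg_left hmvt hc2pos.le
        _ = c * R ^ (-(a+1)) * y := by
            rw [← hpe, hc2]; field_simp
    refine ⟨y, hy1, hRy2, by linarith, ?_⟩
    intro hlt
    have hmono : F (R0 / 2) ≤ F (R - y) :=
      hFmono (mem_Ioi.mpr (by linarith)) (mem_Ioi.mpr (by linarith)) hRy2
    have hrp : (R - y) ^ p ≤ R0 ^ p :=
      Real.rpow_le_rpow (by linarith) hlt.le hp.le
    have h := mul_le_mul_of_nonneg_left hrp hc2pos.le
    linarith
  -- induction chain
  have chain : ∀ n : ℕ, ∀ R : ℝ, R0 ≤ R → R ≤ R0 + n →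
      F (R0 / 2) + c2 * (R ^ p - R0 ^ p) ≤ F R := by
    intro n
    induction n with
    | zero =>
      intro R hR hRn
      obtain ⟨y, hy1, hy2, _hy3, hy4⟩ := step R hR
      exact hy4 (by push_cast at hRn; linarith)
    | succ n ih =>
      intro R hR hRn
      obtain ⟨y, hy1, hy2, hy3, hy4⟩ := step R hR
      rcases lt_or_ge (R - y) R0 with hcase | hcase
      · exact hy4 hcase
      · have hih := ih (R - y) hcase (by push_cast at hRn ⊢; linarith)
        linarith
  have hall : ∀ R : ℝ, R0 ≤ R → F (R0 / 2) + c2 * (R ^ p - R0 ^ p) ≤ F R := by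
    intro R hR
    exact chain ⌈R - R0⌉₊ R hR (by linarith [Nat.le_ceil (R - R0)])
  -- conclusion
  set K := F (R0 / 2) - c2 * R0 ^ p with hK
  set L := max 0 ((-2 * K) / c2) with hL
  have hL0 : (0:ℝ) ≤ L := le_max_left _ _
  refine ⟨max R0 (L ^ p⁻¹), c2 / 2, le_max_left _ _, by positivity, ?_⟩
  intro R hR1
  have hRR0 : R0 ≤ R := le_trans (le_max_left _ _) hR1
  have hRpos : (0:ℝ) < R := by linarith
  have h1 := hall R hRR0
  have hRL : L ^ p⁻¹ ≤ R := le_trans (le_max_right _ _) hR1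
  have hRp : L ≤ R ^ p := by
    calc L = (L ^ p⁻¹) ^ p := (Real.rpow_inv_rpow hL0 hp.ne').symm
      _ ≤ R ^ p := Real.rpow_le_rpow (Real.rpow_nonneg hL0 _) hRL hp.le
  have hKL : (-2 * K) / c2 ≤ R ^ p := le_trans (le_max_right _ _) hRp
  have h2 : -2 * K ≤ c2 * R ^ p := by
    rw [div_le_iff₀ hc2pos] at hKL; linarith
  have h3 : (c2 / 2) / R ^ a = (c2 / 2) * R ^ p := by
    rw [hpdef, Real.rpow_neg hRpos.le, div_eq_mul_inv]
  rw [h3]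
  clear_value M c c2 K L
  rw [hK] at h2
  linarith [h1, h2]
end

section
/- Let $K : (0,\infty)^2 \to [0,\infty)$ be continuous, symmetric, with $K(x,y) \le c_2(x^{\gamma+\lambda} y^{-\lambda} + y^{\gamma+\lambda} x^{-\lambda})$, where $|\gamma + 2\lambda| < 1$. Suppose $f$ is a nonnegative Radon measure on $(0,\infty)$ satisfying $\frac{1}{z}\int_{[z/2,z]} f(dx) \le A z^{-(\gamma+3)/2}$ for all $z > 0$. Then for every $\varepsilon > 0$ there exists $\delta_\varepsilon > 0$ (independent of $A$) such that for all $0 < \delta \le \delta_\varepsilon$ and all $z > 0$: $\iint_{\Omega_z \cap \{y > x/\delta\}} K(x,y)\, x\, f(dx)\, f(dy) \le \varepsilon A^2$, where $\Omega_z = \{(x,y) : 0 < x \le z,\ y > z - x\}$. -/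
open MeasureTheory Set
open scoped ENNReal NNReal

lemma dyadic_up {M y : ℝ} (hM : 0 < M) (hy : M < y) :
    ∃ k : ℕ, M * 2 ^ k < y ∧ y ≤ M * 2 ^ (k + 1) := by
  have hex : ∃ k : ℕ, y ≤ M * 2 ^ (k + 1) := by
    obtain ⟨k, hk⟩ := pow_unbounded_of_one_lt (y / M) (by norm_num : (1:ℝ) < 2)
    refine ⟨k, ?_⟩
    have h2 : (2:ℝ) ^ k ≤ 2 ^ (k+1) := by
      apply pow_le_pow_right₀ (by norm_num) (Nat.le_succ k)
    have := (div_lt_iff₀ hM).mp hk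
    nlinarith
  classical
  refine ⟨Nat.find hex, ?_, Nat.find_spec hex⟩
  rcases Nat.eq_zero_or_pos (Nat.find hex) with h0 | hpos
  · rw [h0]; simpa using hy
  · obtain ⟨j, hj⟩ := Nat.exists_eq_succ_of_ne_zero hpos.ne'
    have := Nat.find_min hex (m := j) (by omega)
    push_neg at this
    rw [hj]; exact this

lemma dyadic_down {m x : ℝ} (hx : 0 < x) (hxm : x ≤ m) :
    ∃ k : ℕ, m / 2 ^ (k + 1) < x ∧ x ≤ m / 2 ^ k := by
  have hex : ∃ k : ℕ, m / 2 ^ (k + 1) < x := by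
    obtain ⟨k, hk⟩ := pow_unbounded_of_one_lt (m / x) (by norm_num : (1:ℝ) < 2)
    refine ⟨k, ?_⟩
    have h2 : (2:ℝ) ^ k < 2 ^ (k+1) := by
      apply pow_lt_pow_right₀ (by norm_num) (Nat.lt_succ_self k)
    have hp : (0:ℝ) < 2 ^ (k+1) := by positivity
    rw [div_lt_iff₀ hp]
    have := (div_lt_iff₀ hx).mp hk
    nlinarith
  classical
  refine ⟨Nat.find hex, Nat.find_spec hex, ?_⟩
  rcases Nat.eq_zero_or_pos (Nat.find hex) with h0 | hpos
  · rw [h0]; simpa using hxm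
  · obtain ⟨j, hj⟩ := Nat.exists_eq_succ_of_ne_zero hpos.ne'
    have := Nat.find_min hex (m := j) (by omega)
    push_neg at this
    rw [hj]; exact this

lemma rpow_le_blk_low {u x : ℝ} (hu : 0 < u) (h1 : u / 2 < x) (h2 : x ≤ u) (p : ℝ) :
    x ^ p ≤ max 1 ((2:ℝ) ^ (-p)) * u ^ p := by
  have hx0 : 0 < x := lt_trans (by positivity) h1
  rcases le_or_gt 0 p with hp | hp
  · calc x ^ p ≤ u ^ p := Real.rpow_le_rpow hx0.le h2 hp
    _ ≤ _ := le_mul_of_one_le_left (by positivity) (le_max_left _ _)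
  · have : x ^ p ≤ (u / 2) ^ p := Real.rpow_le_rpow_of_nonpos (by positivity) h1.le hp.le
    calc x ^ p ≤ (u / 2) ^ p := this
    _ = (2:ℝ) ^ (-p) * u ^ p := by
        rw [Real.div_rpow hu.le (by norm_num), Real.rpow_neg (by norm_num)]
        field_simp
    _ ≤ _ := by
        apply mul_le_mul_of_nonneg_right (le_max_right _ _) (by positivity)

lemma rpow_le_blk_high {u x : ℝ} (hu : 0 < u) (h1 : u < x) (h2 : x ≤ 2 * u) (p : ℝ) :
    x ^ p ≤ max 1 ((2:ℝ) ^ p) * u ^ p := by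
  have hx0 : 0 < x := lt_trans hu h1
  rcases le_or_gt 0 p with hp | hp
  · calc x ^ p ≤ (2 * u) ^ p := Real.rpow_le_rpow hx0.le h2 hp
    _ = (2:ℝ) ^ p * u ^ p := Real.mul_rpow (by norm_num) hu.le
    _ ≤ _ := mul_le_mul_of_nonneg_right (le_max_right _ _) (by positivity)
  · calc x ^ p ≤ u ^ p := Real.rpow_le_rpow_of_nonpos hu h1.le hp.le
    _ ≤ _ := le_mul_of_one_le_left (by positivity) (le_max_left _ _)

lemma tsum_geo (c r : ℝ) (hc : 0 ≤ c) (hr0 : 0 ≤ r) (hr1 : r < 1) :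
    ∑' k : ℕ, ENNReal.ofReal (c * r ^ k) = ENNReal.ofReal (c * (1 - r)⁻¹) := by
  have h : ∀ k : ℕ, ENNReal.ofReal (c * r ^ k) = ENNReal.ofReal c * (ENNReal.ofReal r) ^ k := by
    intro k; rw [ENNReal.ofReal_mul hc, ENNReal.ofReal_pow hr0]
  rw [tsum_congr h, ENNReal.tsum_mul_left, ENNReal.tsum_geometric,
    (show (1 : ℝ≥0∞) - ENNReal.ofReal r = ENNReal.ofReal (1 - r) by
      rw [ENNReal.ofReal_sub 1 hr0, ENNReal.ofReal_one]),
    ← ENNReal.ofReal_inv_of_pos (by linarith), ← ENNReal.ofReal_mul hc]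

lemma mom_low (f : Measure ℝ) (A a p m : ℝ) (hA : 0 ≤ A) (hp : a < p) (hm : 0 < m)
    (hf : ∀ u : ℝ, 0 < u → f (Icc (u / 2) u) ≤ ENNReal.ofReal (A * u ^ (-a))) :
    ∫⁻ x in Ioc 0 m, ENNReal.ofReal (x ^ p) ∂f ≤
      ENNReal.ofReal (max 1 ((2:ℝ) ^ (-p)) * (1 - (2:ℝ) ^ (a - p))⁻¹ * (A * m ^ (p - a))) := by
  set cmax := max 1 ((2:ℝ) ^ (-p)) with hcmax
  set r := (2:ℝ) ^ (a - p) with hrdef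
  have hr0 : 0 ≤ r := by positivity
  have hr1 : r < 1 := Real.rpow_lt_one_of_one_lt_of_neg (by norm_num) (by linarith)
  have hcm0 : 0 ≤ cmax := le_trans zero_le_one (le_max_left _ _)
  have hblk : ∀ k : ℕ, ∫⁻ x in Ioc (m / 2 ^ (k+1)) (m / 2 ^ k), ENNReal.ofReal (x ^ p) ∂f ≤
      ENNReal.ofReal (cmax * A * m ^ (p - a) * r ^ k) := by
    intro k
    set u := m / 2 ^ k with hu'
    have hu : 0 < u := by positivity
    have hhalf : m / 2 ^ (k+1) = u / 2 := by rw [hu', pow_succ]; ring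
    calc ∫⁻ x in Ioc (m / 2 ^ (k+1)) (m / 2 ^ k), ENNReal.ofReal (x ^ p) ∂f
        ≤ ∫⁻ _ in Ioc (u / 2) u, ENNReal.ofReal (cmax * u ^ p) ∂f := by
          rw [hhalf]
          exact setLIntegral_mono measurable_const
            (fun x hx => ENNReal.ofReal_le_ofReal (rpow_le_blk_low hu hx.1 hx.2 p))
      _ = ENNReal.ofReal (cmax * u ^ p) * f (Ioc (u / 2) u) := setLIntegral_const _ _
      _ ≤ ENNReal.ofReal (cmax * u ^ p) * ENNReal.ofReal (A * u ^ (-a)) := by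
          gcongr
          exact le_trans (measure_mono Ioc_subset_Icc_self) (hf u hu)
      _ = ENNReal.ofReal (cmax * u ^ p * (A * u ^ (-a))) := by
          rw [← ENNReal.ofReal_mul (by positivity)]
      _ ≤ ENNReal.ofReal (cmax * A * m ^ (p - a) * r ^ k) := by
          apply ENNReal.ofReal_le_ofReal
          apply le_of_eq
          have e1 : u ^ p * u ^ (-a) = u ^ (p - a) := by
            rw [← Real.rpow_add hu]; ring_nf
          have e2 : u ^ (p - a) = m ^ (p - a) * r ^ k := by
            rw [hu', Real.div_rpow hm.le (by positivity), hrdef,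
              ← Real.rpow_natCast (2:ℝ) k, ← Real.rpow_mul (by norm_num),
              ← Real.rpow_natCast ((2:ℝ) ^ (a - p)) k, ← Real.rpow_mul (by norm_num),
              div_eq_mul_inv, ← Real.rpow_neg (by norm_num)]
            ring_nf
          calc cmax * u ^ p * (A * u ^ (-a)) = cmax * A * (u ^ p * u ^ (-a)) := by ring
            _ = cmax * A * m ^ (p - a) * r ^ k := by rw [e1, e2]; ring
  calc ∫⁻ x in Ioc 0 m, ENNReal.ofReal (x ^ p) ∂f
      ≤ ∫⁻ x in ⋃ k : ℕ, Ioc (m / 2 ^ (k+1)) (m / 2 ^ k), ENNReal.ofReal (x ^ p) ∂f := by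
        apply lintegral_mono_set
        intro x hx
        obtain ⟨k, h1, h2⟩ := dyadic_down hx.1 hx.2
        exact mem_iUnion.mpr ⟨k, h1, h2⟩
    _ ≤ ∑' k : ℕ, ∫⁻ x in Ioc (m / 2 ^ (k+1)) (m / 2 ^ k), ENNReal.ofReal (x ^ p) ∂f :=
        lintegral_iUnion_le _ _
    _ ≤ ∑' k : ℕ, ENNReal.ofReal (cmax * A * m ^ (p - a) * r ^ k) := ENNReal.tsum_le_tsum hblk
    _ = ENNReal.ofReal (cmax * A * m ^ (p - a) * (1 - r)⁻¹) := tsum_geo _ r (by positivity) hr0 hr1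
    _ = ENNReal.ofReal (cmax * (1 - r)⁻¹ * (A * m ^ (p - a))) := by ring_nf

lemma mom_high (f : Measure ℝ) (A a p M : ℝ) (hA : 0 ≤ A) (hp : p < a) (hM : 0 < M)
    (hf : ∀ u : ℝ, 0 < u → f (Icc (u / 2) u) ≤ ENNReal.ofReal (A * u ^ (-a))) :
    ∫⁻ x in Ioi M, ENNReal.ofReal (x ^ p) ∂f ≤
      ENNReal.ofReal (max 1 ((2:ℝ) ^ p) * (2:ℝ) ^ (-a) * (1 - (2:ℝ) ^ (p - a))⁻¹ *
        (A * M ^ (p - a))) := by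
  set cmax := max 1 ((2:ℝ) ^ p) with hcmax
  set r := (2:ℝ) ^ (p - a) with hrdef
  have hr0 : 0 ≤ r := by positivity
  have hr1 : r < 1 := Real.rpow_lt_one_of_one_lt_of_neg (by norm_num) (by linarith)
  have hcm0 : 0 ≤ cmax := le_trans zero_le_one (le_max_left _ _)
  have hblk : ∀ k : ℕ, ∫⁻ x in Ioc (M * 2 ^ k) (M * 2 ^ (k+1)), ENNReal.ofReal (x ^ p) ∂f ≤
      ENNReal.ofReal (cmax * (2:ℝ) ^ (-a) * A * M ^ (p - a) * r ^ k) := by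
    intro k
    set u := M * 2 ^ k with hu'
    have hu : 0 < u := by positivity
    have h2u : M * 2 ^ (k+1) = 2 * u := by rw [hu', pow_succ]; ring
    calc ∫⁻ x in Ioc (M * 2 ^ k) (M * 2 ^ (k+1)), ENNReal.ofReal (x ^ p) ∂f
        ≤ ∫⁻ _ in Ioc u (2 * u), ENNReal.ofReal (cmax * u ^ p) ∂f := by
          rw [h2u]
          exact setLIntegral_mono measurable_const
            (fun x hx => ENNReal.ofReal_le_ofReal (rpow_le_blk_high hu hx.1 hx.2 p))
      _ = ENNReal.ofReal (cmax * u ^ p) * f (Ioc u (2 * u)) := setLIntegral_const _ _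
      _ ≤ ENNReal.ofReal (cmax * u ^ p) * ENNReal.ofReal (A * (2 * u) ^ (-a)) := by
          gcongr
          refine le_trans (measure_mono ?_) (hf (2 * u) (by positivity))
          rw [show (2 * u) / 2 = u by ring]
          exact Ioc_subset_Icc_self
      _ = ENNReal.ofReal (cmax * u ^ p * (A * (2 * u) ^ (-a))) := by
          rw [← ENNReal.ofReal_mul (by positivity)]
      _ ≤ ENNReal.ofReal (cmax * (2:ℝ) ^ (-a) * A * M ^ (p - a) * r ^ k) := by
          apply ENNReal.ofReal_le_ofReal
          apply le_of_eq
          have e0 : (2 * u) ^ (-a) = (2:ℝ) ^ (-a) * u ^ (-a) :=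
            Real.mul_rpow (by norm_num) hu.le
          have e1 : u ^ p * u ^ (-a) = u ^ (p - a) := by
            rw [← Real.rpow_add hu]; ring_nf
          have e2 : u ^ (p - a) = M ^ (p - a) * r ^ k := by
            rw [hu', Real.mul_rpow hM.le (by positivity), hrdef,
              ← Real.rpow_natCast (2:ℝ) k, ← Real.rpow_mul (by norm_num),
              ← Real.rpow_natCast ((2:ℝ) ^ (p - a)) k, ← Real.rpow_mul (by norm_num)]
            ring_nf
          calc cmax * u ^ p * (A * (2 * u) ^ (-a))
              = cmax * (2:ℝ) ^ (-a) * A * (u ^ p * u ^ (-a)) := by rw [e0]; ring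
            _ = cmax * (2:ℝ) ^ (-a) * A * M ^ (p - a) * r ^ k := by rw [e1, e2]; ring
  calc ∫⁻ x in Ioi M, ENNReal.ofReal (x ^ p) ∂f
      ≤ ∫⁻ x in ⋃ k : ℕ, Ioc (M * 2 ^ k) (M * 2 ^ (k+1)), ENNReal.ofReal (x ^ p) ∂f := by
        apply lintegral_mono_set
        intro x hx
        obtain ⟨k, h1, h2⟩ := dyadic_up hM hx
        exact mem_iUnion.mpr ⟨k, h1, h2⟩
    _ ≤ ∑' k : ℕ, ∫⁻ x in Ioc (M * 2 ^ k) (M * 2 ^ (k+1)), ENNReal.ofReal (x ^ p) ∂f :=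
        lintegral_iUnion_le _ _
    _ ≤ ∑' k : ℕ, ENNReal.ofReal (cmax * (2:ℝ) ^ (-a) * A * M ^ (p - a) * r ^ k) :=
        ENNReal.tsum_le_tsum hblk
    _ = ENNReal.ofReal (cmax * (2:ℝ) ^ (-a) * A * M ^ (p - a) * (1 - r)⁻¹) :=
        tsum_geo _ r (by positivity) hr0 hr1
    _ = ENNReal.ofReal (cmax * (2:ℝ) ^ (-a) * (1 - r)⁻¹ * (A * M ^ (p - a))) := by ring_nf

lemma mom_mid (f : Measure ℝ) (A a M N : ℝ) (hA : 0 ≤ A) (hM : 0 < M) (n : ℕ)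
    (hN : N ≤ M * 2 ^ (n + 1))
    (hf : ∀ u : ℝ, 0 < u → f (Icc (u / 2) u) ≤ ENNReal.ofReal (A * u ^ (-a))) :
    ∫⁻ y in Ioc M N, ENNReal.ofReal (y ^ a) ∂f ≤
      ENNReal.ofReal (max 1 ((2:ℝ) ^ a) * max 1 ((2:ℝ) ^ (-a)) * A * ((n : ℝ) + 1)) := by
  set c1 := max 1 ((2:ℝ) ^ a) with hc1
  set c2 := max 1 ((2:ℝ) ^ (-a)) with hc2'
  have hc10 : 0 ≤ c1 := le_trans zero_le_one (le_max_left _ _)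
  have hc20 : 0 ≤ c2 := le_trans zero_le_one (le_max_left _ _)
  have hblk : ∀ k : ℕ, ∫⁻ y in Ioc (M * 2 ^ k) (M * 2 ^ (k+1)), ENNReal.ofReal (y ^ a) ∂f ≤
      ENNReal.ofReal (c1 * c2 * A) := by
    intro k
    set u := M * 2 ^ k with hu'
    have hu : 0 < u := by positivity
    have h2u : M * 2 ^ (k+1) = 2 * u := by rw [hu', pow_succ]; ring
    calc ∫⁻ y in Ioc (M * 2 ^ k) (M * 2 ^ (k+1)), ENNReal.ofReal (y ^ a) ∂f
        ≤ ∫⁻ _ in Ioc u (2 * u), ENNReal.ofReal (c1 * u ^ a) ∂f := by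
          rw [h2u]
          exact setLIntegral_mono measurable_const
            (fun y hy => ENNReal.ofReal_le_ofReal (rpow_le_blk_high hu hy.1 hy.2 a))
      _ = ENNReal.ofReal (c1 * u ^ a) * f (Ioc u (2 * u)) := setLIntegral_const _ _
      _ ≤ ENNReal.ofReal (c1 * u ^ a) * ENNReal.ofReal (A * (2 * u) ^ (-a)) := by
          gcongr
          refine le_trans (measure_mono ?_) (hf (2 * u) (by positivity))
          rw [show (2 * u) / 2 = u by ring]
          exact Ioc_subset_Icc_self
      _ = ENNReal.ofReal (c1 * u ^ a * (A * (2 * u) ^ (-a))) := by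
          rw [← ENNReal.ofReal_mul (by positivity)]
      _ ≤ ENNReal.ofReal (c1 * c2 * A) := by
          apply ENNReal.ofReal_le_ofReal
          have e0 : (2 * u) ^ (-a) = (2:ℝ) ^ (-a) * u ^ (-a) :=
            Real.mul_rpow (by norm_num) hu.le
          have e1 : u ^ a * u ^ (-a) = 1 := by
            rw [← Real.rpow_add hu]; simp
          calc c1 * u ^ a * (A * (2 * u) ^ (-a))
              = c1 * (2:ℝ) ^ (-a) * A * (u ^ a * u ^ (-a)) := by rw [e0]; ring
            _ = c1 * (2:ℝ) ^ (-a) * A := by rw [e1]; ring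
            _ ≤ c1 * c2 * A := by
                apply mul_le_mul_of_nonneg_right _ hA
                exact mul_le_mul_of_nonneg_left (le_max_right _ _) hc10
  calc ∫⁻ y in Ioc M N, ENNReal.ofReal (y ^ a) ∂f
      ≤ ∫⁻ y in ⋃ k : Fin (n+1), Ioc (M * 2 ^ (k:ℕ)) (M * 2 ^ ((k:ℕ)+1)),
          ENNReal.ofReal (y ^ a) ∂f := by
        apply lintegral_mono_set
        intro y hy
        obtain ⟨k, h1, h2⟩ := dyadic_up hM hy.1
        have hk : k < n + 1 := by
          by_contra hcon
          push_neg at hcon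
          have : M * 2 ^ (n+1) ≤ M * 2 ^ k := by
            apply mul_le_mul_of_nonneg_left _ hM.le
            exact pow_le_pow_right₀ (by norm_num) hcon
          linarith [hy.2, h1]
        exact mem_iUnion.mpr ⟨⟨k, hk⟩, h1, h2⟩
    _ ≤ ∑' k : Fin (n+1), ∫⁻ y in Ioc (M * 2 ^ (k:ℕ)) (M * 2 ^ ((k:ℕ)+1)),
          ENNReal.ofReal (y ^ a) ∂f := lintegral_iUnion_le _ _
    _ ≤ ∑' _ : Fin (n+1), ENNReal.ofReal (c1 * c2 * A) :=
        ENNReal.tsum_le_tsum (fun k => hblk k)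
    _ = (n + 1 : ℕ) * ENNReal.ofReal (c1 * c2 * A) := by
        rw [tsum_fintype]
        simp [Finset.sum_const, Finset.card_univ]
    _ = ENNReal.ofReal (c1 * c2 * A * ((n : ℝ) + 1)) := by
        rw [ENNReal.ofReal_mul (show (0:ℝ) ≤ c1 * c2 * A by positivity),
          show ((n + 1 : ℕ) : ℝ≥0∞) = ENNReal.ofReal ((n : ℝ) + 1) by
            rw [← ENNReal.ofReal_natCast]; norm_num]
        ring

noncomputable def CL (a p : ℝ) : ℝ := max 1 ((2:ℝ) ^ (-p)) * (1 - (2:ℝ) ^ (a - p))⁻¹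
noncomputable def CH (a p : ℝ) : ℝ :=
  max 1 ((2:ℝ) ^ p) * (2:ℝ) ^ (-a) * (1 - (2:ℝ) ^ (p - a))⁻¹
noncomputable def CM (a : ℝ) : ℝ := max 1 ((2:ℝ) ^ a) * max 1 ((2:ℝ) ^ (-a))

lemma CL_nonneg (a p : ℝ) (h : a < p) : 0 ≤ CL a p := by
  apply mul_nonneg (le_trans zero_le_one (le_max_left _ _))
  have : (2:ℝ) ^ (a - p) < 1 := Real.rpow_lt_one_of_one_lt_of_neg (by norm_num) (by linarith)
  exact inv_nonneg.mpr (by linarith)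

lemma CH_nonneg (a p : ℝ) (h : p < a) : 0 ≤ CH a p := by
  apply mul_nonneg
  · apply mul_nonneg (le_trans zero_le_one (le_max_left _ _)); positivity
  · have : (2:ℝ) ^ (p - a) < 1 := Real.rpow_lt_one_of_one_lt_of_neg (by norm_num) (by linarith)
    exact inv_nonneg.mpr (by linarith)

lemma CM_nonneg (a : ℝ) : 0 ≤ CM a :=
  mul_nonneg (le_trans zero_le_one (le_max_left _ _)) (le_trans zero_le_one (le_max_left _ _))

lemma lint_two {α : Type*} [MeasurableSpace α] (μ : Measure α) (c d : ℝ≥0∞)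
    {g1 g2 : α → ℝ≥0∞} (h1 : Measurable g1) (h2 : Measurable g2) :
    ∫⁻ x, (c * g1 x + d * g2 x) ∂μ = c * ∫⁻ x, g1 x ∂μ + d * ∫⁻ x, g2 x ∂μ := by
  rw [lintegral_add_left (h1.const_mul c), lintegral_const_mul c h1, lintegral_const_mul d h2]

set_option maxHeartbeats 1000000 in
lemma main_bound (K : ℝ → ℝ → ℝ) (γ lam c2 : ℝ) (hc2 : 0 < c2)
    (hub : ∀ x y : ℝ, 0 < x → 0 < y →
      K x y ≤ c2 * (x ^ (γ + lam) * y ^ (-lam) + y ^ (γ + lam) * x ^ (-lam)))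
    (hgl1 : -1 < γ + 2 * lam) (hgl2 : γ + 2 * lam < 1)
    (A : ℝ) (f : Measure ℝ) [SigmaFinite f] (hA : 0 ≤ A)
    (hf : ∀ u : ℝ, 0 < u → f (Icc (u / 2) u) ≤ ENNReal.ofReal (A * u ^ (-((γ + 1) / 2))))
    (δ z : ℝ) (hδ0 : 0 < δ) (hδ : δ ≤ 1 / 2) (hz : 0 < z) (n : ℕ)
    (hN : 2 / δ ≤ 2 ^ (n + 1)) :
    (∫⁻ p : ℝ × ℝ in {p : ℝ × ℝ | 0 < p.1 ∧ p.1 ≤ z ∧ z - p.1 < p.2 ∧ p.1 / δ < p.2},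
      ENNReal.ofReal (K p.1 p.2 * p.1) ∂(f.prod f)) ≤
    ENNReal.ofReal (
      c2 * CM ((γ+1)/2) * (CL ((γ+1)/2) (γ+lam+1) * δ ^ ((γ+lam+1) - (γ+1)/2)
          + CL ((γ+1)/2) (1-lam) * δ ^ ((1-lam) - (γ+1)/2)) * A ^ 2 * ((n:ℝ) + 1)
      + c2 * (CL ((γ+1)/2) (γ+lam+1) * CH ((γ+1)/2) (-lam) * δ ^ ((γ+lam+1) - (γ+1)/2)
          + CL ((γ+1)/2) (1-lam) * CH ((γ+1)/2) (γ+lam) * δ ^ ((1-lam) - (γ+1)/2)) * A ^ 2) := by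
  set a : ℝ := (γ+1)/2 with ha
  set p1 : ℝ := γ+lam+1 with hp1
  set p2 : ℝ := 1-lam with hp2
  have hap1 : a < p1 := by rw [ha, hp1]; linarith
  have hap2 : a < p2 := by rw [ha, hp2]; linarith
  have hq1 : 0 < p1 - a := by linarith
  have hq2 : 0 < p2 - a := by linarith
  have hla : -lam < a := by rw [ha]; linarith
  have hgla : γ + lam < a := by rw [ha]; linarith
  have hCL1 : 0 ≤ CL a p1 := CL_nonneg _ _ hap1
  have hCL2 : 0 ≤ CL a p2 := CL_nonneg _ _ hap2
  have hCH1 : 0 ≤ CH a (-lam) := CH_nonneg _ _ hla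
  have hCH2 : 0 ≤ CH a (γ+lam) := CH_nonneg _ _ hgla
  have hCM : 0 ≤ CM a := CM_nonneg a
  -- sets
  set S : Set (ℝ × ℝ) := {p : ℝ × ℝ | 0 < p.1 ∧ p.1 ≤ z ∧ z - p.1 < p.2 ∧ p.1 / δ < p.2}
    with hS
  set T : Set (ℝ × ℝ) := {p : ℝ × ℝ | z/2 < p.2 ∧ p.1 ∈ Ioc 0 (min (δ * p.2) z)} with hT
  have hSm : MeasurableSet S := by
    have : S = {p : ℝ × ℝ | 0 < p.1} ∩ ({p | p.1 ≤ z} ∩ ({p | z - p.1 < p.2} ∩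
        {p | p.1 / δ < p.2})) := rfl
    rw [this]
    exact (measurableSet_lt measurable_const measurable_fst).inter
      ((measurableSet_le measurable_fst measurable_const).inter
        ((measurableSet_lt (measurable_const.sub measurable_fst) measurable_snd).inter
          (measurableSet_lt (measurable_fst.div_const δ) measurable_snd)))
  have hTm : MeasurableSet T := by
    have : T = {p : ℝ × ℝ | z/2 < p.2} ∩ ({p | 0 < p.1} ∩
        {p | p.1 ≤ min (δ * p.2) z}) := rfl
    rw [this]
    exact (measurableSet_lt measurable_const measurable_snd).inter
      ((measurableSet_lt measurable_const measurable_fst).inter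
        (measurableSet_le measurable_fst ((measurable_snd.const_mul δ).min measurable_const)))
  -- the dominating kernel
  set Hb : ℝ × ℝ → ℝ≥0∞ := fun p =>
    ENNReal.ofReal ((c2 * p.2 ^ (-lam)) * p.1 ^ p1 + (c2 * p.2 ^ (γ+lam)) * p.1 ^ p2) with hHb
  have hHbm : Measurable Hb := by
    apply Measurable.ennreal_ofReal
    exact ((measurable_const.mul (measurable_snd.pow measurable_const)).mul
        (measurable_fst.pow measurable_const)).add
      ((measurable_const.mul (measurable_snd.pow measurable_const)).mul
        (measurable_fst.pow measurable_const))
  have hmx1 : Measurable fun x : ℝ => ENNReal.ofReal (x ^ p1) :=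
    (measurable_id.pow measurable_const).ennreal_ofReal
  have hmx2 : Measurable fun x : ℝ => ENNReal.ofReal (x ^ p2) :=
    (measurable_id.pow measurable_const).ennreal_ofReal
  -- S ⊆ T and pointwise bound
  have hsub : S ⊆ T := by
    rintro ⟨x, y⟩ ⟨hx, hxz, hzxy, hxdy⟩
    have hxy : x < δ * y := by
      have := (div_lt_iff₀ hδ0).mp hxdy; linarith [this]
    constructor
    · rcases le_or_gt x (z/2) with hc | hc
      · simp only []; linarith
      · have h2x : 2 * x ≤ x / δ := by
          rw [le_div_iff₀ hδ0]; nlinarith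
        simp only []; linarith
    · exact ⟨hx, le_min hxy.le hxz⟩
  have hpoint : ∀ p : ℝ × ℝ, p ∈ S →
      ENNReal.ofReal (K p.1 p.2 * p.1) ≤ Hb p := by
    rintro ⟨x, y⟩ hp
    have hx : 0 < x := hp.1
    have hy : 0 < y := by
      have := (hsub hp).1; simp only [] at this; linarith [hz]
    apply ENNReal.ofReal_le_ofReal
    have h := mul_le_mul_of_nonneg_right (hub x y hx hy) hx.le
    have e1 : x ^ p1 = x ^ (γ+lam) * x := by
      rw [hp1, Real.rpow_add hx, Real.rpow_one]
    have e2 : x ^ p2 = x ^ (-lam) * x := by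
      rw [hp2, show (1:ℝ)-lam = -lam+1 by ring, Real.rpow_add hx, Real.rpow_one]
    calc K x y * x ≤ c2 * (x ^ (γ+lam) * y ^ (-lam) + y ^ (γ+lam) * x ^ (-lam)) * x := h
      _ = (c2 * y ^ (-lam)) * (x ^ (γ+lam) * x) + (c2 * y ^ (γ+lam)) * (x ^ (-lam) * x) := by
          ring
      _ = (c2 * y ^ (-lam)) * x ^ p1 + (c2 * y ^ (γ+lam)) * x ^ p2 := by rw [← e1, ← e2]
  -- the y-section bound function
  have hzd2 : z/2 ≤ z/δ := by
    rw [div_le_div_iff₀ (by norm_num) hδ0]; nlinarith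
  have hzd0 : 0 < z/δ := by positivity
  calc ∫⁻ p in S, ENNReal.ofReal (K p.1 p.2 * p.1) ∂(f.prod f)
      ≤ ∫⁻ p in T, Hb p ∂(f.prod f) := by
        rw [← lintegral_indicator hSm, ← lintegral_indicator hTm]
        apply lintegral_mono
        intro p
        by_cases hp : p ∈ S
        · rw [Set.indicator_of_mem hp, Set.indicator_of_mem (hsub hp)]
          exact hpoint p hp
        · rw [Set.indicator_of_notMem hp]; exact zero_le
    _ = ∫⁻ y, ∫⁻ x, T.indicator Hb (x, y) ∂f ∂f := by
        rw [← lintegral_indicator hTm]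
        exact lintegral_prod_symm _ (hHbm.indicator hTm).aemeasurable
    _ = ∫⁻ y in Ioi (z/2), (∫⁻ x in Ioc 0 (min (δ*y) z), Hb (x, y) ∂f) ∂f := by
        rw [← lintegral_indicator measurableSet_Ioi]
        congr 1; funext y
        by_cases hy : y ∈ Ioi (z/2)
        · rw [Set.indicator_of_mem hy, ← lintegral_indicator measurableSet_Ioc]
          congr 1; funext x
          by_cases hx : x ∈ Ioc 0 (min (δ*y) z)
          · rw [Set.indicator_of_mem hx,
              Set.indicator_of_mem (show (x,y) ∈ T from ⟨hy, hx⟩)]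
          · rw [Set.indicator_of_notMem hx,
              Set.indicator_of_notMem (show (x,y) ∉ T from fun hc => hx hc.2)]
        · rw [Set.indicator_of_notMem hy]
          have h0 : ∀ x : ℝ, T.indicator Hb (x, y) = 0 := fun x =>
            Set.indicator_of_notMem (fun hc => hy hc.1) _
          simp only [h0, lintegral_zero]
    _ ≤ ∫⁻ y in Ioi (z/2), ENNReal.ofReal (
          c2 * CL a p1 * A * (y ^ (-lam) * (min (δ*y) z) ^ (p1 - a))
          + c2 * CL a p2 * A * (y ^ (γ+lam) * (min (δ*y) z) ^ (p2 - a))) ∂f := by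
        apply setLIntegral_mono
        · apply Measurable.ennreal_ofReal
          apply Measurable.add
          · exact measurable_const.mul ((measurable_id.pow measurable_const).mul
              (((measurable_id.const_mul δ).min measurable_const).pow measurable_const))
          · exact measurable_const.mul ((measurable_id.pow measurable_const).mul
              (((measurable_id.const_mul δ).min measurable_const).pow measurable_const))
        intro y hy
        have hy0 : 0 < y := lt_trans (by positivity) hy
        have hm0 : 0 < min (δ*y) z := lt_min (by positivity) hz
        calc ∫⁻ x in Ioc 0 (min (δ*y) z), Hb (x, y) ∂f
            ≤ ∫⁻ x in Ioc 0 (min (δ*y) z), (ENNReal.ofReal (c2 * y ^ (-lam)) *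
                ENNReal.ofReal (x ^ p1) + ENNReal.ofReal (c2 * y ^ (γ+lam)) *
                ENNReal.ofReal (x ^ p2)) ∂f := by
              apply lintegral_mono
              intro x
              refine le_trans ENNReal.ofReal_add_le
                (add_le_add (le_of_eq (ENNReal.ofReal_mul (by positivity)))
                  (le_of_eq (ENNReal.ofReal_mul (by positivity))))
          _ = ENNReal.ofReal (c2 * y ^ (-lam)) *
                (∫⁻ x in Ioc 0 (min (δ*y) z), ENNReal.ofReal (x ^ p1) ∂f)
              + ENNReal.ofReal (c2 * y ^ (γ+lam)) *
                (∫⁻ x in Ioc 0 (min (δ*y) z), ENNReal.ofReal (x ^ p2) ∂f) :=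
              lint_two _ _ _ hmx1 hmx2
          _ ≤ ENNReal.ofReal (c2 * y ^ (-lam)) *
                ENNReal.ofReal (CL a p1 * (A * (min (δ*y) z) ^ (p1 - a)))
              + ENNReal.ofReal (c2 * y ^ (γ+lam)) *
                ENNReal.ofReal (CL a p2 * (A * (min (δ*y) z) ^ (p2 - a))) := by
              gcongr
              · exact mom_low f A a p1 _ hA hap1 hm0 hf
              · exact mom_low f A a p2 _ hA hap2 hm0 hf
          _ = ENNReal.ofReal (
                c2 * CL a p1 * A * (y ^ (-lam) * (min (δ*y) z) ^ (p1 - a))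
                + c2 * CL a p2 * A * (y ^ (γ+lam) * (min (δ*y) z) ^ (p2 - a))) := by
              rw [← ENNReal.ofReal_mul (show (0:ℝ) ≤ c2 * y ^ (-lam) by positivity),
                ← ENNReal.ofReal_mul (show (0:ℝ) ≤ c2 * y ^ (γ+lam) by positivity),
                ← ENNReal.ofReal_add (mul_nonneg (by positivity)
                    (mul_nonneg hCL1 (mul_nonneg hA (Real.rpow_nonneg (le_of_lt hm0) _))))
                  (mul_nonneg (by positivity)
                    (mul_nonneg hCL2 (mul_nonneg hA (Real.rpow_nonneg (le_of_lt hm0) _))))]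
              congr 1
              ring
    _ ≤ (∫⁻ y in Ioc (z/2) (z/δ), ENNReal.ofReal (
          c2 * CL a p1 * A * (y ^ (-lam) * (min (δ*y) z) ^ (p1 - a))
          + c2 * CL a p2 * A * (y ^ (γ+lam) * (min (δ*y) z) ^ (p2 - a))) ∂f)
        + ∫⁻ y in Ioi (z/δ), ENNReal.ofReal (
          c2 * CL a p1 * A * (y ^ (-lam) * (min (δ*y) z) ^ (p1 - a))
          + c2 * CL a p2 * A * (y ^ (γ+lam) * (min (δ*y) z) ^ (p2 - a))) ∂f := by
        rw [show Ioi (z/2) = Ioc (z/2) (z/δ) ∪ Ioi (z/δ) from (Ioc_union_Ioi_eq_Ioi hzd2).symm]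
        exact lintegral_union_le _ _ _
    _ ≤ ENNReal.ofReal ((c2 * CL a p1 * A * δ ^ (p1 - a) + c2 * CL a p2 * A * δ ^ (p2 - a)) *
          (CM a * A * ((n:ℝ) + 1)))
        + ENNReal.ofReal (c2 * CL a p1 * A * z ^ (p1 - a) * (CH a (-lam) * (A * (z/δ) ^ (-lam - a)))
          + c2 * CL a p2 * A * z ^ (p2 - a) * (CH a (γ+lam) * (A * (z/δ) ^ (γ+lam - a)))) := by
        apply add_le_add
        -- middle part
        · have hB1 : 0 ≤ c2 * CL a p1 * A * δ ^ (p1 - a) + c2 * CL a p2 * A * δ ^ (p2 - a) :=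
            add_nonneg
              (mul_nonneg (mul_nonneg (mul_nonneg hc2.le hCL1) hA) (Real.rpow_nonneg hδ0.le _))
              (mul_nonneg (mul_nonneg (mul_nonneg hc2.le hCL2) hA) (Real.rpow_nonneg hδ0.le _))
          calc ∫⁻ y in Ioc (z/2) (z/δ), ENNReal.ofReal (
                  c2 * CL a p1 * A * (y ^ (-lam) * (min (δ*y) z) ^ (p1 - a))
                  + c2 * CL a p2 * A * (y ^ (γ+lam) * (min (δ*y) z) ^ (p2 - a))) ∂f
              ≤ ∫⁻ y in Ioc (z/2) (z/δ), ENNReal.ofReal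
                  ((c2 * CL a p1 * A * δ ^ (p1 - a) + c2 * CL a p2 * A * δ ^ (p2 - a))) *
                  ENNReal.ofReal (y ^ a) ∂f := by
                apply setLIntegral_mono
                · exact (measurable_const.mul ((measurable_id.pow measurable_const).ennreal_ofReal))
                intro y hy
                have hy0 : 0 < y := lt_trans (by positivity) hy.1
                have hm0 : 0 < min (δ*y) z := lt_min (by positivity) hz
                rw [← ENNReal.ofReal_mul hB1]
                apply ENNReal.ofReal_le_ofReal
                have hmd : min (δ*y) z ≤ δ * y := min_le_left _ _
                have b1 : (min (δ*y) z) ^ (p1 - a) ≤ δ ^ (p1 - a) * y ^ (p1 - a) := by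
                  rw [← Real.mul_rpow hδ0.le hy0.le]
                  exact Real.rpow_le_rpow hm0.le hmd hq1.le
                have b2 : (min (δ*y) z) ^ (p2 - a) ≤ δ ^ (p2 - a) * y ^ (p2 - a) := by
                  rw [← Real.mul_rpow hδ0.le hy0.le]
                  exact Real.rpow_le_rpow hm0.le hmd hq2.le
                have e1 : y ^ (-lam) * y ^ (p1 - a) = y ^ a := by
                  rw [← Real.rpow_add hy0]; congr 1; rw [hp1, ha]; ring
                have e2 : y ^ (γ+lam) * y ^ (p2 - a) = y ^ a := by
                  rw [← Real.rpow_add hy0]; congr 1; rw [hp2, ha]; ring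
                have c1n : (0:ℝ) ≤ c2 * CL a p1 * A * y ^ (-lam) :=
                  mul_nonneg (mul_nonneg (mul_nonneg hc2.le hCL1) hA) (Real.rpow_nonneg hy0.le _)
                have c2n : (0:ℝ) ≤ c2 * CL a p2 * A * y ^ (γ+lam) :=
                  mul_nonneg (mul_nonneg (mul_nonneg hc2.le hCL2) hA) (Real.rpow_nonneg hy0.le _)
                calc c2 * CL a p1 * A * (y ^ (-lam) * (min (δ*y) z) ^ (p1 - a))
                      + c2 * CL a p2 * A * (y ^ (γ+lam) * (min (δ*y) z) ^ (p2 - a))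
                    ≤ c2 * CL a p1 * A * (y ^ (-lam) * (δ ^ (p1 - a) * y ^ (p1 - a)))
                      + c2 * CL a p2 * A * (y ^ (γ+lam) * (δ ^ (p2 - a) * y ^ (p2 - a))) := by
                      apply add_le_add
                      · rw [show c2 * CL a p1 * A * (y ^ (-lam) * (min (δ*y) z) ^ (p1 - a))
                            = (c2 * CL a p1 * A * y ^ (-lam)) * (min (δ*y) z) ^ (p1 - a) by ring,
                          show c2 * CL a p1 * A * (y ^ (-lam) * (δ ^ (p1 - a) * y ^ (p1 - a)))
                            = (c2 * CL a p1 * A * y ^ (-lam)) * (δ ^ (p1 - a) * y ^ (p1 - a)) by ring]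
                        exact mul_le_mul_of_nonneg_left b1 c1n
                      · rw [show c2 * CL a p2 * A * (y ^ (γ+lam) * (min (δ*y) z) ^ (p2 - a))
                            = (c2 * CL a p2 * A * y ^ (γ+lam)) * (min (δ*y) z) ^ (p2 - a) by ring,
                          show c2 * CL a p2 * A * (y ^ (γ+lam) * (δ ^ (p2 - a) * y ^ (p2 - a)))
                            = (c2 * CL a p2 * A * y ^ (γ+lam)) * (δ ^ (p2 - a) * y ^ (p2 - a)) by ring]
                        exact mul_le_mul_of_nonneg_left b2 c2n
                  _ = (c2 * CL a p1 * A * δ ^ (p1 - a) + c2 * CL a p2 * A * δ ^ (p2 - a)) * y ^ a := by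
                      rw [show y ^ (-lam) * (δ ^ (p1 - a) * y ^ (p1 - a))
                          = δ ^ (p1 - a) * (y ^ (-lam) * y ^ (p1 - a)) by ring,
                        show y ^ (γ+lam) * (δ ^ (p2 - a) * y ^ (p2 - a))
                          = δ ^ (p2 - a) * (y ^ (γ+lam) * y ^ (p2 - a)) by ring, e1, e2]
                      ring
            _ = ENNReal.ofReal (c2 * CL a p1 * A * δ ^ (p1 - a) + c2 * CL a p2 * A * δ ^ (p2 - a)) *
                  ∫⁻ y in Ioc (z/2) (z/δ), ENNReal.ofReal (y ^ a) ∂f :=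
                lintegral_const_mul _ ((measurable_id.pow measurable_const).ennreal_ofReal)
            _ ≤ ENNReal.ofReal (c2 * CL a p1 * A * δ ^ (p1 - a) + c2 * CL a p2 * A * δ ^ (p2 - a)) *
                  ENNReal.ofReal (CM a * A * ((n:ℝ) + 1)) := by
                gcongr
                have hNz : z/δ ≤ (z/2) * 2 ^ (n+1) := by
                  have : z/δ = (z/2) * (2/δ) := by field_simp
                  rw [this]
                  exact mul_le_mul_of_nonneg_left hN (by positivity)
                exact mom_mid f A a (z/2) (z/δ) hA (by positivity) n hNz hf
            _ = ENNReal.ofReal ((c2 * CL a p1 * A * δ ^ (p1 - a) + c2 * CL a p2 * A * δ ^ (p2 - a)) *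
                  (CM a * A * ((n:ℝ) + 1))) := by
                rw [← ENNReal.ofReal_mul hB1]
        -- tail part
        · calc ∫⁻ y in Ioi (z/δ), ENNReal.ofReal (
                  c2 * CL a p1 * A * (y ^ (-lam) * (min (δ*y) z) ^ (p1 - a))
                  + c2 * CL a p2 * A * (y ^ (γ+lam) * (min (δ*y) z) ^ (p2 - a))) ∂f
              ≤ ∫⁻ y in Ioi (z/δ), (ENNReal.ofReal (c2 * CL a p1 * A * z ^ (p1 - a)) *
                  ENNReal.ofReal (y ^ (-lam)) + ENNReal.ofReal (c2 * CL a p2 * A * z ^ (p2 - a)) *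
                  ENNReal.ofReal (y ^ (γ+lam))) ∂f := by
                apply setLIntegral_mono
                · exact (measurable_const.mul ((measurable_id.pow measurable_const).ennreal_ofReal)).add
                    (measurable_const.mul ((measurable_id.pow measurable_const).ennreal_ofReal))
                intro y hy
                have hy0 : 0 < y := lt_trans hzd0 hy
                have hm0 : 0 < min (δ*y) z := lt_min (by positivity) hz
                have w1 : (0:ℝ) ≤ c2 * CL a p1 * A * z ^ (p1 - a) :=
                  mul_nonneg (mul_nonneg (mul_nonneg hc2.le hCL1) hA) (Real.rpow_nonneg hz.le _)
                have w2 : (0:ℝ) ≤ c2 * CL a p2 * A * z ^ (p2 - a) :=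
                  mul_nonneg (mul_nonneg (mul_nonneg hc2.le hCL2) hA) (Real.rpow_nonneg hz.le _)
                have key : c2 * CL a p1 * A * (y ^ (-lam) * (min (δ*y) z) ^ (p1 - a))
                    + c2 * CL a p2 * A * (y ^ (γ+lam) * (min (δ*y) z) ^ (p2 - a))
                    ≤ c2 * CL a p1 * A * z ^ (p1 - a) * y ^ (-lam)
                      + c2 * CL a p2 * A * z ^ (p2 - a) * y ^ (γ+lam) := by
                  have hmz : min (δ*y) z ≤ z := min_le_right _ _
                  have b1 : (min (δ*y) z) ^ (p1 - a) ≤ z ^ (p1 - a) :=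
                    Real.rpow_le_rpow hm0.le hmz hq1.le
                  have b2 : (min (δ*y) z) ^ (p2 - a) ≤ z ^ (p2 - a) :=
                    Real.rpow_le_rpow hm0.le hmz hq2.le
                  have c1n : (0:ℝ) ≤ c2 * CL a p1 * A * y ^ (-lam) :=
                    mul_nonneg (mul_nonneg (mul_nonneg hc2.le hCL1) hA) (Real.rpow_nonneg hy0.le _)
                  have c2n : (0:ℝ) ≤ c2 * CL a p2 * A * y ^ (γ+lam) :=
                    mul_nonneg (mul_nonneg (mul_nonneg hc2.le hCL2) hA) (Real.rpow_nonneg hy0.le _)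
                  have r1 := mul_le_mul_of_nonneg_left b1 c1n
                  have r2 := mul_le_mul_of_nonneg_left b2 c2n
                  calc c2 * CL a p1 * A * (y ^ (-lam) * (min (δ*y) z) ^ (p1 - a))
                        + c2 * CL a p2 * A * (y ^ (γ+lam) * (min (δ*y) z) ^ (p2 - a))
                      = c2 * CL a p1 * A * y ^ (-lam) * (min (δ*y) z) ^ (p1 - a)
                        + c2 * CL a p2 * A * y ^ (γ+lam) * (min (δ*y) z) ^ (p2 - a) := by ring
                    _ ≤ c2 * CL a p1 * A * y ^ (-lam) * z ^ (p1 - a)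
                        + c2 * CL a p2 * A * y ^ (γ+lam) * z ^ (p2 - a) := add_le_add r1 r2
                    _ = c2 * CL a p1 * A * z ^ (p1 - a) * y ^ (-lam)
                        + c2 * CL a p2 * A * z ^ (p2 - a) * y ^ (γ+lam) := by ring
                calc ENNReal.ofReal (c2 * CL a p1 * A * (y ^ (-lam) * (min (δ*y) z) ^ (p1 - a))
                      + c2 * CL a p2 * A * (y ^ (γ+lam) * (min (δ*y) z) ^ (p2 - a)))
                    ≤ ENNReal.ofReal (c2 * CL a p1 * A * z ^ (p1 - a) * y ^ (-lam)
                      + c2 * CL a p2 * A * z ^ (p2 - a) * y ^ (γ+lam)) :=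
                      ENNReal.ofReal_le_ofReal key
                  _ ≤ ENNReal.ofReal (c2 * CL a p1 * A * z ^ (p1 - a) * y ^ (-lam))
                      + ENNReal.ofReal (c2 * CL a p2 * A * z ^ (p2 - a) * y ^ (γ+lam)) :=
                      ENNReal.ofReal_add_le
                  _ = ENNReal.ofReal (c2 * CL a p1 * A * z ^ (p1 - a)) * ENNReal.ofReal (y ^ (-lam))
                      + ENNReal.ofReal (c2 * CL a p2 * A * z ^ (p2 - a)) *
                        ENNReal.ofReal (y ^ (γ+lam)) := by
                      rw [ENNReal.ofReal_mul w1, ENNReal.ofReal_mul w2]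
          _ = ENNReal.ofReal (c2 * CL a p1 * A * z ^ (p1 - a)) *
                (∫⁻ y in Ioi (z/δ), ENNReal.ofReal (y ^ (-lam)) ∂f)
              + ENNReal.ofReal (c2 * CL a p2 * A * z ^ (p2 - a)) *
                (∫⁻ y in Ioi (z/δ), ENNReal.ofReal (y ^ (γ+lam)) ∂f) :=
              lint_two _ _ _ ((measurable_id.pow measurable_const).ennreal_ofReal)
                ((measurable_id.pow measurable_const).ennreal_ofReal)
          _ ≤ ENNReal.ofReal (c2 * CL a p1 * A * z ^ (p1 - a)) *
                ENNReal.ofReal (CH a (-lam) * (A * (z/δ) ^ (-lam - a)))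
              + ENNReal.ofReal (c2 * CL a p2 * A * z ^ (p2 - a)) *
                ENNReal.ofReal (CH a (γ+lam) * (A * (z/δ) ^ (γ+lam - a))) := by
              gcongr
              · exact mom_high f A a (-lam) _ hA hla hzd0 hf
              · exact mom_high f A a (γ+lam) _ hA hgla hzd0 hf
          _ = ENNReal.ofReal (c2 * CL a p1 * A * z ^ (p1 - a) * (CH a (-lam) * (A * (z/δ) ^ (-lam - a)))
              + c2 * CL a p2 * A * z ^ (p2 - a) * (CH a (γ+lam) * (A * (z/δ) ^ (γ+lam - a)))) := by
              have w1 : (0:ℝ) ≤ c2 * CL a p1 * A * z ^ (p1 - a) :=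
                mul_nonneg (mul_nonneg (mul_nonneg hc2.le hCL1) hA) (Real.rpow_nonneg hz.le _)
              have w2 : (0:ℝ) ≤ c2 * CL a p2 * A * z ^ (p2 - a) :=
                mul_nonneg (mul_nonneg (mul_nonneg hc2.le hCL2) hA) (Real.rpow_nonneg hz.le _)
              rw [← ENNReal.ofReal_mul w1, ← ENNReal.ofReal_mul w2,
                ← ENNReal.ofReal_add (mul_nonneg w1 (mul_nonneg hCH1
                    (mul_nonneg hA (Real.rpow_nonneg hzd0.le _))))
                  (mul_nonneg w2 (mul_nonneg hCH2
                    (mul_nonneg hA (Real.rpow_nonneg hzd0.le _))))]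
    _ ≤ _ := by
        rw [← ENNReal.ofReal_add]
        · apply ENNReal.ofReal_le_ofReal
          apply le_of_eq
          have hzq1 : z ^ (p1 - a) * (z/δ) ^ (-lam - a) = δ ^ (p1 - a) := by
            have he : -lam - a = -(p1 - a) := by rw [hp1, ha]; ring
            rw [he, Real.rpow_neg (by positivity), Real.div_rpow hz.le hδ0.le, inv_div]
            rw [mul_div_assoc']
            exact mul_div_cancel_left₀ _ (ne_of_gt (Real.rpow_pos_of_pos hz _))
          have hzq2 : z ^ (p2 - a) * (z/δ) ^ (γ+lam - a) = δ ^ (p2 - a) := by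
            have he : γ+lam - a = -(p2 - a) := by rw [hp2, ha]; ring
            rw [he, Real.rpow_neg (by positivity), Real.div_rpow hz.le hδ0.le, inv_div]
            rw [mul_div_assoc']
            exact mul_div_cancel_left₀ _ (ne_of_gt (Real.rpow_pos_of_pos hz _))
          calc (c2 * CL a p1 * A * δ ^ (p1 - a) + c2 * CL a p2 * A * δ ^ (p2 - a)) *
                (CM a * A * ((n:ℝ) + 1))
              + (c2 * CL a p1 * A * z ^ (p1 - a) * (CH a (-lam) * (A * (z/δ) ^ (-lam - a)))
              + c2 * CL a p2 * A * z ^ (p2 - a) * (CH a (γ+lam) * (A * (z/δ) ^ (γ+lam - a))))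
              = (c2 * CL a p1 * A * δ ^ (p1 - a) + c2 * CL a p2 * A * δ ^ (p2 - a)) *
                (CM a * A * ((n:ℝ) + 1))
              + (c2 * CL a p1 * A * (z ^ (p1 - a) * (z/δ) ^ (-lam - a)) * (CH a (-lam) * A)
              + c2 * CL a p2 * A * (z ^ (p2 - a) * (z/δ) ^ (γ+lam - a)) * (CH a (γ+lam) * A)) := by
                ring
            _ = c2 * CM a * (CL a p1 * δ ^ (p1 - a) + CL a p2 * δ ^ (p2 - a)) * A ^ 2 * ((n:ℝ) + 1)
              + c2 * (CL a p1 * CH a (-lam) * δ ^ (p1 - a)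
                  + CL a p2 * CH a (γ+lam) * δ ^ (p2 - a)) * A ^ 2 := by
                rw [hzq1, hzq2]; ring
        · apply mul_nonneg
          · exact add_nonneg
              (mul_nonneg (mul_nonneg (mul_nonneg hc2.le hCL1) hA) (Real.rpow_nonneg hδ0.le _))
              (mul_nonneg (mul_nonneg (mul_nonneg hc2.le hCL2) hA) (Real.rpow_nonneg hδ0.le _))
          · exact mul_nonneg (mul_nonneg hCM hA) (by positivity)
        · apply add_nonneg
          · exact mul_nonneg
              (mul_nonneg (mul_nonneg (mul_nonneg hc2.le hCL1) hA) (Real.rpow_nonneg hz.le _))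
              (mul_nonneg hCH1 (mul_nonneg hA (Real.rpow_nonneg hzd0.le _)))
          · exact mul_nonneg
              (mul_nonneg (mul_nonneg (mul_nonneg hc2.le hCL2) hA) (Real.rpow_nonneg hz.le _))
              (mul_nonneg hCH2 (mul_nonneg hA (Real.rpow_nonneg hzd0.le _)))

noncomputable def Psi (γ lam c2 δ : ℝ) : ℝ :=
  c2 * CM ((γ+1)/2) * (CL ((γ+1)/2) (γ+lam+1) * δ ^ ((γ+lam+1) - (γ+1)/2)
      + CL ((γ+1)/2) (1-lam) * δ ^ ((1-lam) - (γ+1)/2)) * (Real.logb 2 (2/δ) + 2)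
  + c2 * (CL ((γ+1)/2) (γ+lam+1) * CH ((γ+1)/2) (-lam) * δ ^ ((γ+lam+1) - (γ+1)/2)
      + CL ((γ+1)/2) (1-lam) * CH ((γ+1)/2) (γ+lam) * δ ^ ((1-lam) - (γ+1)/2))

lemma Psi_tendsto (γ lam c2 : ℝ) (hgl1 : -1 < γ + 2*lam) (hgl2 : γ + 2*lam < 1) :
    Filter.Tendsto (fun δ => Psi γ lam c2 δ) (nhdsWithin 0 (Ioi 0)) (nhds 0) := by
  have hq1 : 0 < (γ+lam+1) - (γ+1)/2 := by linarith
  have hq2 : 0 < (1-lam) - (γ+1)/2 := by linarith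
  have base : ∀ q : ℝ, 0 < q →
      Filter.Tendsto (fun δ : ℝ => δ ^ q) (nhdsWithin 0 (Ioi 0)) (nhds 0) := by
    intro q hq
    have h := (Real.continuousAt_rpow_const 0 q (Or.inr hq.le)).tendsto
    rw [Real.zero_rpow hq.ne'] at h
    exact h.mono_left nhdsWithin_le_nhds
  have logp : ∀ q : ℝ, 0 < q →
      Filter.Tendsto (fun δ : ℝ => Real.log δ * δ ^ q) (nhdsWithin 0 (Ioi 0)) (nhds 0) :=
    fun q hq => tendsto_log_mul_rpow_nhdsGT_zero hq
  have hF : Filter.Tendsto (fun δ : ℝ =>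
      (3*c2*(CM ((γ+1)/2))*(CL ((γ+1)/2) (γ+lam+1)) + c2*(CL ((γ+1)/2) (γ+lam+1))*(CH ((γ+1)/2) (-lam))) * δ ^ ((γ+lam+1) - (γ+1)/2)
      + (3*c2*(CM ((γ+1)/2))*(CL ((γ+1)/2) (1-lam)) + c2*(CL ((γ+1)/2) (1-lam))*(CH ((γ+1)/2) (γ+lam))) * δ ^ ((1-lam) - (γ+1)/2)
      - (c2*(CM ((γ+1)/2))*(CL ((γ+1)/2) (γ+lam+1))/Real.log 2) * (Real.log δ * δ ^ ((γ+lam+1) - (γ+1)/2))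
      - (c2*(CM ((γ+1)/2))*(CL ((γ+1)/2) (1-lam))/Real.log 2) * (Real.log δ * δ ^ ((1-lam) - (γ+1)/2)))
      (nhdsWithin 0 (Ioi 0)) (nhds 0) := by
    have t1 := ((base _ hq1).const_mul (3*c2*(CM ((γ+1)/2))*(CL ((γ+1)/2) (γ+lam+1)) + c2*(CL ((γ+1)/2) (γ+lam+1))*(CH ((γ+1)/2) (-lam))))
    have t2 := ((base _ hq2).const_mul (3*c2*(CM ((γ+1)/2))*(CL ((γ+1)/2) (1-lam)) + c2*(CL ((γ+1)/2) (1-lam))*(CH ((γ+1)/2) (γ+lam))))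
    have t3 := ((logp _ hq1).const_mul (c2*(CM ((γ+1)/2))*(CL ((γ+1)/2) (γ+lam+1))/Real.log 2))
    have t4 := ((logp _ hq2).const_mul (c2*(CM ((γ+1)/2))*(CL ((γ+1)/2) (1-lam))/Real.log 2))
    have := ((t1.add t2).sub t3).sub t4
    simpa using this
  apply hF.congr'
  apply Filter.eventuallyEq_of_mem self_mem_nhdsWithin
  intro δ hδ
  have hδ0 : (0:ℝ) < δ := hδ
  have hlog2 : Real.log 2 ≠ 0 := (Real.log_pos (by norm_num)).ne'
  show _ = Psi γ lam c2 δ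
  rw [Psi, Real.logb, Real.log_div (by norm_num) hδ0.ne']
  field_simp
  ring


theorem stmt_12 (K : ℝ → ℝ → ℝ) (γ lam c2 : ℝ) (hc2 : 0 < c2)
    (hKc : ContinuousOn (fun p : ℝ × ℝ => K p.1 p.2) (Set.Ioi 0 ×ˢ Set.Ioi 0))
    (hKsym : ∀ x y : ℝ, 0 < x → 0 < y → K x y = K y x)
    (hK0 : ∀ x y : ℝ, 0 < x → 0 < y → 0 ≤ K x y)
    (hub : ∀ x y : ℝ, 0 < x → 0 < y →
      K x y ≤ c2 * (x ^ (γ + lam) * y ^ (-lam) + y ^ (γ + lam) * x ^ (-lam)))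
    (hgl : |γ + 2 * lam| < 1) :
    ∀ ε : ℝ, 0 < ε → ∃ δε : ℝ, 0 < δε ∧
      ∀ (A : ℝ) (f : Measure ℝ) [IsLocallyFiniteMeasure f], 0 ≤ A →
        (∀ z : ℝ, 0 < z →
          f (Set.Icc (z / 2) z) ≤ ENNReal.ofReal (A * z ^ (-(γ + 3) / 2) * z)) →
        ∀ δ : ℝ, 0 < δ → δ ≤ δε → ∀ z : ℝ, 0 < z →
          (∫⁻ p : ℝ × ℝ in {p : ℝ × ℝ | 0 < p.1 ∧ p.1 ≤ z ∧ z - p.1 < p.2 ∧ p.1 / δ < p.2},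
            ENNReal.ofReal (K p.1 p.2 * p.1) ∂(f.prod f)) ≤ ENNReal.ofReal (ε * A ^ 2) := by

  intro ε hε
  obtain ⟨hgl1, hgl2⟩ := abs_lt.mp hgl
  have hten := Psi_tendsto γ lam c2 hgl1 hgl2
  have hev : ∀ᶠ δ in nhdsWithin 0 (Ioi (0:ℝ)), Psi γ lam c2 δ < ε :=
    hten.eventually_lt_const hε
  obtain ⟨u, hu, husub⟩ := mem_nhdsGT_iff_exists_Ioo_subset.mp hev
  have hu0 : (0:ℝ) < u := hu
  refine ⟨min (u/2) (1/2), by positivity, ?_⟩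
  intro A f _ hA hfz δ hδ0 hδle z hz
  have hδhalf : δ ≤ 1/2 := le_trans hδle (min_le_right _ _)
  have hδu : δ < u := lt_of_le_of_lt (le_trans hδle (min_le_left _ _)) (by linarith)
  have hPsi : Psi γ lam c2 δ < ε := husub ⟨hδ0, hδu⟩
  have hf : ∀ w : ℝ, 0 < w → f (Icc (w / 2) w) ≤ ENNReal.ofReal (A * w ^ (-((γ + 1) / 2))) := by
    intro w hw
    have h := hfz w hw
    have e : A * w ^ (-(γ + 3) / 2) * w = A * w ^ (-((γ + 1) / 2)) := by
      rw [show -((γ+1)/2) = -(γ + 3) / 2 + 1 by ring, Real.rpow_add hw, Real.rpow_one]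
      ring
    rwa [e] at h
  set n : ℕ := ⌈Real.logb 2 (2/δ)⌉₊ with hn
  have h2δ1 : (1:ℝ) ≤ 2/δ := by rw [le_div_iff₀ hδ0]; linarith
  have hlogb0 : 0 ≤ Real.logb 2 (2/δ) := Real.logb_nonneg (by norm_num) h2δ1
  have hN : 2/δ ≤ 2 ^ (n+1) := by
    have h1 : Real.logb 2 (2/δ) ≤ ((n:ℝ)+1) := by
      have := Nat.le_ceil (Real.logb 2 (2/δ))
      rw [hn]; push_cast; linarith
    calc 2/δ = 2 ^ Real.logb 2 (2/δ) :=
          (Real.rpow_logb (by norm_num) (by norm_num) (by positivity)).symm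
      _ ≤ (2:ℝ) ^ ((n:ℝ)+1) := Real.rpow_le_rpow_of_exponent_le (by norm_num) h1
      _ = 2 ^ (n+1) := by
          rw [show ((n:ℝ)+1) = ((n+1 : ℕ):ℝ) by push_cast; ring, Real.rpow_natCast]
  have hb := main_bound K γ lam c2 hc2 hub hgl1 hgl2 A f hA hf δ z hδ0 hδhalf hz n hN
  refine le_trans hb (ENNReal.ofReal_le_ofReal ?_)
  have hap1 : (γ+1)/2 < γ+lam+1 := by linarith
  have hap2 : (γ+1)/2 < 1-lam := by linarith
  have hco : 0 ≤ c2 * CM ((γ+1)/2) * (CL ((γ+1)/2) (γ+lam+1) * δ ^ ((γ+lam+1) - (γ+1)/2)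
      + CL ((γ+1)/2) (1-lam) * δ ^ ((1-lam) - (γ+1)/2)) * A ^ 2 := by
    apply mul_nonneg _ (sq_nonneg A)
    apply mul_nonneg (mul_nonneg hc2.le (CM_nonneg _))
    exact add_nonneg
      (mul_nonneg (CL_nonneg _ _ hap1) (Real.rpow_nonneg hδ0.le _))
      (mul_nonneg (CL_nonneg _ _ hap2) (Real.rpow_nonneg hδ0.le _))
  have hn1 : (n:ℝ) + 1 ≤ Real.logb 2 (2/δ) + 2 := by
    have := Nat.ceil_lt_add_one hlogb0
    rw [hn]; push_cast at this ⊢; linarith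
  calc c2 * CM ((γ+1)/2) * (CL ((γ+1)/2) (γ+lam+1) * δ ^ ((γ+lam+1) - (γ+1)/2)
          + CL ((γ+1)/2) (1-lam) * δ ^ ((1-lam) - (γ+1)/2)) * A ^ 2 * ((n:ℝ) + 1)
      + c2 * (CL ((γ+1)/2) (γ+lam+1) * CH ((γ+1)/2) (-lam) * δ ^ ((γ+lam+1) - (γ+1)/2)
          + CL ((γ+1)/2) (1-lam) * CH ((γ+1)/2) (γ+lam) * δ ^ ((1-lam) - (γ+1)/2)) * A ^ 2
      ≤ c2 * CM ((γ+1)/2) * (CL ((γ+1)/2) (γ+lam+1) * δ ^ ((γ+lam+1) - (γ+1)/2)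
          + CL ((γ+1)/2) (1-lam) * δ ^ ((1-lam) - (γ+1)/2)) * A ^ 2 * (Real.logb 2 (2/δ) + 2)
      + c2 * (CL ((γ+1)/2) (γ+lam+1) * CH ((γ+1)/2) (-lam) * δ ^ ((γ+lam+1) - (γ+1)/2)
          + CL ((γ+1)/2) (1-lam) * CH ((γ+1)/2) (γ+lam) * δ ^ ((1-lam) - (γ+1)/2)) * A ^ 2 := by
        exact add_le_add_left (mul_le_mul_of_nonneg_left hn1 hco) _
    _ = Psi γ lam c2 δ * A ^ 2 := by rw [Psi]; ring
    _ ≤ ε * A ^ 2 := mul_le_mul_of_nonneg_right hPsi.le (sq_nonneg A)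
end

section
/- Let $K : (0,\infty)^2 \to [0,\infty)$ be continuous, symmetric, with $K(x,y) \le c_2(x^{\gamma+\lambda} y^{-\lambda} + y^{\gamma+\lambda} x^{-\lambda})$ and $|\gamma + 2\lambda| < 1$. Suppose $f$ is a nonnegative Radon measure on $(0,\infty)$ with $\frac{1}{z}\int_{[z/2,z]} f(dx) \le A z^{-(\gamma+3)/2}$ for all $z > 0$. Then for every $\varepsilon > 0$ there is $\delta_\varepsilon > 0$ independent of $A$ such that for all $0 < \delta \le \delta_\varepsilon$ and all $R > 0$: $\frac{1}{R}\int_R^{2R} \left(\iint_{\Omega_z \cap \{y < \delta x\}} K(x,y)\, x\, f(dx)\, f(dy)\right) dz \le \varepsilon A^2$. -/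
open MeasureTheory Set ENNReal

lemma aux_rpow_le {c x a t : ℝ} (hc : 0 < c) (ht : 1 ≤ t) (h1 : c / t ≤ x) (h2 : x ≤ c) :
    x ^ a ≤ t ^ |a| * c ^ a := by
  have ht0 : 0 < t := lt_of_lt_of_le one_pos ht
  have hx0 : 0 < x := lt_of_lt_of_le (div_pos hc ht0) h1
  rcases le_or_gt 0 a with ha | ha
  · have h3 : x ^ a ≤ c ^ a := Real.rpow_le_rpow hx0.le h2 ha
    have h4 : (1:ℝ) ≤ t ^ |a| := Real.one_le_rpow ht (abs_nonneg a)
    nlinarith [Real.rpow_nonneg hx0.le a, Real.rpow_nonneg hc.le a]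
  · have h3 : x ^ a ≤ (c / t) ^ a := Real.rpow_le_rpow_of_nonpos (div_pos hc ht0) h1 ha.le
    have h4 : (c / t) ^ a = c ^ a * t ^ (-a) := by
      rw [Real.div_rpow hc.le ht0.le, div_eq_mul_inv, ← Real.rpow_neg ht0.le]
    rw [abs_of_neg ha]
    calc x ^ a ≤ c ^ a * t ^ (-a) := h4 ▸ h3
    _ = t ^ (-a) * c ^ a := mul_comm _ _

lemma aux_gsum_pos {θ : ℝ} (hθ : 0 < θ) : (0:ℝ) < 1 - 2 ^ (-θ) := by
  have h : (2:ℝ) ^ (-θ) < 1 := by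
    rw [← Real.rpow_zero 2]
    exact Real.rpow_lt_rpow_left_iff one_lt_two |>.mpr (by linarith)
  linarith

lemma aux_dyadic (f : Measure ℝ) (A β : ℝ) (hA : 0 ≤ A)
    (hf : ∀ z : ℝ, 0 < z → f (Icc (z/2) z) ≤ ENNReal.ofReal (A * z ^ β))
    (a : ℝ) (hθ : 0 < a + β) (M : ℝ) (hM : 0 < M) :
    ∫⁻ y in Ioc 0 M, ENNReal.ofReal (y ^ a) ∂f ≤
      ENNReal.ofReal (2 ^ |a| / (1 - 2 ^ (-(a + β))) * (A * M ^ (a + β))) := by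
  set θ := a + β with hθdef
  have hr0 : (0:ℝ) < 2 ^ (-θ) := Real.rpow_pos_of_pos two_pos _
  have hr1 : (2:ℝ) ^ (-θ) < 1 := by linarith [aux_gsum_pos hθ]
  have hcov : Ioc 0 M ⊆ ⋃ k : ℕ, Ioc (M / 2 ^ (k + 1)) (M / 2 ^ k) := by
    rintro y ⟨hy0, hyM⟩
    have hex : ∃ n : ℕ, M < y * 2 ^ n := by
      obtain ⟨n, hn⟩ := pow_unbounded_of_one_lt (M / y) one_lt_two
      exact ⟨n, by rwa [div_lt_iff₀ hy0, mul_comm] at hn⟩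
    have hn0 : Nat.find hex ≠ 0 := by
      intro h
      have := Nat.find_spec hex
      rw [h] at this; simp at this; linarith
    obtain ⟨k, hk⟩ := Nat.exists_eq_succ_of_ne_zero hn0
    refine mem_iUnion.2 ⟨k, ?_, ?_⟩
    · have h1 : M < y * 2 ^ (k + 1) := by
        have := Nat.find_spec hex; rwa [hk] at this
      rw [div_lt_iff₀ (by positivity)]
      linarith
    · have h2 : ¬ (M < y * 2 ^ k) := Nat.find_min hex (hk ▸ lt_add_one k)
      push_neg at h2
      rw [le_div_iff₀ (by positivity)]
      linarith
  refine le_trans (lintegral_mono_set hcov) ?_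
  refine le_trans (lintegral_iUnion_le _ _) ?_
  have hterm : ∀ k : ℕ, ∫⁻ y in Ioc (M / 2 ^ (k+1)) (M / 2 ^ k), ENNReal.ofReal (y ^ a) ∂f ≤
      ENNReal.ofReal (2 ^ |a| * A * M ^ θ * ((2:ℝ) ^ (-θ)) ^ k) := by
    intro k
    set c : ℝ := M / 2 ^ k with hcdef
    have hc : 0 < c := by positivity
    have hstep : ∀ y ∈ Ioc (M / 2 ^ (k+1)) c, ENNReal.ofReal (y ^ a) ≤
        ENNReal.ofReal (2 ^ |a| * c ^ a) := by
      rintro y ⟨hy1, hy2⟩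
      apply ENNReal.ofReal_le_ofReal
      have hdiv : c / 2 = M / 2 ^ (k+1) := by
        rw [hcdef, pow_succ, div_div]
      exact aux_rpow_le hc one_le_two (by rw [hdiv]; exact hy1.le) hy2
    calc ∫⁻ y in Ioc (M / 2 ^ (k+1)) c, ENNReal.ofReal (y ^ a) ∂f
        ≤ ∫⁻ _ in Ioc (M / 2 ^ (k+1)) c, ENNReal.ofReal (2 ^ |a| * c ^ a) ∂f :=
          setLIntegral_mono measurable_const hstep
      _ = ENNReal.ofReal (2 ^ |a| * c ^ a) * f (Ioc (M / 2 ^ (k+1)) c) := by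
          rw [setLIntegral_const]
      _ ≤ ENNReal.ofReal (2 ^ |a| * c ^ a) * ENNReal.ofReal (A * c ^ β) := by
          gcongr
          have hsub : Ioc (M / 2 ^ (k+1)) c ⊆ Icc (c/2) c := by
            intro y hy
            have hdiv : c / 2 = M / 2 ^ (k+1) := by rw [hcdef, pow_succ, div_div]
            exact ⟨hdiv ▸ hy.1.le, hy.2⟩
          exact le_trans (measure_mono hsub) (hf c hc)
      _ ≤ ENNReal.ofReal (2 ^ |a| * A * M ^ θ * ((2:ℝ) ^ (-θ)) ^ k) := by
          rw [← ENNReal.ofReal_mul (by positivity)]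
          apply ENNReal.ofReal_le_ofReal
          apply le_of_eq
          have hca : c ^ a * c ^ β = c ^ θ := by rw [← Real.rpow_add hc]
          have hcθ : c ^ θ = M ^ θ * ((2:ℝ) ^ (-θ)) ^ k := by
            rw [hcdef, Real.div_rpow hM.le (by positivity)]
            rw [← Real.rpow_natCast (2:ℝ) k, ← Real.rpow_natCast ((2:ℝ) ^ (-θ)) k,
              ← Real.rpow_mul (by norm_num), ← Real.rpow_mul (by norm_num)]
            rw [div_eq_mul_inv, ← Real.rpow_neg (by positivity)]
            ring_nf
          calc 2 ^ |a| * c ^ a * (A * c ^ β) = 2 ^ |a| * A * (c ^ a * c ^ β) := by ring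
            _ = 2 ^ |a| * A * M ^ θ * ((2:ℝ) ^ (-θ)) ^ k := by rw [hca, hcθ]; ring
  refine le_trans (ENNReal.tsum_le_tsum hterm) ?_
  have hC : (0:ℝ) ≤ 2 ^ |a| * A * M ^ θ := by positivity
  have heq : ∀ k : ℕ, ENNReal.ofReal (2 ^ |a| * A * M ^ θ * ((2:ℝ) ^ (-θ)) ^ k) =
      ENNReal.ofReal (2 ^ |a| * A * M ^ θ) * (ENNReal.ofReal ((2:ℝ) ^ (-θ))) ^ k := by
    intro k
    rw [ENNReal.ofReal_mul hC, ENNReal.ofReal_pow hr0.le]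
  simp_rw [heq]
  rw [ENNReal.tsum_mul_left, ENNReal.tsum_geometric]
  have h1r : (1 : ENNReal) - ENNReal.ofReal ((2:ℝ) ^ (-θ)) = ENNReal.ofReal (1 - 2 ^ (-θ)) := by
    rw [ENNReal.ofReal_sub _ hr0.le, ENNReal.ofReal_one]
  rw [h1r, ← ENNReal.ofReal_inv_of_pos (by linarith), ← ENNReal.ofReal_mul hC]
  apply ENNReal.ofReal_le_ofReal
  exact le_of_eq (by rw [div_eq_mul_inv]; ring)

lemma aux_combine {c2 R δ A β b a Cy Fx : ℝ} (hR : 0 < R) (hδ : 0 < δ)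
    (hsum : b + (a + β) + β = 1) :
    c2 * 4 ^ |b| * (2*R) ^ b * (Cy * (A * (2*R*δ) ^ (a+β))) * (A * Fx * R ^ β)
      = (c2 * 4 ^ |b| * 2 ^ b * Cy * 2 ^ (a+β) * Fx) * δ ^ (a+β) * (A^2 * R) := by
  have e1 : (2*R) ^ b = (2:ℝ) ^ b * R ^ b := Real.mul_rpow (by norm_num) hR.le
  have e2 : (2*R*δ) ^ (a+β) = (2:ℝ) ^ (a+β) * R ^ (a+β) * δ ^ (a+β) := by
    rw [Real.mul_rpow (by positivity) hδ.le, Real.mul_rpow (by norm_num) hR.le]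
  have e3 : R ^ b * R ^ (a+β) * R ^ β = R := by
    rw [← Real.rpow_add hR, ← Real.rpow_add hR, hsum, Real.rpow_one]
  rw [e1, e2]
  linear_combination (c2 * 4 ^ |b| * (2:ℝ) ^ b * Cy * A^2 * (2:ℝ) ^ (a+β) * δ ^ (a+β) * Fx) * e3

set_option maxHeartbeats 2000000 in
theorem stmt_13 (K : ℝ → ℝ → ℝ) (γ lam c2 : ℝ) (hc2 : 0 < c2)
    (hKc : ContinuousOn (fun p : ℝ × ℝ => K p.1 p.2) (Set.Ioi 0 ×ˢ Set.Ioi 0))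
    (hKsym : ∀ x y : ℝ, 0 < x → 0 < y → K x y = K y x)
    (hK0 : ∀ x y : ℝ, 0 < x → 0 < y → 0 ≤ K x y)
    (hub : ∀ x y : ℝ, 0 < x → 0 < y →
      K x y ≤ c2 * (x ^ (γ + lam) * y ^ (-lam) + y ^ (γ + lam) * x ^ (-lam)))
    (hgl : |γ + 2 * lam| < 1) :
    ∀ ε : ℝ, 0 < ε → ∃ δε : ℝ, 0 < δε ∧
      ∀ (A : ℝ) (f : Measure ℝ) [IsLocallyFiniteMeasure f], 0 ≤ A →
        (∀ z : ℝ, 0 < z →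
          f (Set.Icc (z / 2) z) ≤ ENNReal.ofReal (A * z ^ (-(γ + 3) / 2) * z)) →
        ∀ δ : ℝ, 0 < δ → δ ≤ δε → ∀ R : ℝ, 0 < R →
          (∫⁻ z in Set.Icc R (2 * R),
            (∫⁻ p : ℝ × ℝ in {p : ℝ × ℝ | 0 < p.1 ∧ p.1 ≤ z ∧ z - p.1 < p.2 ∧ p.2 < δ * p.1},
              ENNReal.ofReal (K p.1 p.2 * p.1) ∂(f.prod f))) ≤
            ENNReal.ofReal (ε * A ^ 2 * R) := by
  intro ε hε
  obtain ⟨hgl1, hgl2⟩ := abs_lt.mp hgl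
  obtain ⟨β, hβ⟩ : ∃ β : ℝ, β = -(γ + 3) / 2 + 1 := ⟨_, rfl⟩
  obtain ⟨a1, ha1⟩ : ∃ a : ℝ, a = 1 - lam := ⟨_, rfl⟩
  obtain ⟨a2, ha2⟩ : ∃ a : ℝ, a = 1 + γ + lam := ⟨_, rfl⟩
  obtain ⟨b1, hb1⟩ : ∃ b : ℝ, b = γ + lam + 1 := ⟨_, rfl⟩
  obtain ⟨b2, hb2⟩ : ∃ b : ℝ, b = 1 - lam := ⟨_, rfl⟩
  have hθ1 : 0 < a1 + β := by rw [ha1, hβ]; linarith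
  have hθ2 : 0 < a2 + β := by rw [ha2, hβ]; linarith
  obtain ⟨Cy1, hCy1e⟩ : ∃ C : ℝ, C = 2 ^ |a1| / (1 - 2 ^ (-(a1 + β))) := ⟨_, rfl⟩
  obtain ⟨Cy2, hCy2e⟩ : ∃ C : ℝ, C = 2 ^ |a2| / (1 - 2 ^ (-(a2 + β))) := ⟨_, rfl⟩
  have hCy1 : 0 < Cy1 := by
    rw [hCy1e]; exact div_pos (Real.rpow_pos_of_pos two_pos _) (aux_gsum_pos hθ1)
  have hCy2 : 0 < Cy2 := by
    rw [hCy2e]; exact div_pos (Real.rpow_pos_of_pos two_pos _) (aux_gsum_pos hθ2)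
  obtain ⟨Fx, hFxe⟩ : ∃ F : ℝ, F = 1 + 2 ^ |β| := ⟨_, rfl⟩
  have hFx : 0 < Fx := by
    have := Real.rpow_pos_of_pos two_pos |β|; rw [hFxe]; linarith
  obtain ⟨E1, hE1e⟩ : ∃ E : ℝ, E = c2 * 4 ^ |b1| * 2 ^ b1 * Cy1 * 2 ^ (a1 + β) * Fx := ⟨_, rfl⟩
  obtain ⟨E2, hE2e⟩ : ∃ E : ℝ, E = c2 * 4 ^ |b2| * 2 ^ b2 * Cy2 * 2 ^ (a2 + β) * Fx := ⟨_, rfl⟩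
  have hE1 : 0 < E1 := by
    rw [hE1e]
    have p1 := Real.rpow_pos_of_pos (by norm_num : (0:ℝ) < 4) |b1|
    have p2 := Real.rpow_pos_of_pos two_pos b1
    have p3 := Real.rpow_pos_of_pos two_pos (a1 + β)
    positivity
  have hE2 : 0 < E2 := by
    rw [hE2e]
    have p1 := Real.rpow_pos_of_pos (by norm_num : (0:ℝ) < 4) |b2|
    have p2 := Real.rpow_pos_of_pos two_pos b2
    have p3 := Real.rpow_pos_of_pos two_pos (a2 + β)
    positivity
  refine ⟨min 1 (min ((ε / (2*(E1+1))) ^ (1/(a1 + β))) ((ε / (2*(E2+1))) ^ (1/(a2 + β)))),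
    lt_min one_pos (lt_min (Real.rpow_pos_of_pos (by positivity) _)
      (Real.rpow_pos_of_pos (by positivity) _)), ?_⟩
  intro A f _ hA hf δ hδ0 hδεle R hR
  have hδ1 : δ ≤ 1 := hδεle.trans (min_le_left _ _)
  have hδθ1 : δ ^ (a1 + β) ≤ ε / (2*(E1+1)) := by
    have h1 : δ ≤ (ε / (2*(E1+1))) ^ (1/(a1+β)) :=
      hδεle.trans ((min_le_right _ _).trans (min_le_left _ _))
    calc δ ^ (a1+β) ≤ ((ε / (2*(E1+1))) ^ (1/(a1+β))) ^ (a1+β) :=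
          Real.rpow_le_rpow hδ0.le h1 hθ1.le
      _ = ε / (2*(E1+1)) := by
          rw [← Real.rpow_mul (by positivity), one_div, inv_mul_cancel₀ hθ1.ne', Real.rpow_one]
  have hδθ2 : δ ^ (a2 + β) ≤ ε / (2*(E2+1)) := by
    have h1 : δ ≤ (ε / (2*(E2+1))) ^ (1/(a2+β)) :=
      hδεle.trans ((min_le_right _ _).trans (min_le_right _ _))
    calc δ ^ (a2+β) ≤ ((ε / (2*(E2+1))) ^ (1/(a2+β))) ^ (a2+β) :=
          Real.rpow_le_rpow hδ0.le h1 hθ2.le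
      _ = ε / (2*(E2+1)) := by
          rw [← Real.rpow_mul (by positivity), one_div, inv_mul_cancel₀ hθ2.ne', Real.rpow_one]
  have hεsum : E1 * δ ^ (a1 + β) + E2 * δ ^ (a2 + β) ≤ ε := by
    have k1 : E1 * δ ^ (a1+β) ≤ E1 * (ε / (2*(E1+1))) :=
      mul_le_mul_of_nonneg_left hδθ1 hE1.le
    have k2 : E2 * δ ^ (a2+β) ≤ E2 * (ε / (2*(E2+1))) :=
      mul_le_mul_of_nonneg_left hδθ2 hE2.le
    have k3 : E1 * (ε / (2*(E1+1))) ≤ ε / 2 := by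
      rw [show E1 * (ε / (2*(E1+1))) = E1 * ε / (2*(E1+1)) by ring,
        div_le_iff₀ (by positivity)]
      nlinarith
    have k4 : E2 * (ε / (2*(E2+1))) ≤ ε / 2 := by
      rw [show E2 * (ε / (2*(E2+1))) = E2 * ε / (2*(E2+1)) by ring,
        div_le_iff₀ (by positivity)]
      nlinarith
    linarith
  have hf' : ∀ z : ℝ, 0 < z → f (Icc (z/2) z) ≤ ENNReal.ofReal (A * z ^ β) := by
    intro z hz
    have h := hf z hz
    have he : A * z ^ (-(γ + 3) / 2) * z = A * z ^ β := by
      rw [hβ, Real.rpow_add hz, Real.rpow_one]; ring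
    rwa [he] at h
  set g : ℝ × ℝ → ℝ≥0∞ := fun p =>
    ENNReal.ofReal (c2 * (p.1 ^ (γ + lam) * p.2 ^ (-lam) + p.2 ^ (γ + lam) * p.1 ^ (-lam)) * p.1)
    with hgdef
  have hg : Measurable g := by rw [hgdef]; fun_prop
  have hS : ∀ z : ℝ, MeasurableSet {p : ℝ × ℝ | 0 < p.1 ∧ p.1 ≤ z ∧ z - p.1 < p.2 ∧ p.2 < δ * p.1} := by
    intro z
    have mx : Measurable fun p : ℝ × ℝ => p.1 := measurable_fst
    have my : Measurable fun p : ℝ × ℝ => p.2 := measurable_snd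
    simp only [Set.setOf_and]
    exact ((measurableSet_lt measurable_const mx).inter ((measurableSet_le mx measurable_const).inter
      ((measurableSet_lt (measurable_const.sub mx) my).inter (measurableSet_lt my (mx.const_mul δ)))))
  set T : Set (ℝ × ℝ × ℝ) := {q | 0 < q.2.1 ∧ q.2.1 ≤ q.1 ∧ q.1 - q.2.1 < q.2.2 ∧ q.2.2 < δ * q.2.1}
    with hTdef
  have hT : MeasurableSet T := by
    have mx : Measurable fun q : ℝ × ℝ × ℝ => q.2.1 := measurable_snd.fst
    have my : Measurable fun q : ℝ × ℝ × ℝ => q.2.2 := measurable_snd.snd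
    have mz : Measurable fun q : ℝ × ℝ × ℝ => q.1 := measurable_fst
    rw [hTdef]
    simp only [Set.setOf_and]
    exact ((measurableSet_lt measurable_const mx).inter ((measurableSet_le mx mz).inter
      ((measurableSet_lt (mz.sub mx) my).inter (measurableSet_lt my (mx.const_mul δ)))))
  set U : Set (ℝ × ℝ) := {p | R/2 < p.1 ∧ p.1 ≤ 2*R ∧ 0 < p.2 ∧ p.2 < δ * p.1} with hUdef
  have hU : MeasurableSet U := by
    have mx : Measurable fun p : ℝ × ℝ => p.1 := measurable_fst
    have my : Measurable fun p : ℝ × ℝ => p.2 := measurable_snd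
    rw [hUdef]
    simp only [Set.setOf_and]
    exact ((measurableSet_lt measurable_const mx).inter ((measurableSet_le mx measurable_const).inter
      ((measurableSet_lt measurable_const my).inter (measurableSet_lt my (mx.const_mul δ)))))
  -- Step A : replace K by its upper bound g
  have stepA : ∀ z : ℝ,
      (∫⁻ p : ℝ × ℝ in {p : ℝ × ℝ | 0 < p.1 ∧ p.1 ≤ z ∧ z - p.1 < p.2 ∧ p.2 < δ * p.1},
        ENNReal.ofReal (K p.1 p.2 * p.1) ∂(f.prod f)) ≤
      ∫⁻ p : ℝ × ℝ in {p : ℝ × ℝ | 0 < p.1 ∧ p.1 ≤ z ∧ z - p.1 < p.2 ∧ p.2 < δ * p.1},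
        g p ∂(f.prod f) := by
    intro z
    apply setLIntegral_mono hg
    rintro p ⟨hx, hxz, hzy, hyd⟩
    have hy : 0 < p.2 := lt_of_le_of_lt (sub_nonneg.mpr hxz) hzy
    exact ENNReal.ofReal_le_ofReal (mul_le_mul_of_nonneg_right (hub _ _ hx hy) hx.le)
  -- Step B : indicator rewriting and Tonelli swap
  have eqB : ∀ z : ℝ,
      (∫⁻ p : ℝ × ℝ in {p : ℝ × ℝ | 0 < p.1 ∧ p.1 ≤ z ∧ z - p.1 < p.2 ∧ p.2 < δ * p.1},
        g p ∂(f.prod f)) =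
      ∫⁻ p : ℝ × ℝ, T.indicator (fun q => g q.2) (z, p) ∂(f.prod f) := by
    intro z
    rw [← lintegral_indicator (hS z) g]
    apply lintegral_congr
    intro p
    by_cases h : p ∈ {p : ℝ × ℝ | 0 < p.1 ∧ p.1 ≤ z ∧ z - p.1 < p.2 ∧ p.2 < δ * p.1}
    · rw [Set.indicator_of_mem h, Set.indicator_of_mem (show (z, p) ∈ T from h)]
    · rw [Set.indicator_of_notMem h, Set.indicator_of_notMem (show (z, p) ∉ T from h)]
  have hswap :
      (∫⁻ z in Set.Icc R (2*R), ∫⁻ p : ℝ × ℝ, T.indicator (fun q => g q.2) (z, p) ∂(f.prod f)) =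
      ∫⁻ p : ℝ × ℝ, (∫⁻ z in Set.Icc R (2*R), T.indicator (fun q => g q.2) (z, p)) ∂(f.prod f) := by
    apply lintegral_lintegral_swap
    exact ((hg.comp measurable_snd).indicator hT).aemeasurable
  -- Step C : pointwise bound on the z-integral
  have stepC : ∀ p : ℝ × ℝ,
      (∫⁻ z in Set.Icc R (2*R), T.indicator (fun q => g q.2) (z, p)) ≤
      U.indicator (fun p => ENNReal.ofReal p.2 * g p) p := by
    intro p
    by_cases hpU : p ∈ U
    · rw [Set.indicator_of_mem hpU]
      have h1 : ∀ z : ℝ, T.indicator (fun q => g q.2) (z, p) ≤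
          (Set.Ico p.1 (p.1 + p.2)).indicator (fun _ => g p) z := by
        intro z
        by_cases hz : (z, p) ∈ T
        · rw [Set.indicator_of_mem hz]
          have hmem : z ∈ Set.Ico p.1 (p.1 + p.2) := ⟨hz.2.1, by linarith [hz.2.2.1]⟩
          rw [Set.indicator_of_mem hmem]
        · rw [Set.indicator_of_notMem hz]; exact zero_le
      calc (∫⁻ z in Set.Icc R (2*R), T.indicator (fun q => g q.2) (z, p))
          ≤ ∫⁻ z in Set.Icc R (2*R), (Set.Ico p.1 (p.1 + p.2)).indicator (fun _ => g p) z :=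
            lintegral_mono (fun z => h1 z)
        _ ≤ ∫⁻ z, (Set.Ico p.1 (p.1 + p.2)).indicator (fun _ => g p) z :=
            setLIntegral_le_lintegral _ _
        _ = g p * volume (Set.Ico p.1 (p.1 + p.2)) :=
            lintegral_indicator_const measurableSet_Ico _
        _ = ENNReal.ofReal p.2 * g p := by
            rw [Real.volume_Ico, add_sub_cancel_left, mul_comm]
    · rw [Set.indicator_of_notMem hpU]
      have hzero : ∀ z ∈ Set.Icc R (2*R),
          T.indicator (fun q => g q.2) (z, p) = (fun _ : ℝ => (0:ℝ≥0∞)) z := by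
        intro z hz
        rw [Set.indicator_of_notMem]
        intro hmem
        obtain ⟨hx0, hxz, hzxy, hyd⟩ := hmem
        apply hpU
        have hy0 : 0 < p.2 := lt_of_le_of_lt (sub_nonneg.mpr hxz) hzxy
        have hyx : p.2 < p.1 := lt_of_lt_of_le hyd (by nlinarith)
        refine ⟨?_, hxz.trans hz.2, hy0, hyd⟩
        have hzR : R ≤ z := hz.1
        nlinarith
      rw [setLIntegral_congr_fun measurableSet_Icc hzero]
      simp
  -- put A,B,C together
  have main1 :
      (∫⁻ z in Set.Icc R (2 * R),
        (∫⁻ p : ℝ × ℝ in {p : ℝ × ℝ | 0 < p.1 ∧ p.1 ≤ z ∧ z - p.1 < p.2 ∧ p.2 < δ * p.1},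
          ENNReal.ofReal (K p.1 p.2 * p.1) ∂(f.prod f))) ≤
      ∫⁻ p : ℝ × ℝ in U, ENNReal.ofReal p.2 * g p ∂(f.prod f) := by
    calc (∫⁻ z in Set.Icc R (2 * R),
          (∫⁻ p : ℝ × ℝ in {p : ℝ × ℝ | 0 < p.1 ∧ p.1 ≤ z ∧ z - p.1 < p.2 ∧ p.2 < δ * p.1},
            ENNReal.ofReal (K p.1 p.2 * p.1) ∂(f.prod f)))
        ≤ ∫⁻ z in Set.Icc R (2 * R),
          (∫⁻ p : ℝ × ℝ in {p : ℝ × ℝ | 0 < p.1 ∧ p.1 ≤ z ∧ z - p.1 < p.2 ∧ p.2 < δ * p.1},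
            g p ∂(f.prod f)) := lintegral_mono (fun z => stepA z)
      _ = ∫⁻ z in Set.Icc R (2*R), ∫⁻ p : ℝ × ℝ, T.indicator (fun q => g q.2) (z, p) ∂(f.prod f) :=
          lintegral_congr (fun z => eqB z)
      _ = ∫⁻ p : ℝ × ℝ, (∫⁻ z in Set.Icc R (2*R), T.indicator (fun q => g q.2) (z, p)) ∂(f.prod f) :=
          hswap
      _ ≤ ∫⁻ p : ℝ × ℝ, U.indicator (fun p => ENNReal.ofReal p.2 * g p) p ∂(f.prod f) :=
          lintegral_mono (fun p => stepC p)
      _ = ∫⁻ p : ℝ × ℝ in U, ENNReal.ofReal p.2 * g p ∂(f.prod f) :=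
          lintegral_indicator hU _
  -- Step D : split into the two separable pieces
  have hh1m : Measurable fun p : ℝ × ℝ =>
      ENNReal.ofReal ((c2 * 4 ^ |b1| * (2*R) ^ b1) * p.2 ^ a1) := by fun_prop
  have hh2m : Measurable fun p : ℝ × ℝ =>
      ENNReal.ofReal ((c2 * 4 ^ |b2| * (2*R) ^ b2) * p.2 ^ a2) := by fun_prop
  have stepD : (∫⁻ p : ℝ × ℝ in U, ENNReal.ofReal p.2 * g p ∂(f.prod f)) ≤
      (∫⁻ p : ℝ × ℝ in U, ENNReal.ofReal ((c2 * 4 ^ |b1| * (2*R) ^ b1) * p.2 ^ a1) ∂(f.prod f)) +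
      ∫⁻ p : ℝ × ℝ in U, ENNReal.ofReal ((c2 * 4 ^ |b2| * (2*R) ^ b2) * p.2 ^ a2) ∂(f.prod f) := by
    have hmono : ∀ p ∈ U, ENNReal.ofReal p.2 * g p ≤
        ENNReal.ofReal ((c2 * 4 ^ |b1| * (2*R) ^ b1) * p.2 ^ a1) +
        ENNReal.ofReal ((c2 * 4 ^ |b2| * (2*R) ^ b2) * p.2 ^ a2) := by
      rintro p ⟨hpx1, hpx2, hpy, hpyd⟩
      have hx0 : 0 < p.1 := lt_trans (by positivity) hpx1
      have h2R : (0:ℝ) < 2*R := by linarith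
      have hxb1 : p.1 ^ b1 ≤ 4 ^ |b1| * (2*R) ^ b1 := by
        apply aux_rpow_le h2R (by norm_num) _ hpx2
        rw [show (2*R)/4 = R/2 by ring]; exact hpx1.le
      have hxb2 : p.1 ^ b2 ≤ 4 ^ |b2| * (2*R) ^ b2 := by
        apply aux_rpow_le h2R (by norm_num) _ hpx2
        rw [show (2*R)/4 = R/2 by ring]; exact hpx1.le
      have key : p.2 * (c2 * (p.1 ^ (γ + lam) * p.2 ^ (-lam) + p.2 ^ (γ + lam) * p.1 ^ (-lam)) * p.1)
          = c2 * (p.1 ^ b1 * p.2 ^ a1 + p.1 ^ b2 * p.2 ^ a2) := by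
        rw [hb1, hb2, ha1, ha2, show (γ+lam+1 : ℝ) = (γ+lam)+1 by ring,
          show (1-lam : ℝ) = -lam+1 by ring, show (1+γ+lam : ℝ) = (γ+lam)+1 by ring,
          Real.rpow_add_one hx0.ne' (γ+lam), Real.rpow_add_one hx0.ne' (-lam),
          Real.rpow_add_one hpy.ne' (-lam), Real.rpow_add_one hpy.ne' (γ+lam)]
        ring
      have hya1 : (0:ℝ) ≤ p.2 ^ a1 := Real.rpow_nonneg hpy.le a1
      have hya2 : (0:ℝ) ≤ p.2 ^ a2 := Real.rpow_nonneg hpy.le a2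
      have hreal : p.2 * (c2 * (p.1 ^ (γ + lam) * p.2 ^ (-lam) + p.2 ^ (γ + lam) * p.1 ^ (-lam)) * p.1)
          ≤ (c2 * 4 ^ |b1| * (2*R) ^ b1) * p.2 ^ a1 + (c2 * 4 ^ |b2| * (2*R) ^ b2) * p.2 ^ a2 := by
        rw [key]
        have t1 : p.1 ^ b1 * p.2 ^ a1 ≤ (4 ^ |b1| * (2*R) ^ b1) * p.2 ^ a1 :=
          mul_le_mul_of_nonneg_right hxb1 hya1
        have t2 : p.1 ^ b2 * p.2 ^ a2 ≤ (4 ^ |b2| * (2*R) ^ b2) * p.2 ^ a2 :=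
          mul_le_mul_of_nonneg_right hxb2 hya2
        nlinarith
      have hs1 : (0:ℝ) ≤ (c2 * 4 ^ |b1| * (2*R) ^ b1) * p.2 ^ a1 := by
        apply mul_nonneg _ hya1
        have := Real.rpow_nonneg h2R.le b1
        positivity
      have hs2 : (0:ℝ) ≤ (c2 * 4 ^ |b2| * (2*R) ^ b2) * p.2 ^ a2 := by
        apply mul_nonneg _ hya2
        have := Real.rpow_nonneg h2R.le b2
        positivity
      calc ENNReal.ofReal p.2 * g p
          = ENNReal.ofReal (p.2 * (c2 * (p.1 ^ (γ + lam) * p.2 ^ (-lam) +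
              p.2 ^ (γ + lam) * p.1 ^ (-lam)) * p.1)) := by
            rw [hgdef, ← ENNReal.ofReal_mul hpy.le]
        _ ≤ ENNReal.ofReal ((c2 * 4 ^ |b1| * (2*R) ^ b1) * p.2 ^ a1 +
              (c2 * 4 ^ |b2| * (2*R) ^ b2) * p.2 ^ a2) := ENNReal.ofReal_le_ofReal hreal
        _ = _ := ENNReal.ofReal_add hs1 hs2
    calc (∫⁻ p : ℝ × ℝ in U, ENNReal.ofReal p.2 * g p ∂(f.prod f))
        ≤ ∫⁻ p : ℝ × ℝ in U, (ENNReal.ofReal ((c2 * 4 ^ |b1| * (2*R) ^ b1) * p.2 ^ a1) +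
            ENNReal.ofReal ((c2 * 4 ^ |b2| * (2*R) ^ b2) * p.2 ^ a2)) ∂(f.prod f) :=
          setLIntegral_mono (hh1m.add hh2m) hmono
      _ = _ := lintegral_add_left hh1m _
  -- Step E : each separable piece
  have hUV : U ⊆ Ioc (R/2) (2*R) ×ˢ Ioc 0 (2*R*δ) := by
    rintro ⟨x, y⟩ ⟨h1, h2, h3, h4⟩
    exact ⟨⟨h1, h2⟩, ⟨h3, by nlinarith⟩⟩
  have hfs : f (Ioc (R/2) (2*R)) ≤ ENNReal.ofReal (A * Fx * R ^ β) := by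
    have hsplit : Ioc (R/2) (2*R) ⊆ Icc (R/2) R ∪ Icc R (2*R) := by
      intro y hy
      rcases le_or_gt y R with h | h
      · exact Or.inl ⟨hy.1.le, h⟩
      · exact Or.inr ⟨h.le, hy.2⟩
    have hb : f (Icc R (2*R)) ≤ ENNReal.ofReal (A * (2*R) ^ β) := by
      have := hf' (2*R) (by linarith)
      rwa [show (2*R)/2 = R by ring] at this
    calc f (Ioc (R/2) (2*R)) ≤ f (Icc (R/2) R ∪ Icc R (2*R)) := measure_mono hsplit
      _ ≤ f (Icc (R/2) R) + f (Icc R (2*R)) := measure_union_le _ _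
      _ ≤ ENNReal.ofReal (A * R ^ β) + ENNReal.ofReal (A * (2*R) ^ β) :=
          add_le_add (hf' R hR) hb
      _ ≤ ENNReal.ofReal (A * Fx * R ^ β) := by
          have hRβ : (0:ℝ) ≤ R ^ β := Real.rpow_nonneg hR.le β
          rw [← ENNReal.ofReal_add (mul_nonneg hA hRβ)
            (mul_nonneg hA (Real.rpow_nonneg (by linarith) β))]
          apply ENNReal.ofReal_le_ofReal
          have e : (2*R) ^ β = (2:ℝ) ^ β * R ^ β := Real.mul_rpow (by norm_num) hR.le
          have h2 : (2:ℝ) ^ β ≤ 2 ^ |β| :=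
            Real.rpow_le_rpow_of_exponent_le one_le_two (le_abs_self β)
          rw [e, hFxe]
          nlinarith [mul_le_mul_of_nonneg_left (mul_le_mul_of_nonneg_right h2 hRβ) hA]
  have stepE : ∀ c a : ℝ, 0 ≤ c → 0 < a + β →
      (∫⁻ p : ℝ × ℝ in U, ENNReal.ofReal (c * p.2 ^ a) ∂(f.prod f)) ≤
      ENNReal.ofReal c * ENNReal.ofReal (2 ^ |a| / (1 - 2 ^ (-(a + β))) * (A * (2*R*δ) ^ (a + β))) *
        ENNReal.ofReal (A * Fx * R ^ β) := by
    intro c a hc hθ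
    have hmeas : Measurable fun p : ℝ × ℝ => ENNReal.ofReal (c * p.2 ^ a) := by fun_prop
    have hmeas2 : Measurable fun y : ℝ => ENNReal.ofReal (y ^ a) := by fun_prop
    calc (∫⁻ p : ℝ × ℝ in U, ENNReal.ofReal (c * p.2 ^ a) ∂(f.prod f))
        ≤ ∫⁻ p : ℝ × ℝ in Ioc (R/2) (2*R) ×ˢ Ioc 0 (2*R*δ),
            ENNReal.ofReal (c * p.2 ^ a) ∂(f.prod f) := lintegral_mono_set hUV
      _ = (∫⁻ y in Ioc 0 (2*R*δ), ENNReal.ofReal (c * y ^ a) ∂f) * f (Ioc (R/2) (2*R)) := by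
          rw [← Measure.prod_restrict, lintegral_prod _ hmeas.aemeasurable]
          simp [lintegral_const, Measure.restrict_apply_univ]
      _ ≤ (ENNReal.ofReal c *
            ENNReal.ofReal (2 ^ |a| / (1 - 2 ^ (-(a + β))) * (A * (2*R*δ) ^ (a + β)))) *
          ENNReal.ofReal (A * Fx * R ^ β) := by
          apply mul_le_mul' _ hfs
          have : (∫⁻ y in Ioc 0 (2*R*δ), ENNReal.ofReal (c * y ^ a) ∂f) =
              ENNReal.ofReal c * ∫⁻ y in Ioc 0 (2*R*δ), ENNReal.ofReal (y ^ a) ∂f := by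
            simp_rw [ENNReal.ofReal_mul hc]
            rw [lintegral_const_mul _ hmeas2]
          rw [this]
          exact mul_le_mul_right (aux_dyadic f A β hA hf' a hθ (2*R*δ) (by positivity)) _
  -- final assembly
  have hc1 : (0:ℝ) ≤ c2 * 4 ^ |b1| * (2*R) ^ b1 := by
    have := Real.rpow_nonneg (show (0:ℝ) ≤ 2*R by linarith) b1
    positivity
  have hc2' : (0:ℝ) ≤ c2 * 4 ^ |b2| * (2*R) ^ b2 := by
    have := Real.rpow_nonneg (show (0:ℝ) ≤ 2*R by linarith) b2
    positivity
  have hsum1 : b1 + (a1 + β) + β = 1 := by rw [hb1, ha1, hβ]; ring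
  have hsum2 : b2 + (a2 + β) + β = 1 := by rw [hb2, ha2, hβ]; ring
  have piece1 : (∫⁻ p : ℝ × ℝ in U, ENNReal.ofReal ((c2 * 4 ^ |b1| * (2*R) ^ b1) * p.2 ^ a1)
        ∂(f.prod f)) ≤ ENNReal.ofReal (E1 * δ ^ (a1 + β) * (A^2 * R)) := by
    refine le_trans (stepE _ a1 hc1 hθ1) (le_of_eq ?_)
    rw [← ENNReal.ofReal_mul hc1, ← ENNReal.ofReal_mul (by
      have h1 : (0:ℝ) ≤ 2 ^ |a1| / (1 - 2 ^ (-(a1 + β))) := by rw [← hCy1e]; exact hCy1.le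
      have h2 : (0:ℝ) ≤ A * (2*R*δ) ^ (a1+β) := mul_nonneg hA (Real.rpow_nonneg (by positivity) _)
      exact mul_nonneg hc1 (mul_nonneg h1 h2))]
    congr 1
    rw [← hCy1e] at *
    rw [show c2 * 4 ^ |b1| * (2*R) ^ b1 * (Cy1 * (A * (2*R*δ) ^ (a1+β))) * (A * Fx * R ^ β)
      = (c2 * 4 ^ |b1| * 2 ^ b1 * Cy1 * 2 ^ (a1+β) * Fx) * δ ^ (a1+β) * (A^2 * R)
      from aux_combine hR hδ0 hsum1, ← hE1e]
  have piece2 : (∫⁻ p : ℝ × ℝ in U, ENNReal.ofReal ((c2 * 4 ^ |b2| * (2*R) ^ b2) * p.2 ^ a2)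
        ∂(f.prod f)) ≤ ENNReal.ofReal (E2 * δ ^ (a2 + β) * (A^2 * R)) := by
    refine le_trans (stepE _ a2 hc2' hθ2) (le_of_eq ?_)
    rw [← ENNReal.ofReal_mul hc2', ← ENNReal.ofReal_mul (by
      have h1 : (0:ℝ) ≤ 2 ^ |a2| / (1 - 2 ^ (-(a2 + β))) := by rw [← hCy2e]; exact hCy2.le
      have h2 : (0:ℝ) ≤ A * (2*R*δ) ^ (a2+β) := mul_nonneg hA (Real.rpow_nonneg (by positivity) _)
      exact mul_nonneg hc2' (mul_nonneg h1 h2))]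
    congr 1
    rw [← hCy2e] at *
    rw [show c2 * 4 ^ |b2| * (2*R) ^ b2 * (Cy2 * (A * (2*R*δ) ^ (a2+β))) * (A * Fx * R ^ β)
      = (c2 * 4 ^ |b2| * 2 ^ b2 * Cy2 * 2 ^ (a2+β) * Fx) * δ ^ (a2+β) * (A^2 * R)
      from aux_combine hR hδ0 hsum2, ← hE2e]
  calc (∫⁻ z in Set.Icc R (2 * R),
        (∫⁻ p : ℝ × ℝ in {p : ℝ × ℝ | 0 < p.1 ∧ p.1 ≤ z ∧ z - p.1 < p.2 ∧ p.2 < δ * p.1},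
          ENNReal.ofReal (K p.1 p.2 * p.1) ∂(f.prod f)))
      ≤ ∫⁻ p : ℝ × ℝ in U, ENNReal.ofReal p.2 * g p ∂(f.prod f) := main1
    _ ≤ (∫⁻ p : ℝ × ℝ in U, ENNReal.ofReal ((c2 * 4 ^ |b1| * (2*R) ^ b1) * p.2 ^ a1) ∂(f.prod f)) +
        ∫⁻ p : ℝ × ℝ in U, ENNReal.ofReal ((c2 * 4 ^ |b2| * (2*R) ^ b2) * p.2 ^ a2) ∂(f.prod f) :=
        stepD
    _ ≤ ENNReal.ofReal (E1 * δ ^ (a1 + β) * (A^2 * R)) +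
        ENNReal.ofReal (E2 * δ ^ (a2 + β) * (A^2 * R)) := add_le_add piece1 piece2
    _ = ENNReal.ofReal (E1 * δ ^ (a1 + β) * (A^2 * R) + E2 * δ ^ (a2 + β) * (A^2 * R)) := by
        rw [← ENNReal.ofReal_add]
        · exact mul_nonneg (mul_nonneg hE1.le (Real.rpow_nonneg hδ0.le _)) (by positivity)
        · exact mul_nonneg (mul_nonneg hE2.le (Real.rpow_nonneg hδ0.le _)) (by positivity)
    _ ≤ ENNReal.ofReal (ε * A ^ 2 * R) := by
        apply ENNReal.ofReal_le_ofReal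
        nlinarith [mul_le_mul_of_nonneg_right hεsum (show (0:ℝ) ≤ A^2 * R by positivity)]
end

section
/- Let $K$ satisfy $K(x,y) \ge c_1(x^{\gamma+\lambda} y^{-\lambda} + y^{\gamma+\lambda} x^{-\lambda})$ with $c_1 > 0$, and let $f$ be a nonnegative Radon measure on $(0,\infty)$ such that for all $z > 0$, $\iint_{\{0 < x \le z,\ y > z-x\}} K(x,y)\, x\, f(dx)\, f(dy) \le J$ for some $J > 0$. Then there is a constant $C > 0$ depending only on $\gamma$, $\lambda$, $c_1$ such that $\frac{1}{z}\int_{[z/2,z]} f(dx) \le C\sqrt{J}\, z^{-(\gamma+3)/2}$ for all $z > 0$. -/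
/-!
On the square `[2z/3, z]²`, which lies inside the flux region `{x ≤ z, y > z - x}`, both
coordinates are comparable to `z`, so the kernel bound gives `K x y * x ≳ z ^ (γ + 1)` there.
Hence `z ^ (γ + 1) * f([2z/3, z])² ≲ J`, i.e. `f([2z/3, z]) ≲ √J z ^ (-(γ + 1) / 2)`, and
`[z/2, z]` is covered by the two such intervals `[z/2, 3z/4]` and `[2z/3, z]`.
-/

open MeasureTheory Set
open scoped ENNReal

lemma rpow_abs_le_rpow_of_mem_Icc {θ s a : ℝ} (hθ : 0 < θ) (hs : s ∈ Icc θ 1) :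
    θ ^ |a| ≤ s ^ a := by
  rcases le_or_gt 0 a with ha | ha
  · rw [abs_of_nonneg ha]
    exact Real.rpow_le_rpow hθ.le hs.1 ha
  · calc θ ^ |a| ≤ 1 := Real.rpow_le_one hθ.le (hs.1.trans hs.2) (abs_nonneg a)
      _ ≤ s ^ a := Real.one_le_rpow_of_pos_of_le_one_of_nonpos (hθ.trans_le hs.1) hs.2 ha.le

lemma rpow_abs_mul_rpow_le_rpow_of_mem_Icc {θ w t a : ℝ} (hθ : 0 < θ) (hw : 0 < w)
    (ht : t ∈ Icc (θ * w) w) : θ ^ |a| * w ^ a ≤ t ^ a := by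
  have hst : t / w ∈ Icc θ 1 := ⟨(le_div_iff₀ hw).2 ht.1, (div_le_one hw).2 ht.2⟩
  calc θ ^ |a| * w ^ a ≤ (t / w) ^ a * w ^ a := by
        gcongr
        exact rpow_abs_le_rpow_of_mem_Icc hθ hst
    _ = t ^ a := by
        rw [Real.div_rpow ((mul_pos hθ hw).le.trans ht.1) hw.le,
          div_mul_cancel₀ _ (Real.rpow_pos_of_pos hw a).ne']

lemma le_rpow_mul_rpow_mul_of_mem_Icc {θ z x y γ lam : ℝ} (hθ : 0 < θ)
    (hz : 0 < z) (hx : x ∈ Icc (θ * z) z) (hy : y ∈ Icc (θ * z) z) :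
    θ ^ |γ + lam + 1| * θ ^ |lam| * z ^ (γ + 1) ≤ x ^ (γ + lam) * y ^ (-lam) * x := by
  have hx0 : 0 < x := (mul_pos hθ hz).trans_le hx.1
  have hxx : x ^ (γ + lam) * y ^ (-lam) * x = x ^ (γ + lam + 1) * y ^ (-lam) := by
    rw [Real.rpow_add_one hx0.ne']; ring
  have hzz : z ^ (γ + 1) = z ^ (γ + lam + 1) * z ^ (-lam) := by
    rw [← Real.rpow_add hz]; ring_nf
  have hy' := rpow_abs_mul_rpow_le_rpow_of_mem_Icc (a := -lam) hθ hz hy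
  rw [abs_neg] at hy'
  rw [hxx, hzz]
  calc θ ^ |γ + lam + 1| * θ ^ |lam| * (z ^ (γ + lam + 1) * z ^ (-lam))
      = (θ ^ |γ + lam + 1| * z ^ (γ + lam + 1)) * (θ ^ |lam| * z ^ (-lam)) := by ring
    _ ≤ x ^ (γ + lam + 1) * y ^ (-lam) :=
      mul_le_mul (rpow_abs_mul_rpow_le_rpow_of_mem_Icc hθ hz hx) hy' (by positivity)
        (Real.rpow_pos_of_pos hx0 _).le

lemma mul_measure_mul_le_setLIntegral_prod {α β : Type*} [MeasurableSpace α] [MeasurableSpace β]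
    {μ : Measure α} {ν : Measure β} [SFinite ν] {A : Set α} {B : Set β} {S : Set (α × β)}
    {g : α × β → ℝ≥0∞} {c : ℝ≥0∞} (hA : MeasurableSet A) (hB : MeasurableSet B)
    (hABS : A ×ˢ B ⊆ S) (hg : ∀ x ∈ A, ∀ y ∈ B, c ≤ g (x, y)) :
    c * (μ A * ν B) ≤ ∫⁻ p in S, g p ∂μ.prod ν := by
  calc c * (μ A * ν B) = ∫⁻ _ in A ×ˢ B, c ∂μ.prod ν := by
        rw [setLIntegral_const, Measure.prod_prod]
    _ ≤ ∫⁻ p in A ×ˢ B, g p ∂μ.prod ν :=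
        setLIntegral_mono' (hA.prod hB) fun p hp ↦ hg p.1 hp.1 p.2 hp.2
    _ ≤ ∫⁻ p in S, g p ∂μ.prod ν := lintegral_mono_set hABS

lemma ENNReal.le_ofReal_sqrt_div_of_ofReal_mul_sq_le {a : ℝ≥0∞} {m J : ℝ} (hm : 0 < m)
    (hJ : 0 ≤ J) (h : ENNReal.ofReal m * a ^ 2 ≤ ENNReal.ofReal J) :
    a ≤ ENNReal.ofReal √(J / m) := by
  have ha : a ≠ ∞ := by
    rintro rfl
    simp [hm] at h
  rw [← ENNReal.ofReal_toReal ha, ← ENNReal.ofReal_pow ENNReal.toReal_nonneg,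
    ← ENNReal.ofReal_mul hm.le, ENNReal.ofReal_le_ofReal_iff hJ] at h
  rw [← ENNReal.ofReal_toReal ha]
  exact ENNReal.ofReal_le_ofReal (Real.le_sqrt_of_sq_le ((le_div_iff₀ hm).2 (by linarith)))

lemma Real.sqrt_div_mul_rpow (J k : ℝ) {z : ℝ} (hz : 0 < z) (a : ℝ) :
    √(J / (k * z ^ a)) = √(J / k) * z ^ (-a / 2) := by
  rw [div_mul_eq_div_div, div_eq_mul_inv _ (z ^ a), ← Real.rpow_neg hz.le,
    Real.sqrt_mul' _ (Real.rpow_nonneg hz.le _), Real.sqrt_eq_rpow (z ^ _),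
    ← Real.rpow_mul hz.le]
  ring_nf

def fluxRegion (z : ℝ) : Set (ℝ × ℝ) := {p | 0 < p.1 ∧ p.1 ≤ z ∧ z - p.1 < p.2}

lemma Icc_prod_Icc_subset_fluxRegion {z : ℝ} (hz : 0 < z) :
    Icc (2 / 3 * z) z ×ˢ Icc (2 / 3 * z) z ⊆ fluxRegion z := by
  rintro ⟨x, y⟩ ⟨hx, hy⟩
  exact ⟨by linarith [hx.1], hx.2, by linarith [hx.1, hy.1]⟩

noncomputable def squareConst (γ lam : ℝ) : ℝ := (2 / 3 : ℝ) ^ |γ + lam + 1| * (2 / 3 : ℝ) ^ |lam|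

lemma squareConst_pos (γ lam : ℝ) : 0 < squareConst γ lam := by
  unfold squareConst; positivity

lemma measure_Icc_le_of_flux_le {γ lam c J z : ℝ} {K : ℝ → ℝ → ℝ} {f : Measure ℝ} [SFinite f]
    (hc : 0 < c) (hJ : 0 ≤ J) (hz : 0 < z)
    (hK : ∀ x y, 0 < x → 0 < y → c * (x ^ (γ + lam) * y ^ (-lam)) ≤ K x y)
    (hflux : ∫⁻ p in fluxRegion z, ENNReal.ofReal (K p.1 p.2 * p.1) ∂f.prod f ≤
      ENNReal.ofReal J) :
    f (Icc (2 / 3 * z) z) ≤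
      ENNReal.ofReal (√(J / (c * squareConst γ lam)) * z ^ (-(γ + 1) / 2)) := by
  set m := c * squareConst γ lam * z ^ (γ + 1)
  have hm : 0 < m := mul_pos (mul_pos hc (squareConst_pos γ lam)) (Real.rpow_pos_of_pos hz _)
  have hKx : ∀ x ∈ Icc (2 / 3 * z) z, ∀ y ∈ Icc (2 / 3 * z) z,
      ENNReal.ofReal m ≤ ENNReal.ofReal (K x y * x) := by
    intro x hx y hy
    have hx0 : 0 < x := by linarith [hx.1]
    have hy0 : 0 < y := by linarith [hy.1]
    apply ENNReal.ofReal_le_ofReal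
    calc m = c * (squareConst γ lam * z ^ (γ + 1)) := mul_assoc _ _ _
      _ ≤ c * (x ^ (γ + lam) * y ^ (-lam) * x) := mul_le_mul_of_nonneg_left
          (le_rpow_mul_rpow_mul_of_mem_Icc (by norm_num) hz hx hy) hc.le
      _ = c * (x ^ (γ + lam) * y ^ (-lam)) * x := by ring
      _ ≤ K x y * x := mul_le_mul_of_nonneg_right (hK x y hx0 hy0) hx0.le
  have hsq : ENNReal.ofReal m * f (Icc (2 / 3 * z) z) ^ 2 ≤ ENNReal.ofReal J := by
    rw [sq]
    exact (mul_measure_mul_le_setLIntegral_prod measurableSet_Icc measurableSet_Icc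
      (Icc_prod_Icc_subset_fluxRegion hz) hKx).trans hflux
  rw [← Real.sqrt_div_mul_rpow _ _ hz]
  exact ENNReal.le_ofReal_sqrt_div_of_ofReal_mul_sq_le hm hJ hsq

theorem stmt_14 (γ lam c1 : ℝ) (hc1 : 0 < c1) :
    ∃ C : ℝ, 0 < C ∧
      ∀ (K : ℝ → ℝ → ℝ) (f : Measure ℝ) [IsLocallyFiniteMeasure f] (J : ℝ),
        0 < J →
        (∀ x y : ℝ, 0 < x → 0 < y →
          c1 * (x ^ (γ + lam) * y ^ (-lam) + y ^ (γ + lam) * x ^ (-lam)) ≤ K x y) →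
        (∀ z : ℝ, 0 < z →
          (∫⁻ p : ℝ × ℝ in {p : ℝ × ℝ | 0 < p.1 ∧ p.1 ≤ z ∧ z - p.1 < p.2},
            ENNReal.ofReal (K p.1 p.2 * p.1) ∂(f.prod f)) ≤ ENNReal.ofReal J) →
        ∀ z : ℝ, 0 < z →
          f (Set.Icc (z / 2) z) ≤
            ENNReal.ofReal (C * Real.sqrt J * z ^ (-(γ + 3) / 2) * z) := by
  set k := c1 * squareConst γ lam
  have hk : 0 < k := mul_pos hc1 (squareConst_pos γ lam)
  refine ⟨√(1 / k) * ((3 / 4 : ℝ) ^ (-(γ + 1) / 2) + 1), by positivity, ?_⟩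
  intro K f _ J hJ hK hflux z hz
  have hK₁ : ∀ x y, 0 < x → 0 < y → c1 * (x ^ (γ + lam) * y ^ (-lam)) ≤ K x y :=
    fun x y hx hy ↦ (mul_le_mul_of_nonneg_left (le_add_of_nonneg_right (by positivity))
      hc1.le).trans (hK x y hx hy)
  have hlow := measure_Icc_le_of_flux_le hc1 hJ.le (by positivity) hK₁
    (hflux (3 / 4 * z) (by positivity))
  have hhigh := measure_Icc_le_of_flux_le hc1 hJ.le hz hK₁ (hflux z hz)
  rw [show 2 / 3 * (3 / 4 * z) = z / 2 by ring] at hlow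
  have hJk : √(J / k) = √J * √(1 / k) := by rw [← Real.sqrt_mul hJ.le]; ring_nf
  have hzz : z ^ (-(γ + 3) / 2) * z = z ^ (-(γ + 1) / 2) := by
    rw [← Real.rpow_add_one hz.ne']; ring_nf
  calc f (Icc (z / 2) z) ≤ f (Icc (z / 2) (3 / 4 * z) ∪ Icc (2 / 3 * z) z) :=
        measure_mono <| Icc_subset_Icc_union_Icc.trans
          (union_subset_union_right _ (Icc_subset_Icc_left (by linarith)))
    _ ≤ f (Icc (z / 2) (3 / 4 * z)) + f (Icc (2 / 3 * z) z) := measure_union_le _ _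
    _ ≤ _ := add_le_add hlow hhigh
    _ = _ := (ENNReal.ofReal_add (by positivity) (by positivity)).symm
    _ = _ := by
        rw [Real.mul_rpow (by norm_num) hz.le, mul_assoc _ (z ^ _) z, hzz, hJk]
        ring_nf
end

section
/- Suppose $f$ is a nonnegative Radon measure on $(0,\infty)$ with $f((0,1)) = 0$ satisfying the two-sided averaged bounds $\frac{1}{z}\int_{[z/2,z]} f(dx) \le C_1 z^{-(\gamma+3)/2}$ for all $z > 0$ and $\frac{1}{z}\int_{(bz,z]} f(dx) \ge C_2 z^{-(\gamma+3)/2}$ for all $z \ge z_0$, where $0 < b < 1$, $C_1, C_2 > 0$, $z_0 \ge 1$. Then: (a) $\int_{(0,\infty)} x^{\mu} f(dx) < \infty$ for every $\mu < (\gamma+1)/2$, and (b) $\int_{(0,\infty)} x^{(\gamma+1)/2} f(dx) = \infty$. -/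
/-!
On a block `[z/2, z]` or `(bz, z]` the weight `x ^ μ` is comparable to `z ^ μ` up to a
factor depending only on `b` and `μ`, so the mass bounds `≍ z ^ (-(γ+1)/2)` give block
contributions `≍ z ^ (μ - (γ+1)/2)`. Along the dyadic blocks `[2ⁿ, 2ⁿ⁺¹]`, which cover `[1, ∞)`,
these form a convergent geometric series when `μ < (γ+1)/2`; along the disjoint blocks
`(z₀ b⁻ᵏ, z₀ b⁻ᵏ⁻¹]` at the critical exponent they are bounded below by a positive constant, so
their sum diverges.
-/

open MeasureTheory Set

namespace Real

theorem rpow_le_rpow_neg_abs_mul_rpow {b z x ν : ℝ} (hb0 : 0 < b) (hb1 : b ≤ 1) (hz : 0 < z)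
    (hx : x ∈ Icc (b * z) z) : x ^ ν ≤ b ^ (-|ν|) * z ^ ν := by
  have hx0 : 0 < x := (mul_pos hb0 hz).trans_le hx.1
  rcases le_or_gt 0 ν with hν | hν
  · calc x ^ ν ≤ z ^ ν := rpow_le_rpow hx0.le hx.2 hν
      _ ≤ b ^ (-|ν|) * z ^ ν :=
        le_mul_of_one_le_left (by positivity)
          (one_le_rpow_of_pos_of_le_one_of_nonpos hb0 hb1 (by simp))
  · calc x ^ ν ≤ (b * z) ^ ν := rpow_le_rpow_of_nonpos (by positivity) hx.1 hν.le
      _ = b ^ (-|ν|) * z ^ ν := by rw [abs_of_neg hν, neg_neg, mul_rpow hb0.le hz.le]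

theorem rpow_abs_mul_rpow_le_rpow {b z x ν : ℝ} (hb0 : 0 < b) (hb1 : b ≤ 1) (hz : 0 < z)
    (hx : x ∈ Icc (b * z) z) : b ^ |ν| * z ^ ν ≤ x ^ ν := by
  have hx0 : 0 < x := (mul_pos hb0 hz).trans_le hx.1
  rcases le_or_gt 0 ν with hν | hν
  · rw [abs_of_nonneg hν, ← mul_rpow hb0.le hz.le]
    exact rpow_le_rpow (by positivity) hx.1 hν
  · calc b ^ |ν| * z ^ ν ≤ z ^ ν :=
        mul_le_of_le_one_left (by positivity) (rpow_le_one hb0.le hb1 (abs_nonneg ν))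
      _ ≤ x ^ ν := rpow_le_rpow_of_nonpos hx0 hx.2 hν.le

theorem rpow_neg_add_three_div_two_mul_self {γ z : ℝ} (hz : 0 < z) :
    z ^ (-(γ + 3) / 2) * z = z ^ (-((γ + 1) / 2)) := by
  rw [← rpow_add_one hz.ne']
  ring_nf

end Real

theorem Set.Ici_one_subset_iUnion_Icc_pow {y : ℝ} (hy : 1 < y) :
    Ici 1 ⊆ ⋃ n : ℕ, Icc (y ^ n) (y ^ (n + 1)) := fun x hx ↦ by
  obtain ⟨n, hn, hn'⟩ := exists_nat_pow_near hx hy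
  exact mem_iUnion.2 ⟨n, hn, hn'.le⟩

namespace MeasureTheory

variable {f : Measure ℝ}

theorem setLIntegral_Icc_half_rpow_le {C ν μ z : ℝ} (hz : 0 < z)
    (hf : f (Icc (z / 2) z) ≤ ENNReal.ofReal (C * z ^ (-ν))) :
    ∫⁻ x in Icc (z / 2) z, ENNReal.ofReal (x ^ μ) ∂f
      ≤ ENNReal.ofReal ((2⁻¹ : ℝ) ^ (-|μ|) * C) * ENNReal.ofReal (z ^ (μ - ν)) := by
  have hpt : ∀ x ∈ Icc (z / 2) z,
      ENNReal.ofReal (x ^ μ) ≤ ENNReal.ofReal ((2⁻¹ : ℝ) ^ (-|μ|) * z ^ μ) := fun x hx ↦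
    ENNReal.ofReal_le_ofReal <|
      Real.rpow_le_rpow_neg_abs_mul_rpow (by norm_num) (by norm_num) hz (by rwa [← div_eq_inv_mul])
  calc ∫⁻ x in Icc (z / 2) z, ENNReal.ofReal (x ^ μ) ∂f
      ≤ ∫⁻ _ in Icc (z / 2) z, ENNReal.ofReal ((2⁻¹ : ℝ) ^ (-|μ|) * z ^ μ) ∂f :=
        setLIntegral_mono' measurableSet_Icc hpt
    _ = ENNReal.ofReal ((2⁻¹ : ℝ) ^ (-|μ|) * z ^ μ) * f (Icc (z / 2) z) :=
        setLIntegral_const _ _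
    _ ≤ ENNReal.ofReal ((2⁻¹ : ℝ) ^ (-|μ|) * z ^ μ) * ENNReal.ofReal (C * z ^ (-ν)) := by gcongr
    _ = ENNReal.ofReal ((2⁻¹ : ℝ) ^ (-|μ|) * C) * ENNReal.ofReal (z ^ (μ - ν)) := by
        rw [← ENNReal.ofReal_mul (by positivity), ← ENNReal.ofReal_mul' (by positivity),
          sub_eq_add_neg, Real.rpow_add hz]
        ring_nf

theorem lintegral_rpow_Ioi_ne_top_of_measure_Icc_half_le {C ν μ : ℝ}
    (hf01 : f (Ioo 0 1) = 0)
    (hub : ∀ z : ℝ, 0 < z → f (Icc (z / 2) z) ≤ ENNReal.ofReal (C * z ^ (-ν)))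
    (hμ : μ < ν) :
    ∫⁻ x in Ioi 0, ENNReal.ofReal (x ^ μ) ∂f ≠ ⊤ := by
  set K := ENNReal.ofReal ((2⁻¹ : ℝ) ^ (-|μ|) * C)
  set r := ENNReal.ofReal ((2 : ℝ) ^ (μ - ν))
  have hr : r < 1 :=
    ENNReal.ofReal_lt_one.2 (Real.rpow_lt_one_of_one_lt_of_neg one_lt_two (by linarith))
  have hblock : ∀ n : ℕ, ∫⁻ x in Icc ((2 : ℝ) ^ n) (2 ^ (n + 1)), ENNReal.ofReal (x ^ μ) ∂f
      ≤ K * r ^ (n + 1) := fun n ↦ by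
    have hz : (0 : ℝ) < 2 ^ (n + 1) := by positivity
    have hhalf : (2 : ℝ) ^ (n + 1) / 2 = 2 ^ n := by
      rw [pow_succ, mul_div_cancel_right₀ _ two_ne_zero]
    have := setLIntegral_Icc_half_rpow_le (μ := μ) hz (hub _ hz)
    rwa [hhalf, ← Real.rpow_pow_comm zero_le_two, ENNReal.ofReal_pow (by positivity)] at this
  have hIoi : Ioi (0 : ℝ) ⊆ Ioo 0 1 ∪ Ici 1 := fun x hx ↦ by
    rcases lt_or_ge x 1 with h | h
    exacts [Or.inl ⟨hx, h⟩, Or.inr h]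
  refine ne_top_of_le_ne_top ?_ <| (lintegral_mono_set hIoi).trans (lintegral_union_le _ _ _)
  rw [setLIntegral_measure_zero _ _ hf01, zero_add]
  refine ne_top_of_le_ne_top ?_ <|
    (lintegral_mono_set (Ici_one_subset_iUnion_Icc_pow one_lt_two)).trans
      ((lintegral_iUnion_le _ _).trans (ENNReal.tsum_le_tsum hblock))
  rw [ENNReal.tsum_mul_left, ENNReal.tsum_geometric_add_one]
  exact ENNReal.mul_ne_top ENNReal.ofReal_ne_top <| ENNReal.mul_ne_top ENNReal.ofReal_ne_top <|
    ENNReal.inv_ne_top.2 (tsub_pos_of_lt hr).ne'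

theorem ofReal_mul_le_setLIntegral_Ioc_rpow {b C ν z : ℝ} (hb0 : 0 < b) (hb1 : b ≤ 1)
    (hz : 0 < z) (hf : ENNReal.ofReal (C * z ^ (-ν)) ≤ f (Ioc (b * z) z)) :
    ENNReal.ofReal (b ^ |ν| * C) ≤ ∫⁻ x in Ioc (b * z) z, ENNReal.ofReal (x ^ ν) ∂f := by
  have hpt : ∀ x ∈ Ioc (b * z) z, ENNReal.ofReal (b ^ |ν| * z ^ ν) ≤ ENNReal.ofReal (x ^ ν) :=
    fun x hx ↦ ENNReal.ofReal_le_ofReal <|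
      Real.rpow_abs_mul_rpow_le_rpow hb0 hb1 hz (Ioc_subset_Icc_self hx)
  calc ENNReal.ofReal (b ^ |ν| * C)
      = ENNReal.ofReal (b ^ |ν| * z ^ ν) * ENNReal.ofReal (C * z ^ (-ν)) := by
        rw [← ENNReal.ofReal_mul (by positivity), mul_mul_mul_comm, ← Real.rpow_add hz,
          add_neg_cancel, Real.rpow_zero, mul_one]
    _ ≤ ENNReal.ofReal (b ^ |ν| * z ^ ν) * f (Ioc (b * z) z) := by gcongr
    _ = ∫⁻ _ in Ioc (b * z) z, ENNReal.ofReal (b ^ |ν| * z ^ ν) ∂f :=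
        (setLIntegral_const _ _).symm
    _ ≤ ∫⁻ x in Ioc (b * z) z, ENNReal.ofReal (x ^ ν) ∂f :=
        setLIntegral_mono' measurableSet_Ioc hpt

theorem lintegral_rpow_Ioi_eq_top_of_le_measure_Ioc {b C z₀ ν : ℝ} (hb0 : 0 < b) (hb1 : b < 1)
    (hC : 0 < C) (hz₀ : 0 < z₀)
    (hlb : ∀ z : ℝ, z₀ ≤ z → ENNReal.ofReal (C * z ^ (-ν)) ≤ f (Ioc (b * z) z)) :
    ∫⁻ x in Ioi 0, ENNReal.ofReal (x ^ ν) ∂f = ⊤ := by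
  set a : ℕ → ℝ := fun k ↦ z₀ * b⁻¹ ^ k
  have hb : 1 ≤ b⁻¹ := (one_le_inv₀ hb0).2 hb1.le
  have ha_pos (k : ℕ) : 0 < a k := by positivity
  have ha_mono : Monotone a := fun i j hij ↦
    mul_le_mul_of_nonneg_left (pow_le_pow_right₀ hb hij) hz₀.le
  have ha_succ (k : ℕ) : Ioc (a k) (a (k + 1)) = Ioc (b * a (k + 1)) (a (k + 1)) := by
    simp only [a, pow_succ]
    field_simp
  have hblock (k : ℕ) :
      ENNReal.ofReal (b ^ |ν| * C) ≤
        ∫⁻ x in Ioc (a k) (a (k + 1)), ENNReal.ofReal (x ^ ν) ∂f := by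
    rw [ha_succ]
    exact ofReal_mul_le_setLIntegral_Ioc_rpow hb0 hb1.le (ha_pos _) <|
      hlb _ (le_mul_of_one_le_right hz₀.le (one_le_pow₀ hb))
  have hsub : (⋃ k, Ioc (a k) (a (k + 1))) ⊆ Ioi 0 :=
    iUnion_subset fun k x hx ↦ (ha_pos k).trans hx.1
  refine top_le_iff.1 ?_
  calc (⊤ : ENNReal) = ∑' _ : ℕ, ENNReal.ofReal (b ^ |ν| * C) :=
        (ENNReal.tsum_const_eq_top_of_ne_zero (ENNReal.ofReal_pos.2 (by positivity)).ne').symm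
    _ ≤ ∑' k, ∫⁻ x in Ioc (a k) (a (k + 1)), ENNReal.ofReal (x ^ ν) ∂f :=
        ENNReal.tsum_le_tsum hblock
    _ = ∫⁻ x in ⋃ k, Ioc (a k) (a (k + 1)), ENNReal.ofReal (x ^ ν) ∂f :=
        (lintegral_iUnion (fun _ ↦ measurableSet_Ioc)
          ha_mono.pairwise_disjoint_on_Ioc_succ _).symm
    _ ≤ ∫⁻ x in Ioi 0, ENNReal.ofReal (x ^ ν) ∂f := lintegral_mono_set hsub

end MeasureTheory

theorem stmt_15_general (γ b C1 C2 z0 : ℝ) (hb0 : 0 < b) (hb1 : b < 1)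
    (hC2 : 0 < C2) (hz0 : 1 ≤ z0)
    (f : Measure ℝ)
    (hf01 : f (Set.Ioo 0 1) = 0)
    (hub : ∀ z : ℝ, 0 < z →
      f (Set.Icc (z / 2) z) ≤ ENNReal.ofReal (C1 * z ^ (-(γ + 3) / 2) * z))
    (hlb : ∀ z : ℝ, z0 ≤ z →
      ENNReal.ofReal (C2 * z ^ (-(γ + 3) / 2) * z) ≤ f (Set.Ioc (b * z) z)) :
    (∀ μ : ℝ, μ < (γ + 1) / 2 →
      (∫⁻ x in Set.Ioi (0:ℝ), ENNReal.ofReal (x ^ μ) ∂f) ≠ ⊤) ∧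
    (∫⁻ x in Set.Ioi (0:ℝ), ENNReal.ofReal (x ^ ((γ + 1) / 2)) ∂f) = ⊤ := by
  have hz0_pos : 0 < z0 := one_pos.trans_le hz0
  have hub' (z : ℝ) (hz : 0 < z) :
      f (Icc (z / 2) z) ≤ ENNReal.ofReal (C1 * z ^ (-((γ + 1) / 2))) := by
    simpa only [mul_assoc, Real.rpow_neg_add_three_div_two_mul_self hz] using hub z hz
  have hlb' (z : ℝ) (hz : z0 ≤ z) :
      ENNReal.ofReal (C2 * z ^ (-((γ + 1) / 2))) ≤ f (Ioc (b * z) z) := by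
    simpa only [mul_assoc, Real.rpow_neg_add_three_div_two_mul_self (hz0_pos.trans_le hz)]
      using hlb z hz
  exact ⟨fun μ hμ ↦ lintegral_rpow_Ioi_ne_top_of_measure_Icc_half_le hf01 hub' hμ,
    lintegral_rpow_Ioi_eq_top_of_le_measure_Ioc hb0 hb1 hC2 hz0_pos hlb'⟩

theorem stmt_15 (γ b C1 C2 z0 : ℝ) (hb0 : 0 < b) (hb1 : b < 1)
    (hC1 : 0 < C1) (hC2 : 0 < C2) (hz0 : 1 ≤ z0)
    (f : Measure ℝ) [IsLocallyFiniteMeasure f]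
    (hf01 : f (Set.Ioo 0 1) = 0)
    (hub : ∀ z : ℝ, 0 < z →
      f (Set.Icc (z / 2) z) ≤ ENNReal.ofReal (C1 * z ^ (-(γ + 3) / 2) * z))
    (hlb : ∀ z : ℝ, z0 ≤ z →
      ENNReal.ofReal (C2 * z ^ (-(γ + 3) / 2) * z) ≤ f (Set.Ioc (b * z) z)) :
    (∀ μ : ℝ, μ < (γ + 1) / 2 →
      (∫⁻ x in Set.Ioi (0:ℝ), ENNReal.ofReal (x ^ μ) ∂f) ≠ ⊤) ∧
    (∫⁻ x in Set.Ioi (0:ℝ), ENNReal.ofReal (x ^ ((γ + 1) / 2)) ∂f) = ⊤ :=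
  stmt_15_general γ b C1 C2 z0 hb0 hb1 hC2 hz0 f hf01 hub hlb
end
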